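/- arXiv:2605.26703 — 14 statements merged into one kernel-verified Lean document; each statement's English description precedes it below -/
import Mathlib

section
/- Decomposition Theorem: let L be a proper scoring rule, and let the binning sequence i₁,…,i_t be a refinement of the forecasting sequence c₁,…,c_t (i.e., i_s = i_r implies c_s = c_r). Then B^L_t(c) = K^L_t(c;i) + R^L_t(i). -/
open scoped BigOperators

/-- Decomposition Theorem: if the binning sequence `i` refines the
forecasting sequence `c` (i.e. `i_s = i_r → c_s = c_r`), then
`B^L_t(c) = K^L_t(c;i) + R^L_t(i)` for every proper scoring rule `L`. -/
theorem stmt_3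
    {A : Type*} [Fintype A] [Nonempty A] [DecidableEq A]
    {I : Type*} [DecidableEq I]
    (C : Set (EuclideanSpace ℝ A))
    (hC : C = {c : EuclideanSpace ℝ A | (∀ a, 0 ≤ c a) ∧ ∑ a, c a = 1})
    (Lvec : EuclideanSpace ℝ A → EuclideanSpace ℝ A)
    (L : EuclideanSpace ℝ A → EuclideanSpace ℝ A → ℝ)
    (hL : ∀ d c, L d c = ∑ a, d a * Lvec c a)
    (hproper : ∀ c ∈ C, ∀ d ∈ C, L d d ≤ L d c)
    (t : ℕ) (ht : 1 ≤ t)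
    (a : Fin t → A)
    (act : Fin t → EuclideanSpace ℝ A)
    (hact : ∀ s, act s = EuclideanSpace.single (a s) (1 : ℝ))
    (c : Fin t → EuclideanSpace ℝ A) (hc : ∀ s, c s ∈ C)
    (bin : Fin t → I)
    (hrefine : ∀ s r, bin s = bin r → c s = c r)
    (n : I → ℕ)
    (hn : ∀ i, n i = (Finset.univ.filter (fun s => bin s = i)).card)
    (abar : I → EuclideanSpace ℝ A)
    (habar : ∀ i, 0 < n i →
      abar i = ((n i : ℝ))⁻¹ • ∑ s ∈ Finset.univ.filter (fun s => bin s = i), act s) :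
    (1 / (t : ℝ)) * ∑ s, (L (act s) (c s) - L (act s) (act s)) =
      (1 / (t : ℝ)) * ∑ s, (L (abar (bin s)) (c s) - L (abar (bin s)) (abar (bin s))) +
      (1 / (t : ℝ)) * ∑ s, (L (act s) (abar (bin s)) - L (act s) (act s)) := by
  -- key: for any x : Fin t → EuclideanSpace ℝ A constant on bins,
  -- ∑ s, L (act s) (x s) = ∑ s, L (abar (bin s)) (x s)
  have key : ∀ (x : Fin t → EuclideanSpace ℝ A),
      (∀ s r, bin s = bin r → x s = x r) →
      ∑ s, L (act s) (x s) = ∑ s, L (abar (bin s)) (x s) := by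
    intro x hx
    have h1 : ∀ (f : Fin t → ℝ), ∑ s, f s =
        ∑ i ∈ Finset.univ.image bin, ∑ s ∈ Finset.univ.filter (fun s => bin s = i), f s := by
      intro f
      exact (Finset.sum_fiberwise_of_maps_to (fun s _ => Finset.mem_image_of_mem bin
        (Finset.mem_univ s)) f).symm
    rw [h1, h1]
    refine Finset.sum_congr rfl ?_
    intro i hi
    obtain ⟨s₀, _, hs₀⟩ := Finset.mem_image.mp hi
    have hni : 0 < n i := by
      rw [hn]
      exact Finset.card_pos.mpr ⟨s₀, by simp [hs₀]⟩
    have hxconst : ∀ s ∈ Finset.univ.filter (fun s => bin s = i), x s = x s₀ := by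
      intro s hs
      exact hx s s₀ (by simpa using (Finset.mem_filter.mp hs).2.trans hs₀.symm)
    have habar' : (∑ s ∈ Finset.univ.filter (fun s => bin s = i), act s)
        = (n i : ℝ) • abar i := by
      rw [habar i hni, smul_smul, mul_inv_cancel₀ (by positivity), one_smul]
    calc ∑ s ∈ Finset.univ.filter (fun s => bin s = i), L (act s) (x s)
        = ∑ s ∈ Finset.univ.filter (fun s => bin s = i), L (act s) (x s₀) := by
          exact Finset.sum_congr rfl fun s hs => by rw [hxconst s hs]
      _ = ∑ a', (∑ s ∈ Finset.univ.filter (fun s => bin s = i), act s) a' * Lvec (x s₀) a' := by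
          simp only [hL]
          rw [Finset.sum_comm]
          refine Finset.sum_congr rfl fun a' _ => ?_
          rw [← Finset.sum_mul]
          congr 1
          rw [WithLp.ofLp_sum, Finset.sum_apply]
      _ = (n i : ℝ) * L (abar i) (x s₀) := by
          rw [habar', hL, Finset.mul_sum]
          refine Finset.sum_congr rfl fun a' _ => ?_
          simp [mul_assoc]
      _ = ∑ s ∈ Finset.univ.filter (fun s => bin s = i), L (abar i) (x s₀) := by
          rw [Finset.sum_const, ← hn i, nsmul_eq_mul]
      _ = ∑ s ∈ Finset.univ.filter (fun s => bin s = i), L (abar (bin s)) (x s) := by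
          refine Finset.sum_congr rfl fun s hs => by
            rw [hxconst s hs, (Finset.mem_filter.mp hs).2]
  have k1 : ∑ s, L (act s) (c s) = ∑ s, L (abar (bin s)) (c s) :=
    key c hrefine
  have k2 : ∑ s, L (act s) (abar (bin s)) = ∑ s, L (abar (bin s)) (abar (bin s)) :=
    key (fun s => abar (bin s)) (fun s r h => by rw [h])
  simp only [Finset.sum_sub_distrib]
  rw [k1, k2]
  ring
end

section
/- Approximate Decomposition Theorem: let δ > 0, let L be an M-Lipschitz proper scoring rule, and let f be a general binning sequence that is δ-local with respect to the forecasting sequence c₁,…,c_t, i.e., for each bin i ∈ I there is y^i ∈ C such that f_s(i) > 0 implies ‖c_s − y^i‖ < δ. Then |B^L_t(c) − (K^L_t(c;f) + R^L_t(f))| ≤ 2Mδ. -/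
open scoped BigOperators

open scoped RealInnerProductSpace

private lemma sum_apply' {A : Type*} [Fintype A] {t : ℕ} (w : Fin t → ℝ)
    (p : Fin t → EuclideanSpace ℝ A) (a : A) :
    (∑ s, w s • p s) a = ∑ s, w s * p s a := by
  induction (Finset.univ : Finset (Fin t)) using Finset.induction with
  | empty => rfl
  | insert _ _ h ih => simp [Finset.sum_insert h, ih]

/-- Approximate Decomposition Theorem: if the general binning
sequence `f` is `δ`-local with respect to the forecasting sequence `c`, then
`|B^L_t(c) − (K^L_t(c;f) + R^L_t(f))| ≤ 2Mδ` for every `M`-Lipschitz proper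
scoring rule `L`. -/
theorem stmt_4
    {A : Type*} [Fintype A] [Nonempty A] [DecidableEq A]
    {I : Type*} [Countable I]
    (C : Set (EuclideanSpace ℝ A))
    (hC : C = {c : EuclideanSpace ℝ A | (∀ a, 0 ≤ c a) ∧ ∑ a, c a = 1})
    (Lvec : EuclideanSpace ℝ A → EuclideanSpace ℝ A)
    (L : EuclideanSpace ℝ A → EuclideanSpace ℝ A → ℝ)
    (hL : ∀ d c, L d c = ∑ a, d a * Lvec c a)
    (hproper : ∀ c ∈ C, ∀ d ∈ C, L d d ≤ L d c)
    (M : ℝ) (hM : 0 ≤ M)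
    (hlip : ∀ c ∈ C, ∀ c' ∈ C, ‖Lvec c - Lvec c'‖ ≤ M * ‖c - c'‖)
    (δ : ℝ) (hδ : 0 < δ)
    (t : ℕ) (ht : 1 ≤ t)
    (a : Fin t → A)
    (act : Fin t → EuclideanSpace ℝ A)
    (hact : ∀ s, act s = EuclideanSpace.single (a s) (1 : ℝ))
    (c : Fin t → EuclideanSpace ℝ A) (hc : ∀ s, c s ∈ C)
    (f : Fin t → I → ℝ)
    (hf0 : ∀ s i, 0 ≤ f s i)
    (hf1 : ∀ s, HasSum (f s) 1)
    (n : I → ℝ) (hn : ∀ i, n i = ∑ s, f s i)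
    (abar : I → EuclideanSpace ℝ A)
    (habar : ∀ i, 0 < n i → abar i = ∑ s, (f s i / n i) • act s)
    (cbar : I → EuclideanSpace ℝ A)
    (hcbar : ∀ i, 0 < n i → cbar i = ∑ s, (f s i / n i) • c s)
    (y : I → EuclideanSpace ℝ A) (hy : ∀ i, y i ∈ C)
    (hlocal : ∀ s i, 0 < f s i → ‖c s - y i‖ < δ) :
    |(1 / (t : ℝ)) * ∑ s, (L (act s) (c s) - L (act s) (act s)) -
      ((1 / (t : ℝ)) * ∑' i, n i * (L (abar i) (cbar i) - L (abar i) (abar i)) +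
       (1 / (t : ℝ)) * ∑' i, ∑ s, f s i * (L (act s) (abar i) - L (act s) (act s)))|
      ≤ 2 * M * δ := by
  classical
  have htpos : (0 : ℝ) < t := by exact_mod_cast ht
  -- L as an inner product
  have hLi : ∀ d x, L d x = ⟪d, Lvec x⟫ := by
    intro d x
    rw [hL]
    simp [PiLp.inner_apply, RCLike.inner_apply]
    exact Finset.sum_congr rfl (fun _ _ => mul_comm _ _)
  -- membership basics
  have hmem : ∀ x : EuclideanSpace ℝ A, x ∈ C ↔ (∀ b, 0 ≤ x b) ∧ ∑ b, x b = 1 := by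
    intro x; rw [hC]; rfl
  have hnormC : ∀ x ∈ C, ‖x‖ ≤ 1 := by
    intro x hx
    obtain ⟨hx0, hx1⟩ := (hmem x).1 hx
    have hle1 : ∀ b, x b ≤ 1 := by
      intro b
      calc x b ≤ ∑ b', x b' := Finset.single_le_sum (fun b' _ => hx0 b') (Finset.mem_univ b)
        _ = 1 := hx1
    have : ‖x‖ = Real.sqrt (∑ b, x b ^ 2) := by
      rw [EuclideanSpace.norm_eq]; simp [sq_abs]
    rw [this]
    have h1 : ∑ b, x b ^ 2 ≤ 1 := by
      calc ∑ b, x b ^ 2 ≤ ∑ b, x b :=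
            Finset.sum_le_sum (fun b _ => by nlinarith [hx0 b, hle1 b])
        _ = 1 := hx1
    calc Real.sqrt (∑ b, x b ^ 2) ≤ Real.sqrt 1 := Real.sqrt_le_sqrt h1
      _ = 1 := Real.sqrt_one
  have hCconvex : Convex ℝ C := by
    rw [hC]
    intro p hp q hq α β hα hβ hαβ
    refine ⟨fun b => ?_, ?_⟩
    · have : (α • p + β • q) b = α * p b + β * q b := rfl
      rw [this]
      have := hp.1 b; have := hq.1 b
      positivity
    · have : ∀ b, (α • p + β • q) b = α * p b + β * q b := fun _ => rfl
      simp only [this, Finset.sum_add_distrib, ← Finset.mul_sum, hp.2, hq.2]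
      linarith
  have hactC : ∀ s, act s ∈ C := by
    intro s
    rw [hact s, hmem]
    constructor
    · intro b; rw [EuclideanSpace.single_apply]; positivity
    · simp [EuclideanSpace.single_apply]
  -- n i = 0 case
  have hn0 : ∀ i, n i = 0 → ∀ s, f s i = 0 := by
    intro i h0 s
    have := (Finset.sum_eq_zero_iff_of_nonneg (fun s _ => hf0 s i)).1 ((hn i).symm.trans h0)
    exact this s (Finset.mem_univ s)
  have hnnonneg : ∀ i, 0 ≤ n i := by
    intro i; rw [hn i]; exact Finset.sum_nonneg (fun s _ => hf0 s i)
  -- weights sum to 1 when n i > 0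
  have hwsum : ∀ i, 0 < n i → ∑ s, f s i / n i = 1 := by
    intro i hi
    rw [← Finset.sum_div, ← hn i, div_self hi.ne']
  have habarC : ∀ i, 0 < n i → abar i ∈ C := by
    intro i hi
    rw [habar i hi]
    exact hCconvex.sum_mem (fun s _ => div_nonneg (hf0 s i) (hnnonneg i))
      (by rw [hwsum i hi]) (fun s _ => hactC s)
  have hcbarC : ∀ i, 0 < n i → cbar i ∈ C := by
    intro i hi
    rw [hcbar i hi]
    exact hCconvex.sum_mem (fun s _ => div_nonneg (hf0 s i) (hnnonneg i))
      (by rw [hwsum i hi]) (fun s _ => hc s)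
  -- linearity in first argument
  have hlin : ∀ i, 0 < n i → ∀ x, n i * L (abar i) x = ∑ s, f s i * L (act s) x := by
    intro i hi x
    rw [hLi, habar i hi, sum_inner, Finset.mul_sum]
    refine Finset.sum_congr rfl (fun s _ => ?_)
    rw [real_inner_smul_left, ← hLi]
    field_simp
  -- norm bound on Lvec over C
  set s0 : Fin t := ⟨0, ht⟩ with hs0
  set B0 : ℝ := ‖Lvec (c s0)‖ + 2 * M with hB0def
  have hB0 : ∀ x ∈ C, ‖Lvec x‖ ≤ B0 := by
    intro x hx
    have h1 : ‖Lvec x - Lvec (c s0)‖ ≤ M * ‖x - c s0‖ := hlip x hx (c s0) (hc s0)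
    have h2 : ‖x - c s0‖ ≤ 2 := by
      calc ‖x - c s0‖ ≤ ‖x‖ + ‖c s0‖ := norm_sub_le _ _
        _ ≤ 1 + 1 := add_le_add (hnormC x hx) (hnormC _ (hc s0))
        _ = 2 := by norm_num
    calc ‖Lvec x‖ ≤ ‖Lvec x - Lvec (c s0)‖ + ‖Lvec (c s0)‖ := by
          simpa using norm_add_le (Lvec x - Lvec (c s0)) (Lvec (c s0))
      _ ≤ M * 2 + ‖Lvec (c s0)‖ := by
          refine add_le_add (h1.trans ?_) le_rfl
          exact mul_le_mul_of_nonneg_left h2 hM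
      _ = B0 := by rw [hB0def]; ring
  have hLb : ∀ d ∈ C, ∀ x ∈ C, |L d x| ≤ B0 := by
    intro d hd x hx
    rw [hLi]
    calc |⟪d, Lvec x⟫| ≤ ‖d‖ * ‖Lvec x‖ := abs_real_inner_le_norm _ _
      _ ≤ 1 * B0 := by
          refine mul_le_mul (hnormC d hd) (hB0 x hx) (norm_nonneg _) zero_le_one
      _ = B0 := one_mul _
  -- the three families
  set Dz : Fin t → ℝ := fun s => L (act s) (c s) - L (act s) (act s) with hDz
  set F1 : I → ℝ := fun i => ∑ s, f s i * Dz s with hF1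
  set K : I → ℝ := fun i => n i * (L (abar i) (cbar i) - L (abar i) (abar i)) with hK
  set R : I → ℝ := fun i => ∑ s, f s i * (L (act s) (abar i) - L (act s) (act s)) with hR
  set h : I → ℝ := fun i => ∑ s, f s i * L (act s) (c s) - n i * L (abar i) (cbar i) with hh
  -- summability of n
  have hsummf : ∀ s, Summable (fun i => f s i) := fun s => (hf1 s).summable
  have hsummn : Summable n := by
    have : Summable (fun i => ∑ s, f s i) :=
      summable_sum (fun s _ => hsummf s)
    exact this.congr (fun i => (hn i).symm)
  have htsumn : ∑' i, n i = t := by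
    calc ∑' i, n i = ∑' i, ∑ s, f s i := by exact tsum_congr (fun i => hn i)
      _ = ∑ s, ∑' i, f s i := Summable.tsum_finsetSum (fun s _ => hsummf s)
      _ = ∑ s, (1 : ℝ) := Finset.sum_congr rfl (fun s _ => (hf1 s).tsum_eq)
      _ = t := by simp
  -- uniform bounds
  have hF1b : ∀ i, |F1 i| ≤ n i * (2 * B0) := by
    intro i
    calc |F1 i| ≤ ∑ s, |f s i * Dz s| := Finset.abs_sum_le_sum_abs _ _
      _ ≤ ∑ s, f s i * (2 * B0) := by
          refine Finset.sum_le_sum (fun s _ => ?_)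
          rw [abs_mul, abs_of_nonneg (hf0 s i)]
          refine mul_le_mul_of_nonneg_left ?_ (hf0 s i)
          calc |Dz s| ≤ |L (act s) (c s)| + |L (act s) (act s)| := abs_sub _ _
            _ ≤ B0 + B0 := add_le_add (hLb _ (hactC s) _ (hc s)) (hLb _ (hactC s) _ (hactC s))
            _ = 2 * B0 := by ring
      _ = n i * (2 * B0) := by rw [← Finset.sum_mul, ← hn i]
  have hKb : ∀ i, |K i| ≤ n i * (2 * B0) := by
    intro i
    rcases eq_or_lt_of_le (hnnonneg i) with h0 | hpos
    · simp [hK, ← h0]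
    · rw [hK, abs_mul, abs_of_nonneg (hnnonneg i)]
      refine mul_le_mul_of_nonneg_left ?_ (hnnonneg i)
      calc |L (abar i) (cbar i) - L (abar i) (abar i)|
          ≤ |L (abar i) (cbar i)| + |L (abar i) (abar i)| := abs_sub _ _
        _ ≤ B0 + B0 := add_le_add (hLb _ (habarC i hpos) _ (hcbarC i hpos))
            (hLb _ (habarC i hpos) _ (habarC i hpos))
        _ = 2 * B0 := by ring
  have hRb : ∀ i, |R i| ≤ n i * (2 * B0) := by
    intro i
    rcases eq_or_lt_of_le (hnnonneg i) with h0 | hpos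
    · have : ∀ s, f s i = 0 := hn0 i h0.symm
      simp [hR, this, ← h0]
    · calc |R i| ≤ ∑ s, |f s i * (L (act s) (abar i) - L (act s) (act s))| :=
            Finset.abs_sum_le_sum_abs _ _
        _ ≤ ∑ s, f s i * (2 * B0) := by
            refine Finset.sum_le_sum (fun s _ => ?_)
            rw [abs_mul, abs_of_nonneg (hf0 s i)]
            refine mul_le_mul_of_nonneg_left ?_ (hf0 s i)
            calc |L (act s) (abar i) - L (act s) (act s)|
                ≤ |L (act s) (abar i)| + |L (act s) (act s)| := abs_sub _ _
              _ ≤ B0 + B0 := add_le_add (hLb _ (hactC s) _ (habarC i hpos))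
                  (hLb _ (hactC s) _ (hactC s))
              _ = 2 * B0 := by ring
        _ = n i * (2 * B0) := by rw [← Finset.sum_mul, ← hn i]
  have hsumaux : ∀ g : I → ℝ, (∀ i, |g i| ≤ n i * (2 * B0)) → Summable g := by
    intro g hg
    refine Summable.of_abs ?_
    exact Summable.of_nonneg_of_le (fun i => abs_nonneg _) hg (hsummn.mul_right _)
  have hsF1 : Summable F1 := hsumaux F1 hF1b
  have hsK : Summable K := hsumaux K hKb
  have hsR : Summable R := hsumaux R hRb
  -- B-term as a tsum
  have hBterm : ∑ s, Dz s = ∑' i, F1 i := by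
    calc ∑ s, Dz s = ∑ s, ∑' i, f s i * Dz s := by
          refine Finset.sum_congr rfl (fun s _ => ?_)
          rw [((hf1 s).mul_right (Dz s)).tsum_eq, one_mul]
      _ = ∑' i, ∑ s, f s i * Dz s :=
          (Summable.tsum_finsetSum (fun s _ => (hsummf s).mul_right _)).symm
  -- per-bin identity
  have hKR : ∀ i, F1 i - K i - R i = h i := by
    intro i
    rcases eq_or_lt_of_le (hnnonneg i) with h0 | hpos
    · have hz : ∀ s, f s i = 0 := hn0 i h0.symm
      simp [hF1, hK, hR, hh, hz, ← h0]
    · have e1 := hlin i hpos (cbar i)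
      have e2 := hlin i hpos (abar i)
      simp only [hF1, hK, hR, hh, hDz]
      simp only [mul_sub, Finset.sum_sub_distrib] at *
      linarith
  -- bound on h
  have hcby : ∀ i, 0 < n i → ‖cbar i - y i‖ ≤ δ := by
    intro i hi
    have hrw : cbar i - y i = ∑ s, (f s i / n i) • (c s - y i) := by
      rw [hcbar i hi]
      rw [Finset.sum_congr rfl (fun s _ => smul_sub (f s i / n i) (c s) (y i))]
      rw [Finset.sum_sub_distrib, ← Finset.sum_smul, hwsum i hi, one_smul]
    rw [hrw]
    calc ‖∑ s, (f s i / n i) • (c s - y i)‖ ≤ ∑ s, ‖(f s i / n i) • (c s - y i)‖ :=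
          norm_sum_le _ _
      _ ≤ ∑ s, (f s i / n i) * δ := by
          refine Finset.sum_le_sum (fun s _ => ?_)
          rw [norm_smul, Real.norm_eq_abs, abs_of_nonneg (div_nonneg (hf0 s i) (hnnonneg i))]
          rcases eq_or_lt_of_le (hf0 s i) with hz | hp
          · rw [← hz]; simp
          · exact mul_le_mul_of_nonneg_left (hlocal s i hp).le
              (div_nonneg (hf0 s i) (hnnonneg i))
      _ = δ := by rw [← Finset.sum_mul, hwsum i hi, one_mul]
  have hhb : ∀ i, |h i| ≤ n i * (2 * M * δ) := by
    intro i
    rcases eq_or_lt_of_le (hnnonneg i) with h0 | hpos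
    · have hz : ∀ s, f s i = 0 := hn0 i h0.symm
      simp [hh, hz, ← h0]
    · have hrw : h i = ∑ s, f s i * (L (act s) (c s) - L (act s) (cbar i)) := by
        rw [hh]
        simp only [mul_sub, Finset.sum_sub_distrib]
        rw [hlin i hpos (cbar i)]
      rw [hrw]
      calc |∑ s, f s i * (L (act s) (c s) - L (act s) (cbar i))|
          ≤ ∑ s, |f s i * (L (act s) (c s) - L (act s) (cbar i))| :=
            Finset.abs_sum_le_sum_abs _ _
        _ ≤ ∑ s, f s i * (2 * M * δ) := by
            refine Finset.sum_le_sum (fun s _ => ?_)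
            rw [abs_mul, abs_of_nonneg (hf0 s i)]
            rcases eq_or_lt_of_le (hf0 s i) with hz | hp
            · rw [← hz]; simp
            · refine mul_le_mul_of_nonneg_left ?_ (hf0 s i)
              have hinner : L (act s) (c s) - L (act s) (cbar i)
                  = ⟪act s, Lvec (c s) - Lvec (cbar i)⟫ := by
                rw [inner_sub_right, hLi, hLi]
              rw [hinner]
              calc |⟪act s, Lvec (c s) - Lvec (cbar i)⟫|
                  ≤ ‖act s‖ * ‖Lvec (c s) - Lvec (cbar i)‖ := abs_real_inner_le_norm _ _
                _ ≤ 1 * (M * ‖c s - cbar i‖) := by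
                    refine mul_le_mul (by rw [hact s]; simp)
                      (hlip _ (hc s) _ (hcbarC i hpos)) (norm_nonneg _) zero_le_one
                _ = M * ‖c s - cbar i‖ := one_mul _
                _ ≤ M * (δ + δ) := by
                    refine mul_le_mul_of_nonneg_left ?_ hM
                    calc ‖c s - cbar i‖ ≤ ‖c s - y i‖ + ‖y i - cbar i‖ := by
                          simpa using norm_sub_le_norm_sub_add_norm_sub (c s) (y i) (cbar i)
                      _ ≤ δ + δ := add_le_add (hlocal s i hp).le
                          (by rw [norm_sub_rev]; exact hcby i hpos)
                _ = 2 * M * δ := by ring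
        _ = n i * (2 * M * δ) := by rw [← Finset.sum_mul, ← hn i]
  -- combine
  have hsh : Summable h := by
    have := (hsF1.sub hsK).sub hsR
    exact this.congr hKR
  have hmain : (1 / (t : ℝ)) * ∑ s, Dz s -
      ((1 / (t : ℝ)) * ∑' i, K i + (1 / (t : ℝ)) * ∑' i, R i)
      = (1 / (t : ℝ)) * ∑' i, h i := by
    rw [hBterm]
    rw [← tsum_congr hKR, Summable.tsum_sub (hsF1.sub hsK) hsR, Summable.tsum_sub hsF1 hsK]
    ring
  rw [hmain]
  rw [abs_mul, abs_of_nonneg (by positivity : (0:ℝ) ≤ 1 / (t:ℝ))]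
  have habs : |∑' i, h i| ≤ (t : ℝ) * (2 * M * δ) := by
    calc |∑' i, h i| ≤ ∑' i, |h i| := by
          have := norm_tsum_le_tsum_norm (f := h)
            (by simpa [Real.norm_eq_abs] using hsh.abs)
          simpa [Real.norm_eq_abs] using this
      _ ≤ ∑' i, n i * (2 * M * δ) := Summable.tsum_le_tsum hhb hsh.abs (hsummn.mul_right _)
      _ = (∑' i, n i) * (2 * M * δ) := tsum_mul_right
      _ = (t : ℝ) * (2 * M * δ) := by rw [htsumn]
  calc (1 / (t : ℝ)) * |∑' i, h i| ≤ (1 / (t : ℝ)) * ((t : ℝ) * (2 * M * δ)) := by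
        exact mul_le_mul_of_nonneg_left habs (by positivity)
    _ = 2 * M * δ := by field_simp
end

section
/- Let L be an M-bounded proper scoring rule and let K_t(c;f) denote the calibration score computed with the quadratic (Brier) scoring rule, whose divergence is ‖c − d‖². Then for every general binning sequence f, K^L_t(c;f) ≤ M · √(K_t(c;f)). -/
open scoped BigOperators

/-- Cauchy–Schwarz for `tsum`. -/
lemma tsum_cauchy_schwarz {I : Type*} (u v : I → ℝ) (hu : ∀ i, 0 ≤ u i) (hv : ∀ i, 0 ≤ v i)
    (hu2 : Summable (fun i => u i ^ 2)) (hv2 : Summable (fun i => v i ^ 2))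
    (huv : Summable (fun i => u i * v i)) :
    ∑' i, u i * v i ≤ Real.sqrt (∑' i, u i ^ 2) * Real.sqrt (∑' i, v i ^ 2) := by
  refine Summable.tsum_le_of_sum_le huv fun s => ?_
  calc ∑ i ∈ s, u i * v i
      ≤ Real.sqrt (∑ i ∈ s, u i ^ 2) * Real.sqrt (∑ i ∈ s, v i ^ 2) :=
        Real.sum_mul_le_sqrt_mul_sqrt s u v
    _ ≤ Real.sqrt (∑' i, u i ^ 2) * Real.sqrt (∑' i, v i ^ 2) := by
        apply mul_le_mul
        · exact Real.sqrt_le_sqrt (Summable.sum_le_tsum s (fun i _ => sq_nonneg _) hu2)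
        · exact Real.sqrt_le_sqrt (Summable.sum_le_tsum s (fun i _ => sq_nonneg _) hv2)
        · positivity
        · positivity

lemma simplex_norm_le_one {A : Type*} [Fintype A] (x : EuclideanSpace ℝ A)
    (h1 : ∀ a, 0 ≤ x a) (h2 : ∑ a, x a = 1) : ‖x‖ ≤ 1 := by
  rw [EuclideanSpace.norm_eq]
  rw [show (1:ℝ) = Real.sqrt 1 by simp]
  apply Real.sqrt_le_sqrt
  calc ∑ a, ‖x a‖ ^ 2 = ∑ a, x a ^ 2 := by
        refine Finset.sum_congr rfl fun i _ => ?_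
        rw [Real.norm_eq_abs, sq_abs]
    _ ≤ (∑ a, x a) ^ 2 := Finset.sum_sq_le_sq_sum_of_nonneg (fun i _ => h1 i)
    _ = 1 := by rw [h2]; norm_num

/-- for an `M`-bounded proper scoring rule `L` and every general
binning sequence `f`, `K^L_t(c;f) ≤ M · √(K_t(c;f))`, where `K_t(c;f)` is the
calibration score of the quadratic (Brier) scoring rule. -/
theorem stmt_5
    {A : Type*} [Fintype A] [Nonempty A] [DecidableEq A]
    {I : Type*} [Countable I]
    (C : Set (EuclideanSpace ℝ A))
    (hC : C = {c : EuclideanSpace ℝ A | (∀ a, 0 ≤ c a) ∧ ∑ a, c a = 1})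
    (Lvec : EuclideanSpace ℝ A → EuclideanSpace ℝ A)
    (L : EuclideanSpace ℝ A → EuclideanSpace ℝ A → ℝ)
    (hL : ∀ d c, L d c = ∑ a, d a * Lvec c a)
    (hproper : ∀ c ∈ C, ∀ d ∈ C, L d d ≤ L d c)
    (M : ℝ) (hM : 0 ≤ M)
    (hbdd : ∀ c ∈ C, ∀ c' ∈ C, ‖Lvec c - Lvec c'‖ ≤ M)
    (t : ℕ) (ht : 1 ≤ t)
    (a : Fin t → A)
    (act : Fin t → EuclideanSpace ℝ A)
    (hact : ∀ s, act s = EuclideanSpace.single (a s) (1 : ℝ))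
    (c : Fin t → EuclideanSpace ℝ A) (hc : ∀ s, c s ∈ C)
    (f : Fin t → I → ℝ)
    (hf0 : ∀ s i, 0 ≤ f s i)
    (hf1 : ∀ s, HasSum (f s) 1)
    (n : I → ℝ) (hn : ∀ i, n i = ∑ s, f s i)
    (abar : I → EuclideanSpace ℝ A)
    (habar : ∀ i, 0 < n i → abar i = ∑ s, (f s i / n i) • act s)
    (cbar : I → EuclideanSpace ℝ A)
    (hcbar : ∀ i, 0 < n i → cbar i = ∑ s, (f s i / n i) • c s) :
    (1 / (t : ℝ)) * ∑' i, n i * (L (abar i) (cbar i) - L (abar i) (abar i)) ≤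
      M * Real.sqrt ((1 / (t : ℝ)) * ∑' i, n i * ‖abar i - cbar i‖ ^ 2) := by
  have ht' : (0:ℝ) < t := by exact_mod_cast ht
  have hn0 : ∀ i, 0 ≤ n i := fun i => by
    rw [hn]; exact Finset.sum_nonneg fun s _ => hf0 s i
  -- convexity of C
  have hconv : Convex ℝ C := by
    rw [hC]
    intro x hx y hy p q hp hq hpq
    simp only [Set.mem_setOf_eq] at hx hy ⊢
    refine ⟨fun b => ?_, ?_⟩
    · simp only [WithLp.ofLp_add, WithLp.ofLp_smul, Pi.add_apply, Pi.smul_apply, smul_eq_mul]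
      exact add_nonneg (mul_nonneg hp (hx.1 b)) (mul_nonneg hq (hy.1 b))
    · simp only [WithLp.ofLp_add, WithLp.ofLp_smul, Pi.add_apply, Pi.smul_apply, smul_eq_mul,
        Finset.sum_add_distrib, ← Finset.mul_sum, hx.2, hy.2]
      linarith
  -- actions are in C
  have hactC : ∀ s, act s ∈ C := by
    intro s
    rw [hact, hC]
    refine ⟨fun b => ?_, ?_⟩
    · rw [EuclideanSpace.single_apply]; positivity
    · simp [EuclideanSpace.single_apply]
  -- averaged points are in C
  have hmem : ∀ (z : Fin t → EuclideanSpace ℝ A), (∀ s, z s ∈ C) → ∀ i, 0 < n i →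
      (∑ s, (f s i / n i) • z s) ∈ C := by
    intro z hz i hi
    refine hconv.sum_mem (fun s _ => div_nonneg (hf0 s i) (hn0 i)) ?_ (fun s _ => hz s)
    rw [← Finset.sum_div, ← hn, div_self hi.ne']
  have habarC : ∀ i, 0 < n i → abar i ∈ C := fun i hi => by
    rw [habar i hi]; exact hmem act hactC i hi
  have hcbarC : ∀ i, 0 < n i → cbar i ∈ C := fun i hi => by
    rw [hcbar i hi]; exact hmem c hc i hi
  -- L as inner product
  have hLin : ∀ x y, L x y = inner ℝ x (Lvec y) := by
    intro x y
    rw [hL]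
    simp [PiLp.inner_apply, RCLike.inner_apply, mul_comm]
  -- norm of simplex members
  have hnormC : ∀ x ∈ C, ‖x‖ ≤ 1 := by
    intro x hx
    rw [hC] at hx
    exact simplex_norm_le_one x hx.1 hx.2
  have hnorm2 : ∀ i, 0 < n i → ‖abar i - cbar i‖ ≤ 2 := by
    intro i hi
    calc ‖abar i - cbar i‖ ≤ ‖abar i‖ + ‖cbar i‖ := norm_sub_le _ _
      _ ≤ 1 + 1 := add_le_add (hnormC _ (habarC i hi)) (hnormC _ (hcbarC i hi))
      _ = 2 := by norm_num
  -- divergence bound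
  have Dbnd : ∀ d ∈ C, ∀ e ∈ C, L d e - L d d ≤ M * ‖d - e‖ := by
    intro d hd e he
    have h1 : L d e - L d d = inner ℝ (d - e) (Lvec e - Lvec d) + (L e e - L e d) := by
      rw [hLin, hLin, hLin, hLin, inner_sub_left, inner_sub_right, inner_sub_right]
      ring
    have h2 : L e e - L e d ≤ 0 := sub_nonpos.mpr (hproper d hd e he)
    have h3 : inner ℝ (d - e) (Lvec e - Lvec d) ≤ ‖d - e‖ * ‖Lvec e - Lvec d‖ :=
      real_inner_le_norm _ _
    have h4 : ‖Lvec e - Lvec d‖ ≤ M := hbdd e he d hd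
    calc L d e - L d d = inner ℝ (d - e) (Lvec e - Lvec d) + (L e e - L e d) := h1
      _ ≤ ‖d - e‖ * M + 0 :=
          add_le_add (h3.trans (mul_le_mul_of_nonneg_left h4 (norm_nonneg _))) h2
      _ = M * ‖d - e‖ := by ring
  -- notation
  set g : I → ℝ := fun i => n i * (L (abar i) (cbar i) - L (abar i) (abar i)) with hg
  set u : I → ℝ := fun i => Real.sqrt (n i) with hudef
  set v : I → ℝ := fun i => Real.sqrt (n i) * ‖abar i - cbar i‖ with hvdef
  have hu0 : ∀ i, 0 ≤ u i := fun i => Real.sqrt_nonneg _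
  have hv0 : ∀ i, 0 ≤ v i := fun i => mul_nonneg (Real.sqrt_nonneg _) (norm_nonneg _)
  have hu2 : ∀ i, u i ^ 2 = n i := fun i => Real.sq_sqrt (hn0 i)
  have hv2 : ∀ i, v i ^ 2 = n i * ‖abar i - cbar i‖ ^ 2 := fun i => by
    rw [hvdef]; rw [mul_pow, Real.sq_sqrt (hn0 i)]
  -- summability of n, with sum t
  have hSn : HasSum n (t : ℝ) := by
    have h := hasSum_sum (f := fun (s : Fin t) (i : I) => f s i) (s := Finset.univ)
      (fun s _ => hf1 s)
    simp only [Finset.sum_const, Finset.card_univ, Fintype.card_fin, nsmul_eq_mul,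
      mul_one] at h
    have : n = fun i => ∑ s, f s i := funext fun i => hn i
    rw [this]
    exact h
  have hsumn : Summable n := hSn.summable
  -- pointwise bounds
  have hgub : ∀ i, g i ≤ M * (u i * v i) := by
    intro i
    rcases lt_or_eq_of_le (hn0 i) with hi | hi
    · have huv : u i * v i = n i * ‖abar i - cbar i‖ := by
        rw [hudef, hvdef]; rw [← mul_assoc, Real.mul_self_sqrt (hn0 i)]
      rw [huv, hg]
      have := Dbnd (abar i) (habarC i hi) (cbar i) (hcbarC i hi)
      calc n i * (L (abar i) (cbar i) - L (abar i) (abar i))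
          ≤ n i * (M * ‖abar i - cbar i‖) := mul_le_mul_of_nonneg_left this (hn0 i)
        _ = M * (n i * ‖abar i - cbar i‖) := by ring
    · simp [hg, hudef, ← hi]
  have hglb : ∀ i, 0 ≤ g i := by
    intro i
    rcases lt_or_eq_of_le (hn0 i) with hi | hi
    · exact mul_nonneg (hn0 i)
        (sub_nonneg.mpr (hproper (cbar i) (hcbarC i hi) (abar i) (habarC i hi)))
    · simp [hg, ← hi]
  have hg2M : ∀ i, g i ≤ 2 * M * n i := by
    intro i
    rcases lt_or_eq_of_le (hn0 i) with hi | hi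
    · calc g i ≤ M * (u i * v i) := hgub i
        _ = M * (n i * ‖abar i - cbar i‖) := by
            simp only [hudef, hvdef]
            linear_combination M * ‖abar i - cbar i‖ * Real.mul_self_sqrt (hn0 i)
        _ ≤ M * (n i * 2) := by
            apply mul_le_mul_of_nonneg_left _ hM
            exact mul_le_mul_of_nonneg_left (hnorm2 i hi) (hn0 i)
        _ = 2 * M * n i := by ring
    · simp [hg, ← hi]
  -- summabilities
  have hsumg : Summable g :=
    Summable.of_nonneg_of_le hglb hg2M (hsumn.mul_left (2 * M))
  have hsumv2 : Summable (fun i => v i ^ 2) := by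
    apply Summable.of_nonneg_of_le (fun i => sq_nonneg _) (fun i => ?_) (hsumn.mul_left 4)
    rw [hv2]
    rcases lt_or_eq_of_le (hn0 i) with hi | hi
    · have : ‖abar i - cbar i‖ ^ 2 ≤ 4 := by
        have := hnorm2 i hi
        nlinarith [norm_nonneg (abar i - cbar i)]
      nlinarith [hn0 i]
    · rw [← hi]; norm_num
  have hsumu2 : Summable (fun i => u i ^ 2) := by
    simp only [hu2]; exact hsumn
  have hsumuv : Summable (fun i => u i * v i) := by
    apply Summable.of_nonneg_of_le (fun i => mul_nonneg (hu0 i) (hv0 i))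
      (fun i => ?_) (hsumn.mul_left 2)
    simp only [hudef, hvdef]
    rw [← mul_assoc, Real.mul_self_sqrt (hn0 i)]
    rcases lt_or_eq_of_le (hn0 i) with hi | hi
    · calc n i * ‖abar i - cbar i‖ ≤ n i * 2 :=
          mul_le_mul_of_nonneg_left (hnorm2 i hi) (hn0 i)
        _ = 2 * n i := by ring
    · rw [← hi]; norm_num
  have hsumMuv : Summable (fun i => M * (u i * v i)) := hsumuv.mul_left M
  -- tsum values
  have htu2 : ∑' i, u i ^ 2 = (t : ℝ) := by
    simp only [hu2]; exact hSn.tsum_eq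
  set S : ℝ := ∑' i, n i * ‖abar i - cbar i‖ ^ 2 with hSdef
  have htv2 : ∑' i, v i ^ 2 = S := by
    rw [hSdef]
    exact tsum_congr hv2
  have hS0 : 0 ≤ S := by
    rw [hSdef]
    exact tsum_nonneg fun i => mul_nonneg (hn0 i) (sq_nonneg _)
  -- main chain
  have main : ∑' i, g i ≤ M * (Real.sqrt t * Real.sqrt S) := by
    calc ∑' i, g i ≤ ∑' i, M * (u i * v i) := Summable.tsum_le_tsum hgub hsumg hsumMuv
      _ = M * ∑' i, u i * v i := tsum_mul_left
      _ ≤ M * (Real.sqrt (∑' i, u i ^ 2) * Real.sqrt (∑' i, v i ^ 2)) :=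
          mul_le_mul_of_nonneg_left
            (tsum_cauchy_schwarz u v hu0 hv0 hsumu2 hsumv2 hsumuv) hM
      _ = M * (Real.sqrt t * Real.sqrt S) := by rw [htu2, htv2]
  -- final algebra
  have hrhs : M * Real.sqrt ((1 / (t : ℝ)) * S) = (1 / (t : ℝ)) * (M * (Real.sqrt t * Real.sqrt S)) := by
    rw [Real.sqrt_mul (by positivity) S, one_div, Real.sqrt_inv]
    have hst : Real.sqrt (t : ℝ) * Real.sqrt (t : ℝ) = (t : ℝ) := Real.mul_self_sqrt ht'.le
    have hstpos : (0:ℝ) < Real.sqrt t := Real.sqrt_pos.mpr ht'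
    field_simp
    linear_combination (-(M * Real.sqrt S)) * hst
  calc (1 / (t : ℝ)) * ∑' i, g i
      ≤ (1 / (t : ℝ)) * (M * (Real.sqrt t * Real.sqrt S)) := by
        apply mul_le_mul_of_nonneg_left main (by positivity)
    _ = M * Real.sqrt ((1 / (t : ℝ)) * S) := hrhs.symm
end

section
/- Let L be an M-Lipschitz proper scoring rule and let K_t(c;f) denote the calibration score computed with the quadratic (Brier) scoring rule, whose divergence is ‖c − d‖². Then for every general binning sequence f, K^L_t(c;f) ≤ M · K_t(c;f). -/
open scoped BigOperators

private lemma sum_app' {A : Type*} [Fintype A] {t : ℕ} (w : Fin t → ℝ)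
    (v : Fin t → EuclideanSpace ℝ A) (b : A) :
    (∑ s, w s • v s) b = ∑ s, w s * v s b := by
  have h : ((∑ s, w s • v s : EuclideanSpace ℝ A) : A → ℝ) b
      = ∑ s, ((w s • v s : EuclideanSpace ℝ A) : A → ℝ) b := by
    induction (Finset.univ : Finset (Fin t)) using Finset.induction with
    | empty => simp
    | insert _ _ h ih => rw [Finset.sum_insert h, Finset.sum_insert h, ← ih]; rfl
  rw [h]; rfl

private lemma normC_le' {A : Type*} [Fintype A] {x : EuclideanSpace ℝ A}
    (h0 : ∀ a, 0 ≤ x a) (h1 : ∑ a, x a = 1) : ‖x‖ ≤ 1 := by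
  have hsq : ‖x‖ ^ 2 ≤ 1 := by
    rw [EuclideanSpace.norm_eq, Real.sq_sqrt (by positivity)]
    calc ∑ a, ‖x a‖ ^ 2 = ∑ a, x a * x a := by
          simp [Real.norm_eq_abs, sq, abs_mul_abs_self]
      _ ≤ ∑ a, 1 * x a := by
          refine Finset.sum_le_sum fun b _ => mul_le_mul_of_nonneg_right ?_ (h0 b)
          calc x b ≤ ∑ e, x e := Finset.single_le_sum (fun e _ => h0 e) (Finset.mem_univ b)
            _ = 1 := h1
      _ = 1 := by simp [h1]
  nlinarith [norm_nonneg x]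

private lemma combo_mem' {A : Type*} [Fintype A] {t : ℕ} (w : Fin t → ℝ)
    (hw0 : ∀ s, 0 ≤ w s) (hw1 : ∑ s, w s = 1)
    (v : Fin t → EuclideanSpace ℝ A)
    (hv : ∀ s, (∀ a, 0 ≤ v s a) ∧ ∑ a, v s a = 1) :
    (∀ a, 0 ≤ (∑ s, w s • v s) a) ∧ ∑ a, (∑ s, w s • v s) a = 1 := by
  constructor
  · intro b
    rw [sum_app']
    exact Finset.sum_nonneg fun s _ => mul_nonneg (hw0 s) ((hv s).1 b)
  · have : ∑ b, (∑ s, w s • v s) b = ∑ b, ∑ s, w s * v s b := by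
      refine Finset.sum_congr rfl fun b _ => sum_app' w v b
    rw [this, Finset.sum_comm]
    calc ∑ s, ∑ b, w s * v s b = ∑ s, w s * ∑ b, v s b := by
          simp [Finset.mul_sum]
      _ = ∑ s, w s := by
          refine Finset.sum_congr rfl fun s _ => by rw [(hv s).2, mul_one]
      _ = 1 := hw1

private lemma key_div' {A : Type*} [Fintype A]
    (C : Set (EuclideanSpace ℝ A))
    (Lvec : EuclideanSpace ℝ A → EuclideanSpace ℝ A)
    (L : EuclideanSpace ℝ A → EuclideanSpace ℝ A → ℝ)
    (hL : ∀ d c, L d c = ∑ a, d a * Lvec c a)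
    (hproper : ∀ c ∈ C, ∀ d ∈ C, L d d ≤ L d c)
    (M : ℝ)
    (hlip : ∀ c ∈ C, ∀ c' ∈ C, ‖Lvec c - Lvec c'‖ ≤ M * ‖c - c'‖)
    {d c : EuclideanSpace ℝ A} (hd : d ∈ C) (hc : c ∈ C) :
    L d c - L d d ≤ M * ‖d - c‖ ^ 2 := by
  have inner_eq : ∀ x y : EuclideanSpace ℝ A,
      (inner ℝ x y : ℝ) = ∑ b, x b * y b := by
    intro x y
    rw [PiLp.inner_apply]
    simp [RCLike.inner_apply, mul_comm]
  have e1 : L d c - L d d = (inner ℝ d (Lvec c - Lvec d) : ℝ) := by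
    rw [hL, hL, inner_eq]
    rw [← Finset.sum_sub_distrib]
    refine Finset.sum_congr rfl fun b _ => ?_
    have : (Lvec c - Lvec d) b = Lvec c b - Lvec d b := rfl
    rw [this]; ring
  have e2 : (inner ℝ c (Lvec c - Lvec d) : ℝ) = L c c - L c d := by
    rw [hL, hL, inner_eq, ← Finset.sum_sub_distrib]
    refine Finset.sum_congr rfl fun b _ => ?_
    have : (Lvec c - Lvec d) b = Lvec c b - Lvec d b := rfl
    rw [this]; ring
  have hp : L c c ≤ L c d := hproper d hd c hc
  have hsplit : (inner ℝ d (Lvec c - Lvec d) : ℝ)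
      = (inner ℝ (d - c) (Lvec c - Lvec d) : ℝ) + (inner ℝ c (Lvec c - Lvec d) : ℝ) := by
    rw [inner_sub_left]; ring
  have hcs : (inner ℝ (d - c) (Lvec c - Lvec d) : ℝ) ≤ ‖d - c‖ * ‖Lvec c - Lvec d‖ :=
    real_inner_le_norm _ _
  have hlipcd : ‖Lvec c - Lvec d‖ ≤ M * ‖d - c‖ := by
    have := hlip c hc d hd
    rwa [norm_sub_rev c d] at this
  have hnn : (0:ℝ) ≤ ‖d - c‖ := norm_nonneg _
  nlinarith [mul_le_mul_of_nonneg_left hlipcd hnn]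

/-- for an `M`-Lipschitz proper scoring rule `L` and every general
binning sequence `f`, `K^L_t(c;f) ≤ M · K_t(c;f)`, where `K_t(c;f)` is the
calibration score of the quadratic (Brier) scoring rule. -/
theorem stmt_6
    {A : Type*} [Fintype A] [Nonempty A] [DecidableEq A]
    {I : Type*} [Countable I]
    (C : Set (EuclideanSpace ℝ A))
    (hC : C = {c : EuclideanSpace ℝ A | (∀ a, 0 ≤ c a) ∧ ∑ a, c a = 1})
    (Lvec : EuclideanSpace ℝ A → EuclideanSpace ℝ A)
    (L : EuclideanSpace ℝ A → EuclideanSpace ℝ A → ℝ)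
    (hL : ∀ d c, L d c = ∑ a, d a * Lvec c a)
    (hproper : ∀ c ∈ C, ∀ d ∈ C, L d d ≤ L d c)
    (M : ℝ) (hM : 0 ≤ M)
    (hlip : ∀ c ∈ C, ∀ c' ∈ C, ‖Lvec c - Lvec c'‖ ≤ M * ‖c - c'‖)
    (t : ℕ) (ht : 1 ≤ t)
    (a : Fin t → A)
    (act : Fin t → EuclideanSpace ℝ A)
    (hact : ∀ s, act s = EuclideanSpace.single (a s) (1 : ℝ))
    (c : Fin t → EuclideanSpace ℝ A) (hc : ∀ s, c s ∈ C)
    (f : Fin t → I → ℝ)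
    (hf0 : ∀ s i, 0 ≤ f s i)
    (hf1 : ∀ s, HasSum (f s) 1)
    (n : I → ℝ) (hn : ∀ i, n i = ∑ s, f s i)
    (abar : I → EuclideanSpace ℝ A)
    (habar : ∀ i, 0 < n i → abar i = ∑ s, (f s i / n i) • act s)
    (cbar : I → EuclideanSpace ℝ A)
    (hcbar : ∀ i, 0 < n i → cbar i = ∑ s, (f s i / n i) • c s) :
    (1 / (t : ℝ)) * ∑' i, n i * (L (abar i) (cbar i) - L (abar i) (abar i)) ≤
      M * ((1 / (t : ℝ)) * ∑' i, n i * ‖abar i - cbar i‖ ^ 2) := by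
  have hn0 : ∀ i, 0 ≤ n i := fun i => (hn i) ▸ Finset.sum_nonneg fun s _ => hf0 s i
  -- weights sum to 1
  have hwsum : ∀ i, 0 < n i → ∑ s, f s i / n i = 1 := fun i hi => by
    rw [← Finset.sum_div, ← hn i, div_self hi.ne']
  -- memberships
  have hamem : ∀ i, 0 < n i → abar i ∈ C := by
    intro i hi
    rw [habar i hi, hC]
    refine combo_mem' _ (fun s => div_nonneg (hf0 s i) (hn0 i)) (hwsum i hi) _ fun s => ?_
    rw [hact s]
    constructor
    · intro b; rw [EuclideanSpace.single_apply]; positivity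
    · simp [EuclideanSpace.single_apply]
  have hcmem : ∀ i, 0 < n i → cbar i ∈ C := by
    intro i hi
    rw [hcbar i hi, hC]
    refine combo_mem' _ (fun s => div_nonneg (hf0 s i) (hn0 i)) (hwsum i hi) _ fun s => ?_
    have := hc s; rw [hC] at this; exact this
  set g : I → ℝ := fun i => n i * ‖abar i - cbar i‖ ^ 2 with hg
  set h : I → ℝ := fun i => n i * (L (abar i) (cbar i) - L (abar i) (abar i)) with hh
  have hnsum : Summable n := by
    have : Summable fun i => ∑ s, f s i := by
      classical
      induction (Finset.univ : Finset (Fin t)) using Finset.induction with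
      | empty => simpa using summable_zero
      | insert _ _ hx ih =>
        simp only [Finset.sum_insert hx]
        exact ((hf1 _).summable).add ih
    exact this.congr fun i => (hn i).symm
  -- bound g i ≤ 4 n i
  have hg_le : ∀ i, g i ≤ 4 * n i := by
    intro i
    rcases eq_or_lt_of_le (hn0 i) with h0 | hpos
    · simp [hg, ← h0]
    · have ha := hamem i hpos; have hcb := hcmem i hpos
      rw [hC] at ha hcb
      have n1 : ‖abar i‖ ≤ 1 := normC_le' ha.1 ha.2
      have n2 : ‖cbar i‖ ≤ 1 := normC_le' hcb.1 hcb.2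
      have n3 : ‖abar i - cbar i‖ ≤ 2 := by
        calc ‖abar i - cbar i‖ ≤ ‖abar i‖ + ‖cbar i‖ := norm_sub_le _ _
          _ ≤ 2 := by linarith
      have n4 : ‖abar i - cbar i‖ ^ 2 ≤ 4 := by nlinarith [norm_nonneg (abar i - cbar i)]
      have := mul_le_mul_of_nonneg_left n4 (hn0 i)
      simpa [hg, mul_comm] using this
  have hg0 : ∀ i, 0 ≤ g i := fun i => mul_nonneg (hn0 i) (by positivity)
  have hgsum : Summable g :=
    Summable.of_nonneg_of_le hg0 hg_le (hnsum.mul_left 4)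
  have hh_le : ∀ i, h i ≤ M * g i := by
    intro i
    rcases eq_or_lt_of_le (hn0 i) with h0 | hpos
    · simp [hh, hg, ← h0]
    · have key := key_div' C Lvec L hL hproper M hlip (hamem i hpos) (hcmem i hpos)
      have := mul_le_mul_of_nonneg_left key (hn0 i)
      calc h i ≤ n i * (M * ‖abar i - cbar i‖ ^ 2) := this
        _ = M * g i := by simp [hg]; ring
  have hh0 : ∀ i, 0 ≤ h i := by
    intro i
    rcases eq_or_lt_of_le (hn0 i) with h0 | hpos
    · simp [hh, ← h0]
    · exact mul_nonneg (hn0 i)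
        (sub_nonneg.2 (hproper (cbar i) (hcmem i hpos) (abar i) (hamem i hpos)))
  have hhsum : Summable h :=
    Summable.of_nonneg_of_le hh0 hh_le (hgsum.mul_left M)
  have hT : ∑' i, h i ≤ M * ∑' i, g i := by
    calc ∑' i, h i ≤ ∑' i, M * g i := Summable.tsum_le_tsum hh_le hhsum (hgsum.mul_left M)
      _ = M * ∑' i, g i := tsum_mul_left
  have hti : (0:ℝ) ≤ 1 / (t:ℝ) := by positivity
  calc (1 / (t : ℝ)) * ∑' i, h i ≤ (1 / (t : ℝ)) * (M * ∑' i, g i) :=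
        mul_le_mul_of_nonneg_left hT hti
    _ = M * ((1 / (t : ℝ)) * ∑' i, g i) := by ring
end

section
/- If the general binning sequence f (over bins I) is a refinement of the general binning sequence g (over bins J), then R^L_t(f) ≤ R^L_t(g) for every proper scoring rule L and every t ≥ 1. -/
open scoped BigOperators

/-- if the general binning sequence `f` (over bins `I`) refines the
general binning sequence `g` (over bins `J`), then `R^L_t(f) ≤ R^L_t(g)` for
every proper scoring rule `L`. -/
theorem stmt_7
    {A : Type*} [Fintype A] [Nonempty A] [DecidableEq A]
    {I : Type*} [Countable I] {J : Type*} [Countable J]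
    (C : Set (EuclideanSpace ℝ A))
    (hC : C = {c : EuclideanSpace ℝ A | (∀ a, 0 ≤ c a) ∧ ∑ a, c a = 1})
    (Lvec : EuclideanSpace ℝ A → EuclideanSpace ℝ A)
    (L : EuclideanSpace ℝ A → EuclideanSpace ℝ A → ℝ)
    (hL : ∀ d c, L d c = ∑ a, d a * Lvec c a)
    (hproper : ∀ c ∈ C, ∀ d ∈ C, L d d ≤ L d c)
    (t : ℕ) (ht : 1 ≤ t)
    (a : Fin t → A)
    (act : Fin t → EuclideanSpace ℝ A)
    (hact : ∀ s, act s = EuclideanSpace.single (a s) (1 : ℝ))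
    (f : Fin t → I → ℝ)
    (hf0 : ∀ s i, 0 ≤ f s i)
    (hf1 : ∀ s, HasSum (f s) 1)
    (g : Fin t → J → ℝ)
    (hg0 : ∀ s j, 0 ≤ g s j)
    (hg1 : ∀ s, HasSum (g s) 1)
    -- `f` refines `g`: the bins of `g` are labeled by `π` and each `g`-bin `j`
    -- is the union of the `f`-bins in `π⁻¹(j)`, with the corresponding weights
    (π : I → J)
    (hrefine : ∀ s j, HasSum (fun i : {i : I // π i = j} => f s i) (g s j))
    (nf : I → ℝ) (hnf : ∀ i, nf i = ∑ s, f s i)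
    (ng : J → ℝ) (hng : ∀ j, ng j = ∑ s, g s j)
    (abarf : I → EuclideanSpace ℝ A)
    (habarf : ∀ i, 0 < nf i → abarf i = ∑ s, (f s i / nf i) • act s)
    (abarg : J → EuclideanSpace ℝ A)
    (habarg : ∀ j, 0 < ng j → abarg j = ∑ s, (g s j / ng j) • act s) :
    (1 / (t : ℝ)) * ∑' i, ∑ s, f s i * (L (act s) (abarf i) - L (act s) (act s)) ≤
      (1 / (t : ℝ)) * ∑' j, ∑ s, g s j * (L (act s) (abarg j) - L (act s) (act s)) := by
  classical
  have htpos : (0:ℝ) ≤ 1 / (t : ℝ) := by positivity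
  have hFinNE : Nonempty (Fin t) := ⟨⟨0, ht⟩⟩
  set s0 : Fin t := ⟨0, ht⟩ with hs0
  -- basic facts about actions
  have hactnn : ∀ s a', (0:ℝ) ≤ act s a' := by
    intro s a'
    rw [hact s, EuclideanSpace.single_apply]
    split <;> norm_num
  have hactsum : ∀ s, ∑ a', act s a' = 1 := by
    intro s
    simp [hact s, EuclideanSpace.single_apply]
  have hactC : ∀ s, act s ∈ C := by
    intro s
    rw [hC]
    exact ⟨hactnn s, hactsum s⟩
  have hD0 : ∀ s, ∀ c ∈ C, 0 ≤ L (act s) c - L (act s) (act s) := fun s c hc =>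
    sub_nonneg.2 (hproper c hc _ (hactC s))
  -- zero-mass bins have zero weights
  have hfz : ∀ i, nf i ≤ 0 → ∀ s, f s i = 0 := by
    intro i h s
    have h0 : (0:ℝ) = ∑ s, f s i := by
      have hnn : (0:ℝ) ≤ ∑ s, f s i := Finset.sum_nonneg fun s _ => hf0 s i
      have := (hnf i) ▸ h
      linarith
    exact ((Finset.sum_eq_zero_iff_of_nonneg (fun s _ => hf0 s i)).1 h0.symm) s (Finset.mem_univ s)
  have hgz : ∀ j, ng j ≤ 0 → ∀ s, g s j = 0 := by
    intro j h s
    have h0 : (0:ℝ) = ∑ s, g s j := by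
      have hnn : (0:ℝ) ≤ ∑ s, g s j := Finset.sum_nonneg fun s _ => hg0 s j
      have := (hng j) ▸ h
      linarith
    exact ((Finset.sum_eq_zero_iff_of_nonneg (fun s _ => hg0 s j)).1 h0.symm) s (Finset.mem_univ s)
  have hfleg : ∀ s i, f s i ≤ g s (π i) := fun s i =>
    le_hasSum (hrefine s (π i)) ⟨i, rfl⟩ (fun b _ => hf0 s b)
  have hnfng : ∀ i, nf i ≤ ng (π i) := by
    intro i
    rw [hnf, hng]
    exact Finset.sum_le_sum fun s _ => hfleg s i
  -- simplex membership of weighted averages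
  have havgC : ∀ (w : Fin t → ℝ) (n : ℝ), (∀ s, 0 ≤ w s) → n = ∑ s, w s → 0 < n →
      (∑ s, (w s / n) • act s) ∈ C := by
    intro w n hw hn hpos
    have happ : ∀ a', (∑ s, (w s / n) • act s) a' = ∑ s, (w s / n) * act s a' := by
      intro a'
      rw [WithLp.ofLp_sum, Finset.sum_apply]
      rfl
    rw [hC]
    constructor
    · intro a'
      rw [happ]
      exact Finset.sum_nonneg fun s _ =>
        mul_nonneg (div_nonneg (hw s) hpos.le) (hactnn s a')
    · simp only [happ]
      rw [Finset.sum_comm]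
      have : ∀ s, ∑ a', (w s / n) * act s a' = w s / n := by
        intro s
        rw [← Finset.mul_sum, hactsum s, mul_one]
      rw [Finset.sum_congr rfl fun s _ => this s, ← Finset.sum_div, ← hn, div_self hpos.ne']
  have habarfC : ∀ i, 0 < nf i → abarf i ∈ C := by
    intro i h
    rw [habarf i h]
    exact havgC _ _ (fun s => hf0 s i) (hnf i) h
  have habargC : ∀ j, 0 < ng j → abarg j ∈ C := by
    intro j h
    rw [habarg j h]
    exact havgC _ _ (fun s => hg0 s j) (hng j) h
  -- linearity of the score in the first argument
  have hlin : ∀ (w : Fin t → ℝ) (n : ℝ) (c : EuclideanSpace ℝ A), n ≠ 0 → n = ∑ s, w s →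
      ∑ s, w s * L (act s) c = n * L (∑ s, (w s / n) • act s) c := by
    intro w n c hn hsum
    have happ : ∀ a', (∑ s, (w s / n) • act s) a' = ∑ s, (w s / n) * act s a' := by
      intro a'
      rw [WithLp.ofLp_sum, Finset.sum_apply]
      rfl
    calc ∑ s, w s * L (act s) c
        = ∑ s, ∑ a', w s * (act s a' * Lvec c a') := by
          refine Finset.sum_congr rfl fun s _ => ?_
          rw [hL, Finset.mul_sum]
      _ = ∑ a', ∑ s, w s * (act s a' * Lvec c a') := Finset.sum_comm
      _ = ∑ a', (n * (∑ s, (w s / n) * act s a')) * Lvec c a' := by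
          refine Finset.sum_congr rfl fun a' _ => ?_
          rw [Finset.mul_sum, Finset.sum_mul]
          refine Finset.sum_congr rfl fun s _ => ?_
          field_simp
      _ = n * L (∑ s, (w s / n) • act s) c := by
          rw [hL, Finset.mul_sum]
          refine Finset.sum_congr rfl fun a' _ => ?_
          rw [happ]
          ring
  -- nonnegativity of the bin scores
  have hFnn : ∀ i, 0 ≤ ∑ s, f s i * (L (act s) (abarf i) - L (act s) (act s)) := by
    intro i
    by_cases h : 0 < nf i
    · exact Finset.sum_nonneg fun s _ => mul_nonneg (hf0 s i) (hD0 s _ (habarfC i h))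
    · have hz : ∀ s, f s i = 0 := hfz i (not_lt.1 h)
      simp [hz]
  have hGnn : ∀ j, 0 ≤ ∑ s, g s j * (L (act s) (abarg j) - L (act s) (act s)) := by
    intro j
    by_cases h : 0 < ng j
    · exact Finset.sum_nonneg fun s _ => mul_nonneg (hg0 s j) (hD0 s _ (habargC j h))
    · have hz : ∀ s, g s j = 0 := hgz j (not_lt.1 h)
      simp [hz]
  have hUnn : ∀ i, 0 ≤ ∑ s, f s i * (L (act s) (abarg (π i)) - L (act s) (act s)) := by
    intro i
    by_cases h : 0 < ng (π i)
    · exact Finset.sum_nonneg fun s _ => mul_nonneg (hf0 s i) (hD0 s _ (habargC _ h))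
    · have hz : ∀ s, f s i = 0 := fun s =>
        le_antisymm ((hfleg s i).trans (le_of_eq (hgz _ (not_lt.1 h) s))) (hf0 s i)
      simp [hz]
  -- the key comparison: fine bin score ≤ score measured against coarse average
  have hFU : ∀ i, ∑ s, f s i * (L (act s) (abarf i) - L (act s) (act s)) ≤
      ∑ s, f s i * (L (act s) (abarg (π i)) - L (act s) (act s)) := by
    intro i
    by_cases h : 0 < nf i
    · have hpg : 0 < ng (π i) := lt_of_lt_of_le h (hnfng i)
      have e1 : ∑ s, f s i * L (act s) (abarf i) = nf i * L (abarf i) (abarf i) := by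
        rw [habarf i h]
        exact hlin _ _ _ h.ne' (hnf i)
      have e2 : ∑ s, f s i * L (act s) (abarg (π i)) = nf i * L (abarf i) (abarg (π i)) := by
        rw [habarf i h]
        exact hlin _ _ _ h.ne' (hnf i)
      simp only [mul_sub, Finset.sum_sub_distrib]
      apply sub_le_sub_right
      rw [e1, e2]
      exact mul_le_mul_of_nonneg_left (hproper _ (habargC _ hpg) _ (habarfC i h)) h.le
    · have hz : ∀ s, f s i = 0 := hfz i (not_lt.1 h)
      simp [hz]
  -- uniform bound on the coarse bin scores, giving summability
  set M := Finset.univ.sup' Finset.univ_nonempty (fun a' => Lvec (act s0) a') with hM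
  set m := Finset.univ.inf' Finset.univ_nonempty (fun s : Fin t => L (act s) (act s)) with hm
  have hGbound : ∀ j, ∑ s, g s j * (L (act s) (abarg j) - L (act s) (act s)) ≤ ng j * (M - m) := by
    intro j
    by_cases h : 0 < ng j
    · have hmem : abarg j ∈ C := habargC j h
      have hmem' := hmem
      rw [hC] at hmem'
      simp only [mul_sub, Finset.sum_sub_distrib]
      apply sub_le_sub
      · have e : ∑ s, g s j * L (act s) (abarg j) = ng j * L (abarg j) (abarg j) := by
          rw [habarg j h]
          exact hlin _ _ _ h.ne' (hng j)
        rw [e]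
        have h1 : L (abarg j) (abarg j) ≤ L (abarg j) (act s0) := hproper _ (hactC s0) _ hmem
        have h2 : L (abarg j) (act s0) ≤ M := by
          rw [hL]
          calc ∑ a', abarg j a' * Lvec (act s0) a'
              ≤ ∑ a', abarg j a' * M := Finset.sum_le_sum fun a' _ =>
                mul_le_mul_of_nonneg_left (Finset.le_sup' _ (Finset.mem_univ a')) (hmem'.1 a')
            _ = M := by rw [← Finset.sum_mul, hmem'.2, one_mul]
        exact mul_le_mul_of_nonneg_left (h1.trans h2) h.le
      · rw [hng j, Finset.sum_mul]
        exact Finset.sum_le_sum fun s _ =>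
          mul_le_mul_of_nonneg_left (Finset.inf'_le _ (Finset.mem_univ s)) (hg0 s j)
    · have hz : ∀ s, g s j = 0 := hgz j (not_lt.1 h)
      have hz' : ng j = 0 := by rw [hng]; simp [hz]
      simp [hz, hz']
  have hngsum : Summable ng := by
    have : Summable fun j => ∑ s, g s j := summable_sum fun s _ => (hg1 s).summable
    exact (summable_congr hng).2 this
  have hGsummable : Summable fun j => ∑ s, g s j * (L (act s) (abarg j) - L (act s) (act s)) :=
    Summable.of_nonneg_of_le hGnn hGbound (hngsum.mul_right (M - m))
  -- fiberwise sums
  have hfib : ∀ j, HasSum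
      (fun i : {i : I // π i = j} =>
        ∑ s, f s (i : I) * (L (act s) (abarg (π (i : I))) - L (act s) (act s)))
      (∑ s, g s j * (L (act s) (abarg j) - L (act s) (act s))) := by
    intro j
    have h1 : HasSum
        (fun i : {i : I // π i = j} =>
          ∑ s, f s (i : I) * (L (act s) (abarg j) - L (act s) (act s)))
        (∑ s, g s j * (L (act s) (abarg j) - L (act s) (act s))) :=
      hasSum_sum fun s _ => (hrefine s j).mul_right _
    have heq : (fun i : {i : I // π i = j} =>
        ∑ s, f s (i : I) * (L (act s) (abarg (π (i : I))) - L (act s) (act s))) =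
        fun i : {i : I // π i = j} =>
          ∑ s, f s (i : I) * (L (act s) (abarg j) - L (act s) (act s)) := by
      funext i
      rw [i.2]
    rw [heq]
    exact h1
  -- assemble via the sigma decomposition
  set U : I → ℝ := fun i => ∑ s, f s i * (L (act s) (abarg (π i)) - L (act s) (act s)) with hUdef
  set e := Equiv.sigmaFiberEquiv π with he
  have hsig : Summable fun p : Σ j, {i : I // π i = j} => U (e p) := by
    refine (summable_sigma_of_nonneg fun p => hUnn _).2 ⟨fun j => (hfib j).summable, ?_⟩
    have : ∀ j, ∑' y : {i : I // π i = j}, U (e ⟨j, y⟩) =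
        ∑ s, g s j * (L (act s) (abarg j) - L (act s) (act s)) := fun j => (hfib j).tsum_eq
    exact (summable_congr this).2 hGsummable
  have hUsummable : Summable U := e.summable_iff.1 hsig
  have hUG : ∑' i, U i = ∑' j, ∑ s, g s j * (L (act s) (abarg j) - L (act s) (act s)) := by
    rw [← e.tsum_eq U, Summable.tsum_sigma hsig]
    exact tsum_congr fun j => (hfib j).tsum_eq
  have hFsummable : Summable fun i => ∑ s, f s i * (L (act s) (abarf i) - L (act s) (act s)) :=
    Summable.of_nonneg_of_le hFnn hFU hUsummable
  refine mul_le_mul_of_nonneg_left ?_ htpos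
  calc ∑' i, ∑ s, f s i * (L (act s) (abarf i) - L (act s) (act s))
      ≤ ∑' i, U i := Summable.tsum_le_tsum hFU hFsummable hUsummable
    _ = ∑' j, ∑ s, g s j * (L (act s) (abarg j) - L (act s) (act s)) := hUG
end

section
/- If the general binning sequence f is a refinement of the general binning sequence g, and g is a refinement of the pure by-forecast binning of the forecasting sequence c (i.e., the general binning that at each period s puts the whole unit mass into the bin labeled by the forecast value c_s), then K^L_t(c;f) ≥ K^L_t(c;g) ≥ K^L_t(c) for every proper scoring rule L and every t ≥ 1, where K^L_t(c) is the calibration score with respect to the by-forecast binning. -/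
set_option maxHeartbeats 1000000

open scoped BigOperators Classical

section Aux

variable {A : Type*} [Fintype A] [Nonempty A] [DecidableEq A]

private lemma coordSum {ι : Type*} (s : Finset ι) (v : ι → EuclideanSpace ℝ A) (a : A) :
    (∑ i ∈ s, v i) a = ∑ i ∈ s, v i a :=
  by rw [WithLp.ofLp_sum]; exact Finset.sum_apply a s (fun i => (v i).ofLp)

private lemma dotSum {ι : Type*} (v : EuclideanSpace ℝ A) {F : ι → EuclideanSpace ℝ A}
    {x : EuclideanSpace ℝ A} (h : HasSum F x) :
    HasSum (fun i => ∑ a, F i a * v a) (∑ a, x a * v a) := by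
  refine hasSum_sum (fun a _ => ?_)
  exact (h.mapL (EuclideanSpace.proj a)).mul_right (v a)

private lemma key
    (C : Set (EuclideanSpace ℝ A))
    (Lvec : EuclideanSpace ℝ A → EuclideanSpace ℝ A)
    (L : EuclideanSpace ℝ A → EuclideanSpace ℝ A → ℝ)
    (hL : ∀ d c, L d c = ∑ a, d a * Lvec c a)
    (hproper : ∀ c ∈ C, ∀ d ∈ C, L d d ≤ L d c)
    {I J : Type*} (π : I → J)
    (nF : I → ℝ) (hnF0 : ∀ i, 0 ≤ nF i) (hnFsum : Summable nF)
    (nG : J → ℝ)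
    (hfib : ∀ j, HasSum (fun i : {i // π i = j} => nF i.1) (nG j))
    (aF cF : I → EuclideanSpace ℝ A) (aG cG : J → EuclideanSpace ℝ A)
    (haF : ∀ i, 0 < nF i → aF i ∈ C) (hcF : ∀ i, 0 < nF i → cF i ∈ C)
    (haG : ∀ j, 0 < nG j → aG j ∈ C) (hcG : ∀ j, 0 < nG j → cG j ∈ C)
    (hcFG : ∀ i, 0 < nF i → cF i = cG (π i))
    (hbar : ∀ j, HasSum (fun i : {i // π i = j} => nF i.1 • aF i.1) (nG j • aG j))
    (B : ℝ) (hB : ∀ i, 0 < nF i → L (aF i) (cF i) - L (aF i) (aF i) ≤ B) :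
    ∑' j, nG j * (L (aG j) (cG j) - L (aG j) (aG j)) ≤
      ∑' i, nF i * (L (aF i) (cF i) - L (aF i) (aF i)) := by
  set TF : I → ℝ := fun i => nF i * (L (aF i) (cF i) - L (aF i) (aF i)) with hTFdef
  have hTF0 : ∀ i, 0 ≤ TF i := by
    intro i
    rcases (hnF0 i).lt_or_eq with h | h
    · exact mul_nonneg h.le (sub_nonneg.2 (hproper _ (hcF i h) _ (haF i h)))
    · simp [hTFdef, ← h]
  have hTFle : ∀ i, TF i ≤ nF i * max B 0 := by
    intro i
    rcases (hnF0 i).lt_or_eq with h | h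
    · exact mul_le_mul_of_nonneg_left ((hB i h).trans (le_max_left _ _)) h.le
    · simp [hTFdef, ← h]
  have hTFsum : Summable TF :=
    Summable.of_nonneg_of_le hTF0 hTFle (hnFsum.mul_right _)
  have hnG0 : ∀ j, 0 ≤ nG j := fun j =>
    hasSum_le (fun i : {i // π i = j} => hnF0 i.1) hasSum_zero (hfib j)
  -- basic algebraic identity
  have e1 : ∀ (r : ℝ) (x w : EuclideanSpace ℝ A),
      (∑ a, (r • x) a * Lvec w a) = r * L x w := by
    intro r x w
    rw [hL, Finset.mul_sum]
    refine Finset.sum_congr rfl (fun a _ => ?_)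
    rw [PiLp.smul_apply, smul_eq_mul]; ring
  -- per-bin inequality
  have key_j : ∀ j, nG j * (L (aG j) (cG j) - L (aG j) (aG j)) ≤
      ∑' i : {i // π i = j}, TF i.1 := by
    intro j
    rcases (hnG0 j).lt_or_eq with hpos | hzero
    · have hS := hbar j
      have h1' : HasSum (fun i : {i // π i = j} => nF i.1 * L (aF i.1) (cG j))
          (nG j * L (aG j) (cG j)) := by
        simpa only [e1] using dotSum (Lvec (cG j)) hS
      have h2' : HasSum (fun i : {i // π i = j} => nF i.1 * L (aF i.1) (aG j))
          (nG j * L (aG j) (aG j)) := by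
        simpa only [e1] using dotSum (Lvec (aG j)) hS
      have hc1 : (fun i : {i // π i = j} => nF i.1 * L (aF i.1) (cF i.1))
          = fun i : {i // π i = j} => nF i.1 * L (aF i.1) (cG j) := by
        funext i
        rcases (hnF0 i.1).lt_or_eq with h | h
        · rw [hcFG i.1 h, i.2]
        · rw [← h, zero_mul, zero_mul]
      have h1'' : HasSum (fun i : {i // π i = j} => nF i.1 * L (aF i.1) (cF i.1))
          (nG j * L (aG j) (cG j)) := by rw [hc1]; exact h1'
      have hTFfib : Summable (fun i : {i // π i = j} => TF i.1) :=
        hTFsum.subtype {i | π i = j}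
      have haa : (fun i : {i // π i = j} => nF i.1 * L (aF i.1) (aF i.1))
          = fun i : {i // π i = j} => nF i.1 * L (aF i.1) (cF i.1) - TF i.1 := by
        funext i; simp only [hTFdef]; ring
      have haaS : Summable (fun i : {i // π i = j} => nF i.1 * L (aF i.1) (aF i.1)) := by
        rw [haa]; exact h1''.summable.sub hTFfib
      have hle2 : ∑' i : {i // π i = j}, nF i.1 * L (aF i.1) (aF i.1)
          ≤ nG j * L (aG j) (aG j) := by
        rw [← h2'.tsum_eq]
        refine Summable.tsum_le_tsum (fun i => ?_) haaS h2'.summable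
        rcases (hnF0 i.1).lt_or_eq with h | h
        · exact mul_le_mul_of_nonneg_left (hproper _ (haG j hpos) _ (haF i.1 h)) h.le
        · rw [← h, zero_mul, zero_mul]
      have htsub : ∑' i : {i // π i = j}, TF i.1
          = nG j * L (aG j) (cG j) - ∑' i : {i // π i = j}, nF i.1 * L (aF i.1) (aF i.1) := by
        rw [← h1''.tsum_eq, ← Summable.tsum_sub h1''.summable haaS]
        refine tsum_congr (fun i => ?_)
        simp only [hTFdef]; ring
      rw [htsub, mul_sub]
      linarith
    · rw [← hzero, zero_mul]
      exact tsum_nonneg (fun i => hTF0 i.1)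
  -- global
  have hfiber : HasSum (fun j => ∑' i : {i // π i = j}, TF i.1) (∑' i, TF i) :=
    hTFsum.hasSum.tsum_fiberwise π
  have hTG0 : ∀ j, 0 ≤ nG j * (L (aG j) (cG j) - L (aG j) (aG j)) := by
    intro j
    rcases (hnG0 j).lt_or_eq with h | h
    · exact mul_nonneg h.le (sub_nonneg.2 (hproper _ (hcG j h) _ (haG j h)))
    · rw [← h, zero_mul]
  have hTGsum : Summable (fun j => nG j * (L (aG j) (cG j) - L (aG j) (aG j))) :=
    Summable.of_nonneg_of_le hTG0 key_j hfiber.summable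
  calc ∑' j, nG j * (L (aG j) (cG j) - L (aG j) (aG j))
      ≤ ∑' j, ∑' i : {i // π i = j}, TF i.1 := Summable.tsum_le_tsum key_j hTGsum hfiber.summable
    _ = ∑' i, TF i := hfiber.tsum_eq

end Aux

/-- if the general binning sequence `f` refines the general binning
sequence `g`, and `g` refines the pure by-forecast binning of the forecasting
sequence `c`, then `K^L_t(c;f) ≥ K^L_t(c;g) ≥ K^L_t(c)` for every proper
scoring rule `L`. -/
theorem stmt_8
    {A : Type*} [Fintype A] [Nonempty A] [DecidableEq A]
    {I : Type*} [Countable I] {J : Type*} [Countable J]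
    (C : Set (EuclideanSpace ℝ A))
    (hC : C = {c : EuclideanSpace ℝ A | (∀ a, 0 ≤ c a) ∧ ∑ a, c a = 1})
    (Lvec : EuclideanSpace ℝ A → EuclideanSpace ℝ A)
    (L : EuclideanSpace ℝ A → EuclideanSpace ℝ A → ℝ)
    (hL : ∀ d c, L d c = ∑ a, d a * Lvec c a)
    (hproper : ∀ c ∈ C, ∀ d ∈ C, L d d ≤ L d c)
    (t : ℕ) (ht : 1 ≤ t)
    (a : Fin t → A)
    (act : Fin t → EuclideanSpace ℝ A)
    (hact : ∀ s, act s = EuclideanSpace.single (a s) (1 : ℝ))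
    (c : Fin t → EuclideanSpace ℝ A) (hc : ∀ s, c s ∈ C)
    (f : Fin t → I → ℝ)
    (hf0 : ∀ s i, 0 ≤ f s i)
    (hf1 : ∀ s, HasSum (f s) 1)
    (g : Fin t → J → ℝ)
    (hg0 : ∀ s j, 0 ≤ g s j)
    (hg1 : ∀ s, HasSum (g s) 1)
    -- `f` refines `g`
    (π : I → J)
    (hrefine : ∀ s j, HasSum (fun i : {i : I // π i = j} => f s i) (g s j))
    -- `g` refines the pure by-forecast binning of `c` (bins labeled by
    -- forecast values; at period `s` the unit mass goes into bin `c s`)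
    (τ : J → EuclideanSpace ℝ A)
    (hrefine' : ∀ s p, HasSum (fun j : {j : J // τ j = p} => g s j)
      (if c s = p then (1 : ℝ) else 0))
    (nf : I → ℝ) (hnf : ∀ i, nf i = ∑ s, f s i)
    (ng : J → ℝ) (hng : ∀ j, ng j = ∑ s, g s j)
    (abarf : I → EuclideanSpace ℝ A)
    (habarf : ∀ i, 0 < nf i → abarf i = ∑ s, (f s i / nf i) • act s)
    (cbarf : I → EuclideanSpace ℝ A)
    (hcbarf : ∀ i, 0 < nf i → cbarf i = ∑ s, (f s i / nf i) • c s)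
    (abarg : J → EuclideanSpace ℝ A)
    (habarg : ∀ j, 0 < ng j → abarg j = ∑ s, (g s j / ng j) • act s)
    (cbarg : J → EuclideanSpace ℝ A)
    (hcbarg : ∀ j, 0 < ng j → cbarg j = ∑ s, (g s j / ng j) • c s)
    -- by-forecast bin averages of the actions
    (abarc : EuclideanSpace ℝ A → EuclideanSpace ℝ A)
    (habarc : ∀ p : EuclideanSpace ℝ A,
      0 < (Finset.univ.filter (fun s => c s = p)).card →
      abarc p = (((Finset.univ.filter (fun s => c s = p)).card : ℝ))⁻¹ •
        ∑ s ∈ Finset.univ.filter (fun s => c s = p), act s) :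
    (1 / (t : ℝ)) * ∑ s, (L (abarc (c s)) (c s) - L (abarc (c s)) (abarc (c s))) ≤
        (1 / (t : ℝ)) * ∑' j, ng j * (L (abarg j) (cbarg j) - L (abarg j) (abarg j)) ∧
    (1 / (t : ℝ)) * ∑' j, ng j * (L (abarg j) (cbarg j) - L (abarg j) (abarg j)) ≤
        (1 / (t : ℝ)) * ∑' i, nf i * (L (abarf i) (cbarf i) - L (abarf i) (abarf i)) := by
  classical
  have hinv : (0:ℝ) ≤ 1 / t := by positivity
  -- membership facts
  have hsingle_mem : ∀ a0 : A, EuclideanSpace.single a0 (1:ℝ) ∈ C := by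
    intro a0; rw [hC]
    refine ⟨fun b => ?_, ?_⟩
    · rw [EuclideanSpace.single_apply]; split <;> norm_num
    · simp [EuclideanSpace.single_apply]
  have hact_mem : ∀ s, act s ∈ C := fun s => by rw [hact]; exact hsingle_mem _
  have combo_mem : ∀ (w : Fin t → ℝ) (x : Fin t → EuclideanSpace ℝ A),
      (∀ s, 0 ≤ w s) → (∑ s, w s) = 1 → (∀ s, w s ≠ 0 → x s ∈ C) →
      (∑ s, w s • x s) ∈ C := by
    intro w x hw0 hw1 hx
    rw [hC]
    refine ⟨fun b => ?_, ?_⟩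
    · rw [coordSum]
      refine Finset.sum_nonneg (fun s _ => ?_)
      rw [PiLp.smul_apply, smul_eq_mul]
      rcases eq_or_ne (w s) 0 with h | h
      · simp [h]
      · have hxs := hx s h; rw [hC] at hxs
        exact mul_nonneg (hw0 s) (hxs.1 b)
    · calc ∑ b, (∑ s, w s • x s) b = ∑ b, ∑ s, w s * x s b := by
            refine Finset.sum_congr rfl fun b _ => ?_
            rw [coordSum]
            exact Finset.sum_congr rfl fun s _ => by rw [PiLp.smul_apply, smul_eq_mul]
        _ = ∑ s, ∑ b, w s * x s b := Finset.sum_comm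
        _ = ∑ s, w s := by
            refine Finset.sum_congr rfl fun s _ => ?_
            rw [← Finset.mul_sum]
            rcases eq_or_ne (w s) 0 with h | h
            · simp [h]
            · have hxs := hx s h; rw [hC] at hxs
              rw [hxs.2, mul_one]
        _ = 1 := hw1
  -- weight facts
  have hnf0 : ∀ i, 0 ≤ nf i := fun i =>
    (hnf i) ▸ Finset.sum_nonneg fun s _ => hf0 s i
  have hng0 : ∀ j, 0 ≤ ng j := fun j =>
    (hng j) ▸ Finset.sum_nonneg fun s _ => hg0 s j
  have hf_zero : ∀ i, nf i = 0 → ∀ s, f s i = 0 := by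
    intro i hi s
    exact (Finset.sum_eq_zero_iff_of_nonneg (fun s _ => hf0 s i)).1
      ((hnf i).symm.trans hi) s (Finset.mem_univ s)
  have hg_zero : ∀ j, ng j = 0 → ∀ s, g s j = 0 := by
    intro j hj s
    exact (Finset.sum_eq_zero_iff_of_nonneg (fun s _ => hg0 s j)).1
      ((hng j).symm.trans hj) s (Finset.mem_univ s)
  have hnfsum : Summable nf := by
    have h := hasSum_sum (s := Finset.univ) (fun s (_ : s ∈ Finset.univ) => hf1 s)
    have e : (fun i => ∑ s, f s i) = nf := funext fun i => (hnf i).symm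
    rw [e] at h
    exact h.summable
  have hngsum : Summable ng := by
    have h := hasSum_sum (s := Finset.univ) (fun s (_ : s ∈ Finset.univ) => hg1 s)
    have e : (fun j => ∑ s, g s j) = ng := funext fun j => (hng j).symm
    rw [e] at h
    exact h.summable
  -- support facts
  have hg_tau : ∀ s j, g s j ≠ 0 → c s = τ j := by
    intro s j h
    by_contra hne
    have h0 := hrefine' s (τ j)
    rw [if_neg hne] at h0
    have hle := le_hasSum h0 ⟨j, rfl⟩ (fun k _ => hg0 s k.1)
    exact h (le_antisymm hle (hg0 s j))
  have hf_le_g : ∀ s i, f s i ≤ g s (π i) := fun s i =>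
    le_hasSum (hrefine s (π i)) ⟨i, rfl⟩ (fun k _ => hf0 s k.1)
  have hf_tau : ∀ s i, f s i ≠ 0 → c s = τ (π i) := by
    intro s i h
    refine hg_tau s (π i) (fun h0 => h ?_)
    exact le_antisymm (h0 ▸ hf_le_g s i) (hf0 s i)
  have hex_f : ∀ i, 0 < nf i → ∃ s, f s i ≠ 0 := by
    intro i h
    by_contra hall
    push_neg at hall
    exact h.ne' ((hnf i).trans (Finset.sum_eq_zero fun s _ => hall s))
  have hex_g : ∀ j, 0 < ng j → ∃ s, g s j ≠ 0 := by
    intro j h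
    by_contra hall
    push_neg at hall
    exact h.ne' ((hng j).trans (Finset.sum_eq_zero fun s _ => hall s))
  -- smul-sum identities
  have hnfa : ∀ i, nf i • abarf i = ∑ s, f s i • act s := by
    intro i
    rcases (hnf0 i).lt_or_eq with h | h
    · rw [habarf i h, Finset.smul_sum]
      refine Finset.sum_congr rfl fun s _ => ?_
      rw [smul_smul, mul_comm, div_mul_cancel₀ _ h.ne']
    · rw [← h, zero_smul]
      exact (Finset.sum_eq_zero fun s _ => by
        rw [hf_zero i h.symm s, zero_smul]).symm
  have hnga : ∀ j, ng j • abarg j = ∑ s, g s j • act s := by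
    intro j
    rcases (hng0 j).lt_or_eq with h | h
    · rw [habarg j h, Finset.smul_sum]
      refine Finset.sum_congr rfl fun s _ => ?_
      rw [smul_smul, mul_comm, div_mul_cancel₀ _ h.ne']
    · rw [← h, zero_smul]
      exact (Finset.sum_eq_zero fun s _ => by
        rw [hg_zero j h.symm s, zero_smul]).symm
  -- cbar values
  have hcbarf_tau : ∀ i, 0 < nf i → cbarf i = τ (π i) := by
    intro i h
    rw [hcbarf i h]
    have e : ∀ s ∈ Finset.univ, (f s i / nf i) • c s = (f s i / nf i) • τ (π i) := by
      intro s _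
      rcases eq_or_ne (f s i) 0 with h0 | h0
      · rw [h0, zero_div, zero_smul, zero_smul]
      · rw [hf_tau s i h0]
    rw [Finset.sum_congr rfl e, ← Finset.sum_smul, ← Finset.sum_div, ← hnf,
      div_self h.ne', one_smul]
  have hcbarg_tau : ∀ j, 0 < ng j → cbarg j = τ j := by
    intro j h
    rw [hcbarg j h]
    have e : ∀ s ∈ Finset.univ, (g s j / ng j) • c s = (g s j / ng j) • τ j := by
      intro s _
      rcases eq_or_ne (g s j) 0 with h0 | h0
      · rw [h0, zero_div, zero_smul, zero_smul]
      · rw [hg_tau s j h0]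
    rw [Finset.sum_congr rfl e, ← Finset.sum_smul, ← Finset.sum_div, ← hng,
      div_self h.ne', one_smul]
  -- memberships
  have habarf_mem : ∀ i, 0 < nf i → abarf i ∈ C := by
    intro i h
    rw [habarf i h]
    refine combo_mem _ _ (fun s => div_nonneg (hf0 s i) (hnf0 i)) ?_ (fun s _ => hact_mem s)
    rw [← Finset.sum_div, ← hnf, div_self h.ne']
  have habarg_mem : ∀ j, 0 < ng j → abarg j ∈ C := by
    intro j h
    rw [habarg j h]
    refine combo_mem _ _ (fun s => div_nonneg (hg0 s j) (hng0 j)) ?_ (fun s _ => hact_mem s)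
    rw [← Finset.sum_div, ← hng, div_self h.ne']
  have hcbarf_mem : ∀ i, 0 < nf i → cbarf i ∈ C := by
    intro i h
    obtain ⟨s, hs⟩ := hex_f i h
    rw [hcbarf_tau i h, ← hf_tau s i hs]
    exact hc s
  have hcbarg_mem : ∀ j, 0 < ng j → cbarg j ∈ C := by
    intro j h
    obtain ⟨s, hs⟩ := hex_g j h
    rw [hcbarg_tau j h, ← hg_tau s j hs]
    exact hc s
  -- the uniform bound B = M - m
  have hLsingle : ∀ (x : EuclideanSpace ℝ A) (a0 : A),
      L (EuclideanSpace.single a0 1) x = Lvec x a0 := by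
    intro x a0
    rw [hL, Finset.sum_eq_single a0]
    · rw [EuclideanSpace.single_apply, if_pos rfl, one_mul]
    · intro b _ hb; rw [EuclideanSpace.single_apply, if_neg hb, zero_mul]
    · intro h; exact absurd (Finset.mem_univ _) h
  have hLvec_lb : ∀ x ∈ C, ∀ a0 : A, Lvec (EuclideanSpace.single a0 1) a0 ≤ Lvec x a0 := by
    intro x hx a0
    have h := hproper x hx _ (hsingle_mem a0)
    rwa [hLsingle, hLsingle] at h
  have hLdd_lb : ∀ d ∈ C, -(∑ b, |Lvec (EuclideanSpace.single b 1) b|) ≤ L d d := by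
    intro d hd
    have hd' := hd; rw [hC] at hd'
    obtain ⟨h0, h1⟩ := hd'
    have hd1 : ∀ b, d b ≤ 1 := by
      intro b
      calc d b ≤ ∑ b', d b' := Finset.single_le_sum (fun b' _ => h0 b') (Finset.mem_univ b)
        _ = 1 := h1
    rw [hL]
    have hterm : ∀ b ∈ Finset.univ,
        -(|Lvec (EuclideanSpace.single b 1) b|) ≤ d b * Lvec d b := by
      intro b _
      have hv : -(|Lvec (EuclideanSpace.single b 1) b|) ≤ Lvec d b :=
        (neg_abs_le _).trans (hLvec_lb d hd b)
      nlinarith [mul_nonneg (h0 b)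
        (by linarith : (0:ℝ) ≤ Lvec d b + |Lvec (EuclideanSpace.single b 1) b|),
        abs_nonneg (Lvec (EuclideanSpace.single b 1) b),
        mul_le_of_le_one_left (abs_nonneg (Lvec (EuclideanSpace.single b 1) b)) (hd1 b)]
    calc -(∑ b, |Lvec (EuclideanSpace.single b 1) b|)
        = ∑ b, -(|Lvec (EuclideanSpace.single b 1) b|) := by rw [Finset.sum_neg_distrib]
      _ ≤ ∑ b, d b * Lvec d b := Finset.sum_le_sum hterm
  have hLM : ∀ d ∈ C, ∀ s0 : Fin t, L d (c s0) ≤ ∑ s, ∑ b, |Lvec (c s) b| := by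
    intro d hd s0
    have hd' := hd; rw [hC] at hd'
    obtain ⟨h0, h1⟩ := hd'
    have hd1 : ∀ b, d b ≤ 1 := by
      intro b
      calc d b ≤ ∑ b', d b' := Finset.single_le_sum (fun b' _ => h0 b') (Finset.mem_univ b)
        _ = 1 := h1
    rw [hL]
    calc ∑ b, d b * Lvec (c s0) b ≤ ∑ b, |Lvec (c s0) b| := by
          refine Finset.sum_le_sum fun b _ => ?_
          calc d b * Lvec (c s0) b ≤ d b * |Lvec (c s0) b| :=
                mul_le_mul_of_nonneg_left (le_abs_self _) (h0 b)
            _ ≤ 1 * |Lvec (c s0) b| :=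
                mul_le_mul_of_nonneg_right (hd1 b) (abs_nonneg _)
            _ = |Lvec (c s0) b| := one_mul _
      _ ≤ ∑ s, ∑ b, |Lvec (c s) b| :=
          Finset.single_le_sum (f := fun s => ∑ b, |Lvec (c s) b|)
            (fun s _ => Finset.sum_nonneg fun b _ => abs_nonneg _)
            (Finset.mem_univ s0)
  set B : ℝ := (∑ s, ∑ b, |Lvec (c s) b|) + ∑ b, |Lvec (EuclideanSpace.single b 1) b| with hB
  have hBf : ∀ i, 0 < nf i → L (abarf i) (cbarf i) - L (abarf i) (abarf i) ≤ B := by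
    intro i h
    obtain ⟨s, hs⟩ := hex_f i h
    have h1 : L (abarf i) (cbarf i) ≤ ∑ s, ∑ b, |Lvec (c s) b| := by
      rw [hcbarf_tau i h, ← hf_tau s i hs]
      exact hLM _ (habarf_mem i h) s
    have h2 := hLdd_lb _ (habarf_mem i h)
    rw [hB]; linarith
  have hBg : ∀ j, 0 < ng j → L (abarg j) (cbarg j) - L (abarg j) (abarg j) ≤ B := by
    intro j h
    obtain ⟨s, hs⟩ := hex_g j h
    have h1 : L (abarg j) (cbarg j) ≤ ∑ s, ∑ b, |Lvec (c s) b| := by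
      rw [hcbarg_tau j h, ← hg_tau s j hs]
      exact hLM _ (habarg_mem j h) s
    have h2 := hLdd_lb _ (habarg_mem j h)
    rw [hB]; linarith
  -- second inequality: f refines g
  have hfibIJ : ∀ j, HasSum (fun i : {i : I // π i = j} => nf i.1) (ng j) := by
    intro j
    have h := hasSum_sum (s := Finset.univ) (fun s (_ : s ∈ Finset.univ) => hrefine s j)
    have e : (fun i : {i : I // π i = j} => nf i.1)
        = fun i : {i : I // π i = j} => ∑ s, f s i.1 := funext fun i => hnf i.1
    rw [e, hng j]
    exact h
  have hcFG2 : ∀ i, 0 < nf i → cbarf i = cbarg (π i) := by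
    intro i h
    have hpos : 0 < ng (π i) :=
      lt_of_lt_of_le h (le_hasSum (hfibIJ (π i)) ⟨i, rfl⟩ (fun k _ => hnf0 k.1))
    rw [hcbarf_tau i h, hcbarg_tau _ hpos]
  have hbar2 : ∀ j, HasSum (fun i : {i : I // π i = j} => nf i.1 • abarf i.1)
      (ng j • abarg j) := by
    intro j
    have h := hasSum_sum (s := Finset.univ)
      (fun s (_ : s ∈ Finset.univ) => (hrefine s j).smul_const (act s))
    have e : (fun i : {i : I // π i = j} => nf i.1 • abarf i.1)
        = fun i : {i : I // π i = j} => ∑ s, f s i.1 • act s := funext fun i => hnfa i.1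
    rw [e, hnga j]
    exact h
  have key2 := key C Lvec L hL hproper π nf hnf0 hnfsum ng hfibIJ
    abarf cbarf abarg cbarg habarf_mem hcbarf_mem habarg_mem hcbarg_mem
    hcFG2 hbar2 B hBf
  -- first inequality: g refines the by-forecast binning
  set N : EuclideanSpace ℝ A → ℝ :=
    fun p => ((Finset.univ.filter (fun s => c s = p)).card : ℝ) with hN
  have hsum_ite : ∀ p, ∑ s, (if c s = p then (1:ℝ) else 0) = N p := by
    intro p
    rw [hN, Finset.sum_boole]
  have hfibJP : ∀ p, HasSum (fun j : {j : J // τ j = p} => ng j.1) (N p) := by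
    intro p
    have h := hasSum_sum (s := Finset.univ) (fun s (_ : s ∈ Finset.univ) => hrefine' s p)
    have e : (fun j : {j : J // τ j = p} => ng j.1)
        = fun j : {j : J // τ j = p} => ∑ s, g s j.1 := funext fun j => hng j.1
    rw [e, ← hsum_ite p]
    exact h
  have hbarJP : ∀ p, HasSum (fun j : {j : J // τ j = p} => ng j.1 • abarg j.1)
      (N p • abarc p) := by
    intro p
    have h := hasSum_sum (s := Finset.univ)
      (fun s (_ : s ∈ Finset.univ) => (hrefine' s p).smul_const (act s))
    have e3 : ∑ s, (if c s = p then (1:ℝ) else 0) • act s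
        = ∑ s ∈ Finset.univ.filter (fun s => c s = p), act s := by
      rw [Finset.sum_filter]
      exact Finset.sum_congr rfl fun s _ => by
        split <;> simp
    have e2 : ∑ s, (if c s = p then (1:ℝ) else 0) • act s = N p • abarc p := by
      rcases Nat.eq_zero_or_pos (Finset.univ.filter (fun s => c s = p)).card with h0 | h0
      · rw [e3, Finset.card_eq_zero.1 h0, Finset.sum_empty, hN]
        simp [Finset.card_eq_zero.1 h0]
      · rw [e3, habarc p h0, hN, smul_smul,
          mul_inv_cancel₀ (Nat.cast_ne_zero.2 h0.ne'), one_smul]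
    have e : (fun j : {j : J // τ j = p} => ng j.1 • abarg j.1)
        = fun j : {j : J // τ j = p} => ∑ s, g s j.1 • act s := funext fun j => hnga j.1
    rw [e, ← e2]
    exact h
  have habarc_mem : ∀ p, 0 < N p → abarc p ∈ C := by
    intro p hp
    have hcard : 0 < (Finset.univ.filter (fun s => c s = p)).card := by
      rw [hN] at hp; exact Nat.cast_pos.mp hp
    rw [habarc p hcard, hC]
    refine ⟨fun b => ?_, ?_⟩
    · rw [PiLp.smul_apply, smul_eq_mul, coordSum]
      refine mul_nonneg (by positivity) (Finset.sum_nonneg fun s _ => ?_)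
      have hm := hact_mem s; rw [hC] at hm; exact hm.1 b
    · calc ∑ b, ((((Finset.univ.filter (fun s => c s = p)).card : ℝ))⁻¹ •
            ∑ s ∈ Finset.univ.filter (fun s => c s = p), act s) b
          = ∑ b, (((Finset.univ.filter (fun s => c s = p)).card : ℝ))⁻¹ *
            ∑ s ∈ Finset.univ.filter (fun s => c s = p), act s b := by
            refine Finset.sum_congr rfl fun b _ => ?_
            rw [PiLp.smul_apply, smul_eq_mul, coordSum]
        _ = (((Finset.univ.filter (fun s => c s = p)).card : ℝ))⁻¹ *
            ∑ s ∈ Finset.univ.filter (fun s => c s = p), ∑ b, act s b := by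
            rw [← Finset.mul_sum, Finset.sum_comm]
        _ = (((Finset.univ.filter (fun s => c s = p)).card : ℝ))⁻¹ *
            ∑ _s ∈ Finset.univ.filter (fun s => c s = p), (1:ℝ) := by
            congr 1
            refine Finset.sum_congr rfl fun s _ => ?_
            have hm := hact_mem s; rw [hC] at hm; exact hm.2
        _ = 1 := by
            rw [Finset.sum_const, nsmul_eq_mul, mul_one,
              inv_mul_cancel₀ (Nat.cast_ne_zero.2 hcard.ne')]
  have hid_mem : ∀ p, 0 < N p → (id p : EuclideanSpace ℝ A) ∈ C := by
    intro p hp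
    have hcard : 0 < (Finset.univ.filter (fun s => c s = p)).card := by
      rw [hN] at hp; exact Nat.cast_pos.mp hp
    obtain ⟨s, hs⟩ := Finset.card_pos.1 hcard
    have := (Finset.mem_filter.1 hs).2
    simpa [← this] using hc s
  have hcFG1 : ∀ j, 0 < ng j → cbarg j = id (τ j) := fun j h => by
    rw [hcbarg_tau j h]; rfl
  have key1 := key C Lvec L hL hproper τ ng hng0 hngsum N hfibJP
    abarg cbarg abarc id habarg_mem hcbarg_mem habarc_mem hid_mem
    hcFG1 hbarJP B hBg
  simp only [id_eq] at key1
  -- identify the by-forecast score with the finite sum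
  have hfin : ∑' p, N p * (L (abarc p) p - L (abarc p) (abarc p))
      = ∑ s, (L (abarc (c s)) (c s) - L (abarc (c s)) (abarc (c s))) := by
    rw [tsum_eq_sum (s := Finset.univ.image c)
      (f := fun p => N p * (L (abarc p) p - L (abarc p) (abarc p))) ?_]
    · have hcomp := Finset.sum_comp (s := Finset.univ)
        (fun p => L (abarc p) p - L (abarc p) (abarc p)) c
      rw [hcomp]
      refine Finset.sum_congr rfl fun p _ => ?_
      rw [nsmul_eq_mul, hN]
    · intro p hp
      have h0 : (Finset.univ.filter (fun s => c s = p)).card = 0 := by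
        rw [Finset.card_eq_zero, Finset.filter_eq_empty_iff]
        intro s _ h
        exact hp (h ▸ Finset.mem_image_of_mem c (Finset.mem_univ s))
      rw [hN]
      simp [h0]
  constructor
  · refine mul_le_mul_of_nonneg_left ?_ hinv
    rw [← hfin]
    exact key1
  · exact mul_le_mul_of_nonneg_left key2 hinv
end

section
/- Let x₁,…,x_n ∈ C, let L be an M-Lipschitz proper scoring rule with divergence D, let x̄_j := (1/j)(x₁ + ⋯ + x_j) for 1 ≤ j ≤ n, and fix an arbitrary x̄₀ ∈ C. Define v_n := (1/n) Σ_{j=1}^n D(x_j, x̄_n) and ṽ_n := (1/n) Σ_{j=1}^n D(x_j, x̄_{j−1}). Then 0 ≤ ṽ_n − v_n ≤ 2M(ln n + 1)/n. -/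
open scoped BigOperators
open scoped RealInnerProductSpace

/-- for `x₁,…,x_n ∈ C` and an `M`-Lipschitz proper scoring rule
`L` with divergence `D`, with `x̄_j` the running averages (and `x̄₀ ∈ C`
arbitrary), `0 ≤ ṽ_n − v_n ≤ 2M(ln n + 1)/n`. -/
theorem stmt_10
    {A : Type*} [Fintype A] [Nonempty A]
    (C : Set (EuclideanSpace ℝ A))
    (hC : C = {c : EuclideanSpace ℝ A | (∀ a, 0 ≤ c a) ∧ ∑ a, c a = 1})
    (Lvec : EuclideanSpace ℝ A → EuclideanSpace ℝ A)
    (L : EuclideanSpace ℝ A → EuclideanSpace ℝ A → ℝ)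
    (hL : ∀ d c, L d c = ∑ a, d a * Lvec c a)
    (hproper : ∀ c ∈ C, ∀ d ∈ C, L d d ≤ L d c)
    (M : ℝ) (hM : 0 ≤ M)
    (hlip : ∀ c ∈ C, ∀ c' ∈ C, ‖Lvec c - Lvec c'‖ ≤ M * ‖c - c'‖)
    (n : ℕ) (hn : 1 ≤ n)
    (x : ℕ → EuclideanSpace ℝ A) (hx : ∀ j ∈ Finset.Icc 1 n, x j ∈ C)
    (xbar : ℕ → EuclideanSpace ℝ A)
    (hxbar0 : xbar 0 ∈ C)
    (hxbar : ∀ j, 1 ≤ j → j ≤ n → xbar j = ((j : ℝ))⁻¹ • ∑ k ∈ Finset.Icc 1 j, x k) :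
    0 ≤ (1 / (n : ℝ)) * ∑ j ∈ Finset.Icc 1 n, (L (x j) (xbar (j - 1)) - L (x j) (x j)) -
        (1 / (n : ℝ)) * ∑ j ∈ Finset.Icc 1 n, (L (x j) (xbar n) - L (x j) (x j)) ∧
    (1 / (n : ℝ)) * ∑ j ∈ Finset.Icc 1 n, (L (x j) (xbar (j - 1)) - L (x j) (x j)) -
        (1 / (n : ℝ)) * ∑ j ∈ Finset.Icc 1 n, (L (x j) (xbar n) - L (x j) (x j)) ≤
      2 * M * (Real.log n + 1) / n := by
  have hn0 : (0:ℝ) < (n:ℝ) := by exact_mod_cast hn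
  have hmemx : ∀ j, 1 ≤ j → j ≤ n → x j ∈ C := fun j h1 h2 =>
    hx j (Finset.mem_Icc.mpr ⟨h1, h2⟩)
  have hCprop : ∀ d ∈ C, (∀ a, 0 ≤ d a) ∧ ∑ a, d a = 1 := by
    intro d hd; rw [hC] at hd; exact hd
  -- membership of the running averages
  have hmem : ∀ m, m ≤ n → xbar m ∈ C := by
    intro m hmn
    rcases Nat.eq_zero_or_pos m with rfl | hm1
    · exact hxbar0
    · have hm0 : (0:ℝ) < (m:ℝ) := by exact_mod_cast hm1
      have hxk : ∀ k ∈ Finset.Icc 1 m, x k ∈ C := by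
        intro k hk
        obtain ⟨hk1, hk2⟩ := Finset.mem_Icc.mp hk
        exact hmemx k hk1 (le_trans hk2 hmn)
      have key : ∀ a, ((m:ℝ)⁻¹ • ∑ k ∈ Finset.Icc 1 m, x k) a
          = (m:ℝ)⁻¹ * ∑ k ∈ Finset.Icc 1 m, x k a := by
        intro a
        rw [PiLp.smul_apply, smul_eq_mul, WithLp.ofLp_sum, Finset.sum_apply]
      rw [hxbar m hm1 hmn, hC]
      constructor
      · intro a
        rw [key a]
        have : 0 ≤ ∑ k ∈ Finset.Icc 1 m, x k a :=
          Finset.sum_nonneg fun k hk => (hCprop _ (hxk k hk)).1 a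
        positivity
      · simp only [key]
        rw [← Finset.mul_sum, Finset.sum_comm]
        have : ∀ k ∈ Finset.Icc 1 m, ∑ a, x k a = 1 := fun k hk => (hCprop _ (hxk k hk)).2
        rw [Finset.sum_congr rfl this, Finset.sum_const, Nat.card_Icc]
        simp only [Nat.add_sub_cancel, nsmul_eq_mul, mul_one]
        field_simp
  -- norm bound on members of the simplex
  have hnorm1 : ∀ d ∈ C, ‖d‖ ≤ 1 := by
    intro d hd
    obtain ⟨h1, h2⟩ := hCprop d hd
    have hsq : ‖d‖^2 ≤ 1 := by
      rw [EuclideanSpace.norm_eq, Real.sq_sqrt (by positivity)]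
      calc ∑ a, ‖d a‖^2 = ∑ a, (d a)^2 := by simp [Real.norm_eq_abs, sq_abs]
        _ ≤ (∑ a, d a)^2 := Finset.sum_sq_le_sq_sum_of_nonneg (fun a _ => h1 a)
        _ = 1 := by rw [h2]; norm_num
    nlinarith [norm_nonneg d]
  have hd2 : ∀ u ∈ C, ∀ v ∈ C, ‖u - v‖ ≤ 2 := fun u hu v hv =>
    (norm_sub_le u v).trans (by linarith [hnorm1 u hu, hnorm1 v hv])
  -- Lipschitz/Cauchy-Schwarz bound on score differences
  have hdiff : ∀ d ∈ C, ∀ c ∈ C, ∀ c' ∈ C, L d c - L d c' ≤ M * ‖c - c'‖ := by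
    intro d hd c hc c' hc'
    have h1 : L d c - L d c' = ∑ a, d a * (Lvec c - Lvec c') a := by
      rw [hL, hL, ← Finset.sum_sub_distrib]
      refine Finset.sum_congr rfl fun a _ => ?_
      rw [PiLp.sub_apply]; ring
    have h2 : ∑ a, d a * (Lvec c - Lvec c') a ≤ ‖d‖ * ‖Lvec c - Lvec c'‖ := by
      have h : ⟪d, Lvec c - Lvec c'⟫ = ∑ a, d a * (Lvec c - Lvec c') a := by
        simp [PiLp.inner_apply, RCLike.inner_apply, conj_trivial]
        exact Finset.sum_congr rfl fun _ _ => mul_comm _ _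
      rw [← h]; exact real_inner_le_norm _ _
    calc L d c - L d c' ≤ ‖d‖ * ‖Lvec c - Lvec c'‖ := by rw [h1]; exact h2
      _ ≤ 1 * (M * ‖c - c'‖) :=
          mul_le_mul (hnorm1 d hd) (hlip c hc c' hc') (norm_nonneg _) zero_le_one
      _ = M * ‖c - c'‖ := one_mul _
  -- linearity in the first argument
  have hlin : ∀ m, 1 ≤ m → m ≤ n → ∀ c,
      ∑ j ∈ Finset.Icc 1 m, L (x j) c = (m:ℝ) * L (xbar m) c := by
    intro m h1 h2 c
    have hm0 : ((m:ℝ)) ≠ 0 := by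
      have : (0:ℝ) < (m:ℝ) := by exact_mod_cast h1
      exact ne_of_gt this
    calc ∑ j ∈ Finset.Icc 1 m, L (x j) c
        = ∑ a, (∑ j ∈ Finset.Icc 1 m, x j a) * Lvec c a := by
          simp only [hL]
          rw [Finset.sum_comm]
          exact Finset.sum_congr rfl fun a _ => (Finset.sum_mul _ _ _).symm
      _ = (m:ℝ) * L (xbar m) c := by
          rw [hL, hxbar m h1 h2, Finset.mul_sum]
          refine Finset.sum_congr rfl fun a _ => ?_
          rw [PiLp.smul_apply, smul_eq_mul, WithLp.ofLp_sum, Finset.sum_apply]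
          field_simp
  -- "be the leader" inequality
  have hBTL : ∀ m, 1 ≤ m → m ≤ n →
      ∑ j ∈ Finset.Icc 1 m, L (x j) (xbar j) ≤ ∑ j ∈ Finset.Icc 1 m, L (x j) (xbar m) := by
    intro m h1
    induction m, h1 using Nat.le_induction with
    | base => intro _; simp
    | succ m hm ih =>
      intro hsn
      have hmn : m ≤ n := le_trans (Nat.le_succ m) hsn
      rw [Finset.sum_Icc_succ_top (by omega), Finset.sum_Icc_succ_top (by omega)]
      have h2 := ih hmn
      have h3 : ∑ j ∈ Finset.Icc 1 m, L (x j) (xbar m)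
          ≤ ∑ j ∈ Finset.Icc 1 m, L (x j) (xbar (m+1)) := by
        rw [hlin m hm hmn, hlin m hm hmn]
        have hp := hproper (xbar (m+1)) (hmem _ hsn) (xbar m) (hmem _ hmn)
        have hm0 : (0:ℝ) ≤ (m:ℝ) := Nat.cast_nonneg m
        nlinarith
      linarith
  -- "follow the leader" lower bound
  have hFTL : ∀ m, 1 ≤ m → m ≤ n →
      ∑ j ∈ Finset.Icc 1 m, L (x j) (xbar m) ≤ ∑ j ∈ Finset.Icc 1 m, L (x j) (xbar (j-1)) := by
    intro m h1
    induction m, h1 using Nat.le_induction with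
    | base =>
      intro h1n
      simp only [Finset.Icc_self, Finset.sum_singleton]
      have hx1 : xbar 1 = x 1 := by
        rw [hxbar 1 le_rfl h1n]; simp
      rw [hx1]
      exact hproper (xbar 0) hxbar0 (x 1) (hmemx 1 le_rfl h1n)
    | succ m hm ih =>
      intro hsn
      have hmn : m ≤ n := le_trans (Nat.le_succ m) hsn
      have hcast : (0:ℝ) ≤ ((m+1 : ℕ):ℝ) := Nat.cast_nonneg _
      calc ∑ j ∈ Finset.Icc 1 (m+1), L (x j) (xbar (m+1))
          = ((m+1 : ℕ):ℝ) * L (xbar (m+1)) (xbar (m+1)) := hlin (m+1) (by omega) hsn _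
        _ ≤ ((m+1 : ℕ):ℝ) * L (xbar (m+1)) (xbar m) :=
            mul_le_mul_of_nonneg_left
              (hproper (xbar m) (hmem _ hmn) (xbar (m+1)) (hmem _ hsn)) hcast
        _ = ∑ j ∈ Finset.Icc 1 (m+1), L (x j) (xbar m) := (hlin (m+1) (by omega) hsn _).symm
        _ = (∑ j ∈ Finset.Icc 1 m, L (x j) (xbar m)) + L (x (m+1)) (xbar m) :=
            Finset.sum_Icc_succ_top (by omega) _
        _ ≤ (∑ j ∈ Finset.Icc 1 m, L (x j) (xbar (j-1))) + L (x (m+1)) (xbar ((m+1)-1)) := by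
            have := ih hmn
            simp only [Nat.add_sub_cancel]
            linarith
        _ = ∑ j ∈ Finset.Icc 1 (m+1), L (x j) (xbar (j-1)) :=
            (Finset.sum_Icc_succ_top (by omega) _).symm
  -- step size of the running average
  have hstepnorm : ∀ j, 1 ≤ j → j ≤ n → ‖xbar (j-1) - xbar j‖ ≤ 2 / (j:ℝ) := by
    intro j h1 h2
    rcases eq_or_lt_of_le h1 with h | h
    · -- j = 1
      rw [← h]
      norm_num
      exact hd2 _ hxbar0 _ (hmem 1 (by omega))
    · -- j ≥ 2
      obtain ⟨m, rfl⟩ : ∃ m, j = m + 1 := ⟨j-1, by omega⟩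
      have hm1 : 1 ≤ m := by omega
      have hm0 : ((m:ℝ)) ≠ 0 := by
        have : (0:ℝ) < (m:ℝ) := by exact_mod_cast hm1
        exact ne_of_gt this
      have hm10 : ((m:ℝ)+1) ≠ 0 := by positivity
      have hb : xbar m = (m:ℝ)⁻¹ • ∑ k ∈ Finset.Icc 1 m, x k := hxbar m hm1 (by omega)
      have heq : xbar m - xbar (m+1) = ((m:ℝ)+1)⁻¹ • (xbar m - x (m+1)) := by
        rw [hxbar (m+1) (by omega) h2, Finset.sum_Icc_succ_top (by omega), hb]
        push_cast
        match_scalars <;> field_simp <;> ring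
      have hnn : ‖xbar m - x (m+1)‖ ≤ 2 :=
        hd2 _ (hmem m (by omega)) _ (hmemx (m+1) (by omega) h2)
      have : ‖xbar m - xbar (m+1)‖ = ((m:ℝ)+1)⁻¹ * ‖xbar m - x (m+1)‖ := by
        rw [heq, norm_smul, Real.norm_eq_abs, abs_of_pos (by positivity)]
      simp only [Nat.add_sub_cancel]
      rw [this]
      have h21 : ((m:ℝ)+1)⁻¹ * ‖xbar m - x (m+1)‖ ≤ ((m:ℝ)+1)⁻¹ * 2 :=
        mul_le_mul_of_nonneg_left hnn (by positivity)
      calc ((m:ℝ)+1)⁻¹ * ‖xbar m - x (m+1)‖ ≤ ((m:ℝ)+1)⁻¹ * 2 := h21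
        _ = 2 / ((m+1 : ℕ):ℝ) := by push_cast; ring
  -- harmonic sum bound
  have hharm : ∑ j ∈ Finset.Icc 1 n, (j:ℝ)⁻¹ ≤ Real.log n + 1 := by
    have h := harmonic_le_one_add_log n
    have he : ((harmonic n : ℚ) : ℝ) = ∑ j ∈ Finset.Icc 1 n, (j:ℝ)⁻¹ := by
      rw [harmonic]
      push_cast
      rw [← Finset.Ico_add_one_right_eq_Icc, Finset.sum_Ico_eq_sum_range]
      simp [add_comm]
    rw [← he]; linarith
  -- per-term bound
  have hterm : ∀ j ∈ Finset.Icc 1 n,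
      L (x j) (xbar (j-1)) - L (x j) (xbar j) ≤ M * (2 / (j:ℝ)) := by
    intro j hj
    obtain ⟨h1, h2⟩ := Finset.mem_Icc.mp hj
    calc L (x j) (xbar (j-1)) - L (x j) (xbar j) ≤ M * ‖xbar (j-1) - xbar j‖ :=
          hdiff (x j) (hmemx j h1 h2) _ (hmem _ (by omega)) _ (hmem _ h2)
      _ ≤ M * (2 / (j:ℝ)) := mul_le_mul_of_nonneg_left (hstepnorm j h1 h2) hM
  -- assemble
  set T1 := ∑ j ∈ Finset.Icc 1 n, L (x j) (xbar (j-1)) with hT1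
  set T2 := ∑ j ∈ Finset.Icc 1 n, L (x j) (xbar n) with hT2
  set T3 := ∑ j ∈ Finset.Icc 1 n, L (x j) (xbar j) with hT3
  set T0 := ∑ j ∈ Finset.Icc 1 n, L (x j) (x j) with hT0
  have hT12 : T2 ≤ T1 := hFTL n hn le_rfl
  have hT32 : T3 ≤ T2 := hBTL n hn le_rfl
  have hsum1 : T1 - T3 ≤ 2 * M * (Real.log n + 1) := by
    have : T1 - T3 = ∑ j ∈ Finset.Icc 1 n, (L (x j) (xbar (j-1)) - L (x j) (xbar j)) := by
      rw [hT1, hT3, ← Finset.sum_sub_distrib]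
    rw [this]
    calc ∑ j ∈ Finset.Icc 1 n, (L (x j) (xbar (j-1)) - L (x j) (xbar j))
        ≤ ∑ j ∈ Finset.Icc 1 n, M * (2 / (j:ℝ)) := Finset.sum_le_sum hterm
      _ = 2 * M * ∑ j ∈ Finset.Icc 1 n, (j:ℝ)⁻¹ := by
          rw [Finset.mul_sum]
          exact Finset.sum_congr rfl fun j _ => by ring
      _ ≤ 2 * M * (Real.log n + 1) := mul_le_mul_of_nonneg_left hharm (by positivity)
  have hE1 : ∑ j ∈ Finset.Icc 1 n, (L (x j) (xbar (j - 1)) - L (x j) (x j)) = T1 - T0 := by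
    rw [hT1, hT0, ← Finset.sum_sub_distrib]
  have hE2 : ∑ j ∈ Finset.Icc 1 n, (L (x j) (xbar n) - L (x j) (x j)) = T2 - T0 := by
    rw [hT2, hT0, ← Finset.sum_sub_distrib]
  rw [hE1, hE2]
  constructor
  · have h0 : (1 / (n:ℝ)) * (T1 - T0) - (1 / (n:ℝ)) * (T2 - T0)
        = (1 / (n:ℝ)) * (T1 - T2) := by ring
    rw [h0]
    exact mul_nonneg (by positivity) (by linarith)
  · have h0 : (1 / (n:ℝ)) * (T1 - T0) - (1 / (n:ℝ)) * (T2 - T0)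
        = (T1 - T2) / (n:ℝ) := by ring
    rw [h0]
    have h : T1 - T2 ≤ 2 * M * (Real.log n + 1) := by linarith
    gcongr
end

section
/- Online vs. offline refinement: let L be an M-Lipschitz proper scoring rule and i₁,…,i_t a binning sequence. Define the online L-refinement score R̃^L_t(i) := (1/t) Σ_{s=1}^t D(a_s, ā_{s−1}(i_s)), where ā_{s−1}(i) is the average of a_r over those r ≤ s−1 with i_r = i (and is an arbitrary fixed point of C if there is no such r). Let N_t := |{i_s : s ≤ t}| be the number of distinct bins used up to time t. Then 0 ≤ R̃^L_t(i) − R^L_t(i) ≤ 2M (N_t/t)(ln(t/N_t) + 1). -/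
open scoped BigOperators

set_option maxHeartbeats 1000000

private lemma aux1 (x y v : ℝ) (hx : x ≠ 0) (hy : y ≠ 0) : x / y * (v * y / x) = v := by
  field_simp

private lemma harm_le (m : ℕ) : ∑ k ∈ Finset.Icc 1 m, ((k:ℝ))⁻¹ ≤ Real.log m + 1 := by
  induction m with
  | zero => simp
  | succ m ih =>
    rcases Nat.eq_zero_or_pos m with hm | hm
    · subst hm; simp
    rw [Finset.sum_Icc_succ_top (by omega)]
    have h1 : Real.log m + ((m+1:ℕ):ℝ)⁻¹ ≤ Real.log (m+1:ℕ) := by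
      have hx : (0:ℝ) < (m:ℝ) / ((m+1:ℕ):ℝ) := by positivity
      have := Real.log_le_sub_one_of_pos hx
      rw [Real.log_div (by positivity) (by positivity)] at this
      have hm1 : (0:ℝ) < ((m+1:ℕ):ℝ) := by positivity
      have : Real.log m - Real.log (m+1:ℕ) ≤ (m:ℝ)/((m+1:ℕ):ℝ) - 1 := this
      have heq : (m:ℝ)/((m+1:ℕ):ℝ) - 1 = -((m+1:ℕ):ℝ)⁻¹ := by
        rw [div_sub_one (by positivity)]
        push_cast
        rw [show ((m:ℝ) - (m + 1)) = -1 by ring, show (-1:ℝ)/((m:ℝ)+1) = -(1/((m:ℝ)+1)) by ring, one_div]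
      linarith [heq ▸ this]
    linarith


/-- Online vs. offline refinement: for an `M`-Lipschitz proper
scoring rule `L` and a binning sequence `i₁,…,i_t`,
`0 ≤ R̃^L_t(i) − R^L_t(i) ≤ 2M (N_t/t)(ln(t/N_t) + 1)`, where `N_t` is the
number of distinct bins used up to time `t`. -/
theorem stmt_11
    {A : Type*} [Fintype A] [Nonempty A] [DecidableEq A]
    {I : Type*} [DecidableEq I]
    (C : Set (EuclideanSpace ℝ A))
    (hC : C = {c : EuclideanSpace ℝ A | (∀ a, 0 ≤ c a) ∧ ∑ a, c a = 1})
    (Lvec : EuclideanSpace ℝ A → EuclideanSpace ℝ A)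
    (L : EuclideanSpace ℝ A → EuclideanSpace ℝ A → ℝ)
    (hL : ∀ d c, L d c = ∑ a, d a * Lvec c a)
    (hproper : ∀ c ∈ C, ∀ d ∈ C, L d d ≤ L d c)
    (M : ℝ) (hM : 0 ≤ M)
    (hlip : ∀ c ∈ C, ∀ c' ∈ C, ‖Lvec c - Lvec c'‖ ≤ M * ‖c - c'‖)
    (t : ℕ) (ht : 1 ≤ t)
    (a : ℕ → A)
    (act : ℕ → EuclideanSpace ℝ A)
    (hact : ∀ s, act s = EuclideanSpace.single (a s) (1 : ℝ))
    (bin : ℕ → I)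
    -- `n s i` is the number of periods `r ≤ s` in bin `i`
    (n : ℕ → I → ℕ)
    (hn : ∀ s i, n s i = ((Finset.Icc 1 s).filter (fun r => bin r = i)).card)
    -- `abar s i` is the average action in bin `i` over the periods `r ≤ s`,
    -- and an arbitrary fixed point `z ∈ C` if the bin is empty
    (z : EuclideanSpace ℝ A) (hz : z ∈ C)
    (abar : ℕ → I → EuclideanSpace ℝ A)
    (habar : ∀ s i, 0 < n s i →
      abar s i = ((n s i : ℝ))⁻¹ • ∑ r ∈ (Finset.Icc 1 s).filter (fun r => bin r = i), act r)
    (habar0 : ∀ s i, n s i = 0 → abar s i = z) :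
    0 ≤ (1 / (t : ℝ)) * ∑ s ∈ Finset.Icc 1 t,
          (L (act s) (abar (s - 1) (bin s)) - L (act s) (act s)) -
        (1 / (t : ℝ)) * ∑ s ∈ Finset.Icc 1 t,
          (L (act s) (abar t (bin s)) - L (act s) (act s)) ∧
    (1 / (t : ℝ)) * ∑ s ∈ Finset.Icc 1 t,
          (L (act s) (abar (s - 1) (bin s)) - L (act s) (act s)) -
        (1 / (t : ℝ)) * ∑ s ∈ Finset.Icc 1 t,
          (L (act s) (abar t (bin s)) - L (act s) (act s)) ≤
      2 * M * ((((Finset.Icc 1 t).image bin).card : ℝ) / t) *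
        (Real.log ((t : ℝ) / (((Finset.Icc 1 t).image bin).card : ℝ)) + 1) := by
  set S : ℕ → I → Finset ℕ := fun s i => (Finset.Icc 1 s).filter (fun r => bin r = i) with hS
  -- membership in C
  have hCmem : ∀ c : EuclideanSpace ℝ A, c ∈ C ↔ (∀ a, 0 ≤ c a) ∧ ∑ a, c a = 1 := by
    intro c; rw [hC]; exact Iff.rfl
  have hactnn : ∀ r b, 0 ≤ act r b := by
    intro r b; rw [hact]
    rw [EuclideanSpace.single_apply]
    split <;> norm_num
  have hactsum : ∀ r, ∑ b, act r b = 1 := by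
    intro r
    simp [hact, EuclideanSpace.single_apply]
  have hactC : ∀ r, act r ∈ C := fun r => (hCmem _).2 ⟨hactnn r, hactsum r⟩
  -- n s i = 0 ↔ S empty
  have hSempty : ∀ s i, n s i = 0 → S s i = ∅ := by
    intro s i h; rw [hn] at h; exact Finset.card_eq_zero.mp h
  -- smul identity
  have hsmul : ∀ s i, (n s i : ℝ) • abar s i = ∑ r ∈ S s i, act r := by
    intro s i
    rcases Nat.eq_zero_or_pos (n s i) with h | h
    · rw [h, hSempty s i h]; simp
    · rw [habar s i h, smul_inv_smul₀ (by positivity)]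
  -- abar ∈ C
  have habarC : ∀ s i, abar s i ∈ C := by
    intro s i
    rcases Nat.eq_zero_or_pos (n s i) with h | h
    · rw [habar0 s i h]; exact hz
    rw [hCmem]
    have hpos : (0:ℝ) < (n s i : ℝ) := by positivity
    have happ : ∀ b, abar s i b = (n s i : ℝ)⁻¹ * ∑ r ∈ S s i, act r b := by
      intro b
      rw [habar s i h, PiLp.smul_apply, smul_eq_mul, WithLp.ofLp_sum, Finset.sum_apply]
    constructor
    · intro b; rw [happ b]
      have : 0 ≤ ∑ r ∈ S s i, act r b := Finset.sum_nonneg fun r _ => hactnn r b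
      positivity
    · rw [Finset.sum_congr rfl fun b _ => happ b, ← Finset.mul_sum, Finset.sum_comm]
      have : ∀ r ∈ S s i, ∑ b, act r b = 1 := fun r _ => hactsum r
      rw [Finset.sum_congr rfl this]
      have hcard : (S s i).card = n s i := (hn s i).symm
      rw [Finset.sum_const, hcard]
      simp
      rw [inv_mul_cancel₀ (by positivity)]
  -- norms
  have hnorm1 : ∀ c ∈ C, ‖c‖ ≤ 1 := by
    intro c hc
    rw [hCmem] at hc
    rw [EuclideanSpace.norm_eq]
    have h2 : ∑ a, c a ^ 2 ≤ 1 := by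
      calc ∑ a, c a ^ 2 ≤ ∑ a, c a := by
            apply Finset.sum_le_sum
            intro b _
            nlinarith [hc.1 b, Finset.single_le_sum (f := fun a => c a) (fun a _ => hc.1 a)
              (Finset.mem_univ b), hc.2]
        _ = 1 := hc.2
    calc Real.sqrt (∑ a, ‖c a‖^2) = Real.sqrt (∑ a, c a ^2) := by
          congr 1; exact Finset.sum_congr rfl fun b _ => by rw [Real.norm_eq_abs, sq_abs]
      _ ≤ Real.sqrt 1 := Real.sqrt_le_sqrt h2
      _ = 1 := Real.sqrt_one
  -- linearity: grouping
  have hgroup : ∀ s i c, (n s i : ℝ) * L (abar s i) c = ∑ r ∈ S s i, L (act r) c := by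
    intro s i c
    have : (n s i : ℝ) * L (abar s i) c = ∑ b, ((n s i : ℝ) • abar s i) b * Lvec c b := by
      rw [hL, Finset.mul_sum]
      exact Finset.sum_congr rfl fun b _ => by rw [PiLp.smul_apply, smul_eq_mul]; ring
    rw [this]
    have : ∀ b, ((n s i : ℝ) • abar s i) b = ∑ r ∈ S s i, act r b := by
      intro b; rw [hsmul s i, WithLp.ofLp_sum, Finset.sum_apply]
    rw [Finset.sum_congr rfl fun b _ => by rw [this b]]
    simp_rw [Finset.sum_mul]
    rw [Finset.sum_comm]
    exact Finset.sum_congr rfl fun r _ => (hL _ _).symm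
  -- Lipschitz difference bound
  have hLip' : ∀ d c c', ‖d‖ ≤ 1 → c ∈ C → c' ∈ C → L d c - L d c' ≤ M * ‖c - c'‖ := by
    intro d c c' hd hc hc'
    have heq : L d c - L d c' = (inner ℝ d (Lvec c - Lvec c') : ℝ) := by
      rw [PiLp.inner_apply, hL, hL, ← Finset.sum_sub_distrib]
      refine Finset.sum_congr rfl fun b _ => ?_
      rw [PiLp.sub_apply]
      simp
      ring
    rw [heq]
    calc (inner ℝ d (Lvec c - Lvec c') : ℝ) ≤ ‖d‖ * ‖Lvec c - Lvec c'‖ := real_inner_le_norm _ _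
      _ ≤ 1 * (M * ‖c - c'‖) := by
          apply mul_le_mul hd (hlip c hc c' hc') (norm_nonneg _) zero_le_one
      _ = M * ‖c - c'‖ := one_mul _
  -- successor relations
  have hIccsucc : ∀ s : ℕ, Finset.Icc 1 (s+1) = insert (s+1) (Finset.Icc 1 s) := by
    intro s
    rw [← Finset.insert_Icc_right_eq_Icc_add_one (by omega)]
  have hnotmem : ∀ s i, (s+1) ∉ S s i := by
    intro s i hmem
    have := (Finset.mem_filter.mp hmem).1
    have := (Finset.mem_Icc.mp this).2
    omega
  have hSsucc_eq : ∀ s i, bin (s+1) = i → S (s+1) i = insert (s+1) (S s i) := by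
    intro s i hb
    show Finset.filter _ _ = _
    rw [hIccsucc, Finset.filter_insert, if_pos hb]
  have hSsucc_ne : ∀ s i, bin (s+1) ≠ i → S (s+1) i = S s i := by
    intro s i hb
    show Finset.filter _ _ = _
    rw [hIccsucc, Finset.filter_insert, if_neg hb]
  have hn_eq : ∀ s i, bin (s+1) = i → n (s+1) i = n s i + 1 := by
    intro s i hb
    rw [hn, hn, show Finset.filter (fun r => bin r = i) (Finset.Icc 1 (s+1)) = insert (s+1) (S s i)
      from hSsucc_eq s i hb, Finset.card_insert_of_notMem (hnotmem s i)]
  have hn_ne : ∀ s i, bin (s+1) ≠ i → n (s+1) i = n s i := by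
    intro s i hb
    rw [hn, hn, show Finset.filter (fun r => bin r = i) (Finset.Icc 1 (s+1)) = S s i
      from hSsucc_ne s i hb]
  have habar_ne : ∀ s i, bin (s+1) ≠ i → abar (s+1) i = abar s i := by
    intro s i hb
    rcases Nat.eq_zero_or_pos (n s i) with h | h
    · rw [habar0 s i h, habar0 (s+1) i (by rw [hn_ne s i hb]; exact h)]
    · rw [habar s i h, habar (s+1) i (by rw [hn_ne s i hb]; exact h), hn_ne s i hb,
        show Finset.filter (fun r => bin r = i) (Finset.Icc 1 (s+1)) = S s i from hSsucc_ne s i hb]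
  have hrec : ∀ s i, bin (s+1) = i →
      (n (s+1) i : ℝ) • abar (s+1) i = (n s i : ℝ) • abar s i + act (s+1) := by
    intro s i hb
    rw [hsmul, hsmul, hSsucc_eq s i hb, Finset.sum_insert (hnotmem s i), add_comm]
  have hsplit : ∀ s i c, bin (s+1) = i →
      (n (s+1) i : ℝ) * L (abar (s+1) i) c = (n s i : ℝ) * L (abar s i) c + L (act (s+1)) c := by
    intro s i c hb
    rw [hgroup, hgroup, hSsucc_eq s i hb, Finset.sum_insert (hnotmem s i), add_comm]
  have hdiff : ∀ s i, bin (s+1) = i → ‖abar (s+1) i - abar s i‖ ≤ 2 / (n (s+1) i : ℝ) := by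
    intro s i hb
    have hne : ((n (s+1) i : ℝ)) ≠ 0 := by rw [hn_eq s i hb]; positivity
    have hp : (0:ℝ) < (n (s+1) i : ℝ) := by rw [hn_eq s i hb]; positivity
    have h3 : (n (s+1) i : ℝ) • (abar (s+1) i - abar s i) = act (s+1) - abar s i := by
      rw [smul_sub, hrec s i hb, hn_eq s i hb]
      push_cast
      rw [add_smul, one_smul]
      abel
    have h1 : abar (s+1) i - abar s i = ((n (s+1) i : ℝ))⁻¹ • (act (s+1) - abar s i) := by
      rw [← h3, inv_smul_smul₀ hne]
    rw [h1, norm_smul, norm_inv, Real.norm_eq_abs, abs_of_pos hp]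
    have hb2 : ‖act (s+1) - abar s i‖ ≤ 2 := by
      calc ‖act (s+1) - abar s i‖ ≤ ‖act (s+1)‖ + ‖abar s i‖ := norm_sub_le _ _
        _ ≤ 1 + 1 := add_le_add (hnorm1 _ (hactC _)) (hnorm1 _ (habarC _ _))
        _ = 2 := by norm_num
    rw [div_eq_inv_mul]
    exact mul_le_mul_of_nonneg_left hb2 (by positivity)
  have hS0 : ∀ i, S 0 i = ∅ := by
    intro i
    show Finset.filter _ _ = _
    simp
  have hn0 : ∀ i, n 0 i = 0 := by
    intro i
    rw [hn, show Finset.filter (fun r => bin r = i) (Finset.Icc 1 0) = ∅ from hS0 i]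
    simp
  -- lower bound induction
  have hlow : ∀ s i, (n s i : ℝ) * L (abar s i) (abar s i) ≤
      ∑ r ∈ S s i, L (act r) (abar (r-1) i) := by
    intro s i
    induction s with
    | zero => rw [hS0 i, hn0 i]; simp
    | succ s ih =>
      by_cases hb : bin (s+1) = i
      · rw [hSsucc_eq s i hb, Finset.sum_insert (hnotmem s i)]
        simp only [Nat.add_sub_cancel]
        have h1 : (n (s+1) i : ℝ) * L (abar (s+1) i) (abar (s+1) i) ≤
            (n (s+1) i : ℝ) * L (abar (s+1) i) (abar s i) :=
          mul_le_mul_of_nonneg_left (hproper _ (habarC s i) _ (habarC (s+1) i))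
            (by positivity)
        have h2 := hsplit s i (abar s i) hb
        linarith
      · rw [hSsucc_ne s i hb, hn_ne s i hb, habar_ne s i hb]
        exact ih
  -- be-the-leader induction
  have hbtl : ∀ s i, ∑ r ∈ S s i, L (act r) (abar r i) ≤
      (n s i : ℝ) * L (abar s i) (abar s i) := by
    intro s i
    induction s with
    | zero => rw [hS0 i, hn0 i]; simp
    | succ s ih =>
      by_cases hb : bin (s+1) = i
      · rw [hSsucc_eq s i hb, Finset.sum_insert (hnotmem s i)]
        have h1 : (n s i : ℝ) * L (abar s i) (abar s i) ≤
            (n s i : ℝ) * L (abar s i) (abar (s+1) i) :=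
          mul_le_mul_of_nonneg_left (hproper _ (habarC (s+1) i) _ (habarC s i))
            (by positivity)
        have h2 := hsplit s i (abar (s+1) i) hb
        linarith
      · rw [hSsucc_ne s i hb, hn_ne s i hb, habar_ne s i hb]
        exact ih
  -- per-step bound
  have hstep : ∀ s i, bin (s+1) = i →
      L (act (s+1)) (abar s i) - L (act (s+1)) (abar (s+1) i) ≤ 2 * M * ((n (s+1) i : ℝ))⁻¹ := by
    intro s i hb
    calc L (act (s+1)) (abar s i) - L (act (s+1)) (abar (s+1) i)
        ≤ M * ‖abar s i - abar (s+1) i‖ :=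
          hLip' _ _ _ (hnorm1 _ (hactC _)) (habarC _ _) (habarC _ _)
      _ = M * ‖abar (s+1) i - abar s i‖ := by rw [norm_sub_rev]
      _ ≤ M * (2 / (n (s+1) i : ℝ)) := mul_le_mul_of_nonneg_left (hdiff s i hb) hM
      _ = 2 * M * ((n (s+1) i : ℝ))⁻¹ := by rw [div_eq_inv_mul]; ring
  -- membership facts about S t i
  have hmemS : ∀ r s i, r ∈ S s i ↔ (1 ≤ r ∧ r ≤ s ∧ bin r = i) := by
    intro r s i
    show r ∈ Finset.filter _ _ ↔ _
    rw [Finset.mem_filter, Finset.mem_Icc]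
    tauto
  have hSsubset : ∀ s s' i, s ≤ s' → S s i ⊆ S s' i := by
    intro s s' i hss r hr
    rw [hmemS] at hr ⊢
    exact ⟨hr.1, le_trans hr.2.1 hss, hr.2.2⟩
  have hnpos : ∀ r i, bin r = i → 1 ≤ r → 0 < n r i := by
    intro r i hb hr
    rw [hn]
    exact Finset.card_pos.mpr ⟨r, (hmemS r r i).mpr ⟨hr, le_refl r, hb⟩⟩
  have hnmono : ∀ r r' i, r ≤ r' → n r i ≤ n r' i := by
    intro r r' i h
    rw [hn, hn]
    exact Finset.card_le_card (hSsubset r r' i h)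
  have hninj : ∀ i, ∀ r ∈ S t i, ∀ r' ∈ S t i, n r i = n r' i → r = r' := by
    intro i r hr r' hr' hnn
    by_contra hne
    wlog hlt : r < r' generalizing r r'
    · exact this r' hr' r hr hnn.symm (Ne.symm hne) (by omega)
    have hss : S r i ⊂ S r' i := by
      refine ⟨hSsubset r r' i (le_of_lt hlt), fun hsub => ?_⟩
      have h1 : r' ∈ S r' i := by
        rw [hmemS] at hr' ⊢
        exact ⟨hr'.1, le_refl r', hr'.2.2⟩
      have h2 := hsub h1
      rw [hmemS] at h2
      omega
    have := Finset.card_lt_card hss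
    rw [← hn, ← hn] at this
    omega
  -- sum of inverse counts is at most the harmonic sum
  have hsum_inv : ∀ i, ∑ r ∈ S t i, ((n r i : ℝ))⁻¹ ≤ ∑ k ∈ Finset.Icc 1 (n t i), (k:ℝ)⁻¹ := by
    intro i
    have himg : ∑ r ∈ S t i, ((n r i : ℝ))⁻¹ = ∑ k ∈ (S t i).image (fun r => n r i), (k:ℝ)⁻¹ :=
      (Finset.sum_image (f := fun k : ℕ => ((k:ℝ))⁻¹) (g := fun r => n r i) (hninj i)).symm
    rw [himg]
    apply Finset.sum_le_sum_of_subset_of_nonneg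
    · intro k hk
      obtain ⟨r, hr, rfl⟩ := Finset.mem_image.mp hk
      rw [Finset.mem_Icc]
      rw [hmemS] at hr
      exact ⟨hnpos r i hr.2.2 hr.1, hnmono r t i hr.2.1⟩
    · intro k _ _
      positivity
  -- per-fiber upper bound
  have hfiber_up : ∀ i, ∑ r ∈ S t i, (L (act r) (abar (r-1) i) - L (act r) (abar t i)) ≤
      2 * M * ∑ k ∈ Finset.Icc 1 (n t i), (k:ℝ)⁻¹ := by
    intro i
    have h1 : ∑ r ∈ S t i, (L (act r) (abar (r-1) i) - L (act r) (abar t i)) =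
        ∑ r ∈ S t i, L (act r) (abar (r-1) i) - (n t i : ℝ) * L (abar t i) (abar t i) := by
      rw [Finset.sum_sub_distrib, hgroup t i (abar t i)]
    rw [h1]
    have h2 : ∑ r ∈ S t i, L (act r) (abar (r-1) i) ≤
        ∑ r ∈ S t i, (L (act r) (abar r i) + 2 * M * ((n r i : ℝ))⁻¹) := by
      apply Finset.sum_le_sum
      intro r hr
      rw [hmemS] at hr
      obtain ⟨u, rfl⟩ : ∃ u, r = u + 1 := ⟨r - 1, by omega⟩
      simp only [Nat.add_sub_cancel]
      linarith [hstep u i hr.2.2]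
    have h3 := hbtl t i
    have h4 : ∑ r ∈ S t i, (L (act r) (abar r i) + 2 * M * ((n r i : ℝ))⁻¹) =
        ∑ r ∈ S t i, L (act r) (abar r i) + 2 * M * ∑ r ∈ S t i, ((n r i : ℝ))⁻¹ := by
      rw [Finset.sum_add_distrib, Finset.mul_sum]
    have h5 := hsum_inv i
    nlinarith [hM]
  -- per-fiber lower bound
  have hfiber_low : ∀ i, 0 ≤ ∑ r ∈ S t i, (L (act r) (abar (r-1) i) - L (act r) (abar t i)) := by
    intro i
    rw [Finset.sum_sub_distrib, ← hgroup t i (abar t i)]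
    have h1 := hlow t i
    linarith
  -- fiberwise decomposition
  have hmapsto : ∀ s ∈ Finset.Icc 1 t, bin s ∈ (Finset.Icc 1 t).image bin :=
    fun s hs => Finset.mem_image_of_mem bin hs
  have hfib : ∀ f : ℕ → ℝ, ∑ s ∈ Finset.Icc 1 t, f s =
      ∑ i ∈ (Finset.Icc 1 t).image bin, ∑ r ∈ S t i, f r :=
    fun f => (Finset.sum_fiberwise_of_maps_to hmapsto f).symm
  have hD : ∑ s ∈ Finset.Icc 1 t, (L (act s) (abar (s-1) (bin s)) - L (act s) (abar t (bin s))) =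
      ∑ i ∈ (Finset.Icc 1 t).image bin, ∑ r ∈ S t i,
        (L (act r) (abar (r-1) i) - L (act r) (abar t i)) := by
    rw [hfib]
    refine Finset.sum_congr rfl fun i _ => Finset.sum_congr rfl fun r hr => ?_
    rw [((hmemS r t i).mp hr).2.2]
  have hDlow : 0 ≤ ∑ s ∈ Finset.Icc 1 t,
      (L (act s) (abar (s-1) (bin s)) - L (act s) (abar t (bin s))) := by
    rw [hD]
    exact Finset.sum_nonneg fun i _ => hfiber_low i
  have hN1 : 1 ≤ ((Finset.Icc 1 t).image bin).card :=
    Finset.card_pos.mpr ⟨bin 1, Finset.mem_image_of_mem bin (Finset.mem_Icc.mpr ⟨le_refl 1, ht⟩)⟩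
  have htpos : (0:ℝ) < (t:ℝ) := by exact_mod_cast Nat.lt_of_lt_of_le Nat.zero_lt_one ht
  have hNpos : (0:ℝ) < (((Finset.Icc 1 t).image bin).card : ℝ) := by exact_mod_cast hN1
  have hsum_m : ∑ i ∈ (Finset.Icc 1 t).image bin, n t i = t := by
    have h := Finset.card_eq_sum_card_fiberwise hmapsto
    rw [Nat.card_Icc] at h
    norm_num at h
    rw [Finset.sum_congr rfl fun i (_ : i ∈ (Finset.Icc 1 t).image bin) => hn t i]
    exact h.symm
  have hcast : ∑ i ∈ (Finset.Icc 1 t).image bin, (n t i : ℝ) = (t : ℝ) := by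
    rw [← Nat.cast_sum, hsum_m]
  have hntpos : ∀ i ∈ (Finset.Icc 1 t).image bin, 0 < n t i := by
    intro i hi
    obtain ⟨s0, hs0, rfl⟩ := Finset.mem_image.mp hi
    rw [Finset.mem_Icc] at hs0
    exact Nat.lt_of_lt_of_le (hnpos s0 (bin s0) rfl hs0.1) (hnmono s0 t (bin s0) hs0.2)
  set NN : ℝ := (((Finset.Icc 1 t).image bin).card : ℝ) with hNN
  have hlogsum : ∑ i ∈ (Finset.Icc 1 t).image bin, (Real.log (n t i) + 1) ≤
      NN * (Real.log ((t:ℝ)/NN) + 1) := by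
    have hper : ∀ i ∈ (Finset.Icc 1 t).image bin,
        Real.log (n t i) ≤ Real.log ((t:ℝ)/NN) + ((n t i : ℝ) * NN / t - 1) := by
      intro i hi
      have hm : (0:ℝ) < (n t i : ℝ) := by exact_mod_cast hntpos i hi
      have hq : (0:ℝ) < (n t i : ℝ) * NN / t := div_pos (mul_pos hm hNpos) htpos
      have heq : Real.log (n t i) = Real.log ((t:ℝ)/NN) + Real.log ((n t i : ℝ) * NN / t) := by
        rw [← Real.log_mul (div_pos htpos hNpos).ne' hq.ne']
        exact congrArg Real.log (aux1 (t:ℝ) NN ((n t i : ℝ)) htpos.ne' hNpos.ne').symm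
      rw [heq]
      have := Real.log_le_sub_one_of_pos hq
      linarith
    have hsum := Finset.sum_le_sum hper
    rw [Finset.sum_add_distrib, Finset.sum_const, nsmul_eq_mul] at hsum
    have hsum2 : ∑ i ∈ (Finset.Icc 1 t).image bin, ((n t i : ℝ) * NN / t - 1) = 0 := by
      rw [Finset.sum_sub_distrib, Finset.sum_const, nsmul_eq_mul, mul_one]
      have : ∑ i ∈ (Finset.Icc 1 t).image bin, (n t i : ℝ) * NN / t =
          (∑ i ∈ (Finset.Icc 1 t).image bin, (n t i : ℝ)) * NN / t := by
        rw [Finset.sum_mul, Finset.sum_div]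
      rw [this, hcast, mul_comm, mul_div_assoc, div_self htpos.ne', mul_one, sub_self]

    rw [Finset.sum_add_distrib, Finset.sum_const, nsmul_eq_mul]
    have h5 : ∑ i ∈ (Finset.Icc 1 t).image bin, Real.log (n t i) ≤ NN * Real.log ((t:ℝ)/NN) := by
      linarith
    linarith
  have hDup : ∑ s ∈ Finset.Icc 1 t,
      (L (act s) (abar (s-1) (bin s)) - L (act s) (abar t (bin s))) ≤
      2 * M * NN * (Real.log ((t:ℝ)/NN) + 1) := by
    rw [hD]
    calc ∑ i ∈ (Finset.Icc 1 t).image bin, ∑ r ∈ S t i,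
          (L (act r) (abar (r-1) i) - L (act r) (abar t i))
        ≤ ∑ i ∈ (Finset.Icc 1 t).image bin, 2 * M * (Real.log (n t i) + 1) := by
          apply Finset.sum_le_sum
          intro i _
          calc ∑ r ∈ S t i, (L (act r) (abar (r-1) i) - L (act r) (abar t i))
              ≤ 2 * M * ∑ k ∈ Finset.Icc 1 (n t i), (k:ℝ)⁻¹ := hfiber_up i
            _ ≤ 2 * M * (Real.log (n t i) + 1) :=
                mul_le_mul_of_nonneg_left (harm_le _) (by linarith)
      _ = 2 * M * ∑ i ∈ (Finset.Icc 1 t).image bin, (Real.log (n t i) + 1) :=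
          (Finset.mul_sum _ _ _).symm
      _ ≤ 2 * M * (NN * (Real.log ((t:ℝ)/NN) + 1)) :=
          mul_le_mul_of_nonneg_left hlogsum (by linarith)
      _ = 2 * M * NN * (Real.log ((t:ℝ)/NN) + 1) := by ring
  have hgoal_eq : (1 / (t : ℝ)) * ∑ s ∈ Finset.Icc 1 t,
          (L (act s) (abar (s - 1) (bin s)) - L (act s) (act s)) -
        (1 / (t : ℝ)) * ∑ s ∈ Finset.Icc 1 t,
          (L (act s) (abar t (bin s)) - L (act s) (act s)) =
      (1/(t:ℝ)) * ∑ s ∈ Finset.Icc 1 t,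
          (L (act s) (abar (s-1) (bin s)) - L (act s) (abar t (bin s))) := by
    rw [← mul_sub, ← Finset.sum_sub_distrib]
    congr 1
    exact Finset.sum_congr rfl fun s _ => by ring
  rw [hgoal_eq]
  constructor
  · exact mul_nonneg (by positivity) hDlow
  · calc (1/(t:ℝ)) * ∑ s ∈ Finset.Icc 1 t,
          (L (act s) (abar (s-1) (bin s)) - L (act s) (abar t (bin s)))
        ≤ (1/(t:ℝ)) * (2 * M * NN * (Real.log ((t:ℝ)/NN) + 1)) :=
          mul_le_mul_of_nonneg_left hDup (by positivity)
      _ = 2 * M * (NN / t) * (Real.log ((t:ℝ)/NN) + 1) := by ring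
end

section
/- A simple way to proper-Li-calibeat: let B be a finite set, let b₁,…,b_t ∈ B be a reference forecasting sequence, and define the forecast c_s := ā^b_{s−1}(b_s), the average of a_r over those r ≤ s−1 with b_r = b_s (an arbitrary fixed element of C if there is no such r). Then for every t ≥ 1, every action sequence a₁,…,a_t ∈ A, every sequence b₁,…,b_t ∈ B, and every 1-Lipschitz proper scoring rule L: 0 ≤ B^L_t(c) − R^L_t(b) ≤ 2|B|(ln t + 1)/t, where R^L_t(b) is the L-refinement score of the binning given by the b-sequence. -/
open scoped BigOperators

lemma harm_bound : ∀ k : ℕ, ∑ j ∈ Finset.Icc 1 k, (1 / (j:ℝ)) ≤ Real.log k + 1 := by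
  intro k
  induction k with
  | zero => simp
  | succ m ih =>
    rw [Finset.sum_Icc_succ_top (by omega)]
    rcases Nat.eq_zero_or_pos m with hm | hm
    · subst hm; simp
    · have hm' : (0:ℝ) < m := by exact_mod_cast hm
      have hx : (0:ℝ) < (m:ℝ)/((m:ℝ)+1) := by positivity
      have h2 := Real.log_le_sub_one_of_pos hx
      rw [Real.log_div (ne_of_gt hm') (by positivity)] at h2
      have he : (m:ℝ)/((m:ℝ)+1) - 1 = -(1/((m:ℝ)+1)) := by field_simp; ring
      rw [he] at h2
      push_cast
      linarith

lemma norm_le_one' {A : Type*} [Fintype A] (x : EuclideanSpace ℝ A)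
    (h0 : ∀ a, 0 ≤ x a) (h1 : ∑ a, x a = 1) : ‖x‖ ≤ 1 := by
  rw [EuclideanSpace.norm_eq]
  have hs : ∑ a, ‖x a‖^2 ≤ 1 := by
    calc ∑ a, ‖x a‖^2 = ∑ a, (x a)^2 := by
          refine Finset.sum_congr rfl fun a _ => ?_
          rw [Real.norm_eq_abs, sq_abs]
      _ ≤ ∑ a, x a := Finset.sum_le_sum (fun a _ => by
          have hle : x a ≤ 1 := h1 ▸ Finset.single_le_sum (fun b _ => h0 b) (Finset.mem_univ a)
          nlinarith [h0 a])
      _ = 1 := h1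
  calc Real.sqrt (∑ a, ‖x a‖^2) ≤ Real.sqrt 1 := Real.sqrt_le_sqrt hs
    _ = 1 := Real.sqrt_one

/-- A simple way to proper-Li-calibeat: forecasting the running
average action in the current `b`-bin guarantees
`0 ≤ B^L_t(c) − R^L_t(b) ≤ 2|B|(ln t + 1)/t` for every `1`-Lipschitz proper
scoring rule `L`, every action sequence, and every reference sequence in the
finite set `B`. -/
theorem stmt_12
    {A : Type*} [Fintype A] [Nonempty A] [DecidableEq A]
    {B : Type*} [Fintype B] [DecidableEq B]
    (C : Set (EuclideanSpace ℝ A))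
    (hC : C = {c : EuclideanSpace ℝ A | (∀ a, 0 ≤ c a) ∧ ∑ a, c a = 1})
    (Lvec : EuclideanSpace ℝ A → EuclideanSpace ℝ A)
    (L : EuclideanSpace ℝ A → EuclideanSpace ℝ A → ℝ)
    (hL : ∀ d c, L d c = ∑ a, d a * Lvec c a)
    (hproper : ∀ c ∈ C, ∀ d ∈ C, L d d ≤ L d c)
    (hlip : ∀ c ∈ C, ∀ c' ∈ C, ‖Lvec c - Lvec c'‖ ≤ 1 * ‖c - c'‖)
    (t : ℕ) (ht : 1 ≤ t)
    (a : ℕ → A)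
    (act : ℕ → EuclideanSpace ℝ A)
    (hact : ∀ s, act s = EuclideanSpace.single (a s) (1 : ℝ))
    (b : ℕ → B)
    -- `n s i` is the number of periods `r ≤ s` in bin `i` of the `b`-binning
    (n : ℕ → B → ℕ)
    (hn : ∀ s i, n s i = ((Finset.Icc 1 s).filter (fun r => b r = i)).card)
    -- the average action in bin `i` over the periods `r ≤ s`
    -- (an arbitrary fixed point `z ∈ C` if the bin is empty)
    (z : EuclideanSpace ℝ A) (hz : z ∈ C)
    (abar : ℕ → B → EuclideanSpace ℝ A)
    (habar : ∀ s i, 0 < n s i →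
      abar s i = ((n s i : ℝ))⁻¹ • ∑ r ∈ (Finset.Icc 1 s).filter (fun r => b r = i), act r)
    (habar0 : ∀ s i, n s i = 0 → abar s i = z)
    -- the simple procedure: forecast the running average of the current bin
    (c : ℕ → EuclideanSpace ℝ A)
    (hc : ∀ s ∈ Finset.Icc 1 t, c s = abar (s - 1) (b s)) :
    0 ≤ (1 / (t : ℝ)) * ∑ s ∈ Finset.Icc 1 t, (L (act s) (c s) - L (act s) (act s)) -
        (1 / (t : ℝ)) * ∑ s ∈ Finset.Icc 1 t,
          (L (act s) (abar t (b s)) - L (act s) (act s)) ∧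
    (1 / (t : ℝ)) * ∑ s ∈ Finset.Icc 1 t, (L (act s) (c s) - L (act s) (act s)) -
        (1 / (t : ℝ)) * ∑ s ∈ Finset.Icc 1 t,
          (L (act s) (abar t (b s)) - L (act s) (act s)) ≤
      2 * (Fintype.card B : ℝ) * (Real.log t + 1) / t := by
  subst hC
  classical
  set F : ℕ → B → Finset ℕ := fun s i => (Finset.Icc 1 s).filter (fun r => b r = i) with hF
  have hn' : ∀ s i, n s i = (F s i).card := hn
  have habar' : ∀ s i, 0 < n s i →
      abar s i = ((n s i : ℝ))⁻¹ • ∑ r ∈ F s i, act r := habar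
  have happ : ∀ (S : Finset ℕ) (a' : A), (∑ r ∈ S, act r) a' = ∑ r ∈ S, act r a' :=
    fun S a' => by rw [WithLp.ofLp_sum, Finset.sum_apply]
  have hactC : ∀ r, (∀ a', 0 ≤ act r a') ∧ ∑ a', act r a' = 1 := by
    intro r
    rw [hact]
    refine ⟨fun a' => ?_, ?_⟩
    · rw [EuclideanSpace.single_apply]; positivity
    · simp [EuclideanSpace.single_apply]
  have hsum : ∀ s i, ∑ r ∈ F s i, act r = (n s i : ℝ) • abar s i := by
    intro s i
    rcases Nat.eq_zero_or_pos (n s i) with h | h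
    · have hFe : F s i = ∅ := by
        rw [← Finset.card_eq_zero, ← hn' s i]; exact h
      simp [hFe, h]
    · rw [habar' s i h, smul_inv_smul₀ (by exact_mod_cast h.ne')]
  have habarC : ∀ s i, (∀ a', 0 ≤ abar s i a') ∧ ∑ a', abar s i a' = 1 := by
    intro s i
    rcases Nat.eq_zero_or_pos (n s i) with h | h
    · rw [habar0 s i h]; exact hz
    · have hne : ((n s i : ℝ)) ≠ 0 := by exact_mod_cast h.ne'
      rw [habar' s i h]
      have h1 : ∀ a', ((n s i : ℝ)⁻¹ • ∑ r ∈ F s i, act r) a'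
          = (n s i : ℝ)⁻¹ * ∑ r ∈ F s i, act r a' := by
        intro a'
        have h2 : ((n s i : ℝ)⁻¹ • ∑ r ∈ F s i, act r) a'
            = (n s i : ℝ)⁻¹ * (∑ r ∈ F s i, act r) a' := by simp
        rw [h2, happ]
      refine ⟨fun a' => ?_, ?_⟩
      · rw [h1]
        have : (0:ℝ) ≤ ∑ r ∈ F s i, act r a' :=
          Finset.sum_nonneg fun r _ => (hactC r).1 a'
        positivity
      · calc ∑ a', ((n s i : ℝ)⁻¹ • ∑ r ∈ F s i, act r) a'
            = ∑ a', (n s i : ℝ)⁻¹ * ∑ r ∈ F s i, act r a' :=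
              Finset.sum_congr rfl fun a' _ => h1 a'
          _ = (n s i : ℝ)⁻¹ * ∑ a', ∑ r ∈ F s i, act r a' := by rw [Finset.mul_sum]
          _ = (n s i : ℝ)⁻¹ * ∑ r ∈ F s i, ∑ a', act r a' := by rw [Finset.sum_comm]
          _ = (n s i : ℝ)⁻¹ * (n s i : ℝ) := by
              rw [Finset.sum_congr rfl fun r _ => (hactC r).2]
              rw [Finset.sum_const, nsmul_eq_mul, mul_one, hn']
          _ = 1 := inv_mul_cancel₀ hne
  -- linearity of L in first argument
  have Lsmul : ∀ (r : ℝ) (x c' : EuclideanSpace ℝ A), L (r • x) c' = r * L x c' := by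
    intro r x c'
    rw [hL, hL, Finset.mul_sum]
    refine Finset.sum_congr rfl fun a' _ => ?_
    have : (r • x) a' = r * x a' := by simp
    rw [this, mul_assoc]
  have Ladd : ∀ (x y c' : EuclideanSpace ℝ A), L (x + y) c' = L x c' + L y c' := by
    intro x y c'
    rw [hL, hL, hL, ← Finset.sum_add_distrib]
    refine Finset.sum_congr rfl fun a' _ => ?_
    have : (x + y) a' = x a' + y a' := rfl
    rw [this, add_mul]
  have Lsum : ∀ (S : Finset ℕ) (c' : EuclideanSpace ℝ A),
      L (∑ r ∈ S, act r) c' = ∑ r ∈ S, L (act r) c' := by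
    intro S c'
    induction S using Finset.induction_on with
    | empty =>
      simp only [Finset.sum_empty, hL]
      have : ∀ a', (0 : EuclideanSpace ℝ A) a' = 0 := fun _ => rfl
      simp [this]
    | insert x S hx ih =>
      rw [Finset.sum_insert hx, Finset.sum_insert hx, Ladd, ih]
  -- Lipschitz bound on score differences
  have hdiff : ∀ d u v : EuclideanSpace ℝ A,
      ((∀ a', 0 ≤ d a') ∧ ∑ a', d a' = 1) →
      ((∀ a', 0 ≤ u a') ∧ ∑ a', u a' = 1) →
      ((∀ a', 0 ≤ v a') ∧ ∑ a', v a' = 1) →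
      L d u - L d v ≤ ‖u - v‖ := by
    intro d u v hd hu hv
    have h1 : L d u - L d v = (inner ℝ d (Lvec u - Lvec v) : ℝ) := by
      rw [hL, hL, ← Finset.sum_sub_distrib, PiLp.inner_apply]
      refine Finset.sum_congr rfl fun a' _ => ?_
      simp [RCLike.inner_apply, mul_comm, mul_sub]
    have h2 : (inner ℝ d (Lvec u - Lvec v) : ℝ) ≤ ‖d‖ * ‖Lvec u - Lvec v‖ :=
      real_inner_le_norm d _
    have h3 : ‖Lvec u - Lvec v‖ ≤ 1 * ‖u - v‖ := hlip u hu v hv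
    have h4 : ‖d‖ ≤ 1 := norm_le_one' d hd.1 hd.2
    have h5 : (0:ℝ) ≤ ‖Lvec u - Lvec v‖ := norm_nonneg _
    have h6 : (0:ℝ) ≤ ‖u - v‖ := norm_nonneg _
    nlinarith
  have hC2 : ∀ u v : EuclideanSpace ℝ A,
      ((∀ a', 0 ≤ u a') ∧ ∑ a', u a' = 1) →
      ((∀ a', 0 ≤ v a') ∧ ∑ a', v a' = 1) →
      ‖u - v‖ ≤ 2 := by
    intro u v hu hv
    have := norm_le_one' u hu.1 hu.2
    have := norm_le_one' v hv.1 hv.2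
    have := norm_sub_le u v
    linarith
  -- step combinatorics
  have hFstep : ∀ s i, b (s+1) = i → F (s+1) i = insert (s+1) (F s i) := by
    intro s i hb
    rw [hF]
    simp only
    rw [← Finset.insert_Icc_right_eq_Icc_add_one (by omega : 1 ≤ s + 1), Finset.filter_insert, if_pos hb]
  have hFnot : ∀ s i, s + 1 ∉ F s i := by
    intro s i hmem
    rw [hF] at hmem
    simp only [Finset.mem_filter, Finset.mem_Icc] at hmem
    omega
  have hnstep : ∀ s i, b (s+1) = i → n (s+1) i = n s i + 1 := by
    intro s i hb
    rw [hn' , hn', hFstep s i hb, Finset.card_insert_of_notMem (hFnot s i)]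
  have hFeq : ∀ s i, b (s+1) ≠ i → F (s+1) i = F s i := by
    intro s i hb
    rw [hF]
    simp only
    rw [← Finset.insert_Icc_right_eq_Icc_add_one (by omega : 1 ≤ s + 1), Finset.filter_insert, if_neg hb]
  have hneq : ∀ s i, b (s+1) ≠ i → n (s+1) i = n s i := by
    intro s i hb; rw [hn', hn', hFeq s i hb]
  have habar_eq : ∀ s i, b (s+1) ≠ i → abar (s+1) i = abar s i := by
    intro s i hb
    rcases Nat.eq_zero_or_pos (n s i) with h | h
    · rw [habar0 s i h, habar0 (s+1) i (by rw [hneq s i hb]; exact h)]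
    · rw [habar' (s+1) i (by rw [hneq s i hb]; exact h), habar' s i h,
        hneq s i hb, hFeq s i hb]
  -- convex-combination step identity
  have hcomb : ∀ s i, b (s+1) = i →
      ((n s i : ℝ) + 1) • abar (s+1) i = (n s i : ℝ) • abar s i + act (s+1) := by
    intro s i hb
    have h1 : ∑ r ∈ F (s+1) i, act r = (n (s+1) i : ℝ) • abar (s+1) i := hsum (s+1) i
    rw [hFstep s i hb, Finset.sum_insert (hFnot s i), hsum s i, hnstep s i hb] at h1
    push_cast at h1
    rw [← h1, add_comm]
  have hkey : ∀ s i, b (s+1) = i → ∀ c' : EuclideanSpace ℝ A,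
      ((n s i : ℝ) + 1) * L (abar (s+1) i) c'
        = (n s i : ℝ) * L (abar s i) c' + L (act (s+1)) c' := by
    intro s i hb c'
    rw [← Lsmul, hcomb s i hb, Ladd, Lsmul]
  have hclose : ∀ s i, b (s+1) = i →
      ‖abar s i - abar (s+1) i‖ ≤ 2 / ((n s i : ℝ) + 1) := by
    intro s i hb
    have hpos : (0:ℝ) < (n s i : ℝ) + 1 := by positivity
    have h1 : abar s i - abar (s+1) i = (((n s i : ℝ) + 1))⁻¹ • (abar s i - act (s+1)) := by
      have h2 : ((n s i : ℝ) + 1) • (abar s i - abar (s+1) i) = abar s i - act (s+1) := by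
        rw [smul_sub, hcomb s i hb]
        module
      rw [← h2, inv_smul_smul₀ (ne_of_gt hpos)]
    rw [h1, norm_smul]
    have h3 : ‖abar s i - act (s+1)‖ ≤ 2 := hC2 _ _ (habarC s i) (hactC (s+1))
    rw [Real.norm_eq_abs, abs_of_pos (by positivity)]
    rw [div_eq_inv_mul]
    have : (0:ℝ) ≤ (((n s i : ℝ)) + 1)⁻¹ := by positivity
    exact mul_le_mul_of_nonneg_left h3 this
  -- lower bound induction
  have low : ∀ i s, (n s i : ℝ) * L (abar s i) (abar s i)
      ≤ ∑ r ∈ F s i, L (act r) (abar (r-1) i) := by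
    intro i s
    induction s with
    | zero =>
      have hFe : F 0 i = ∅ := by rw [hF]; simp
      have h0 : n 0 i = 0 := by rw [hn', hFe]; rfl
      rw [h0, hFe]; simp
    | succ m ih =>
      by_cases hb : b (m+1) = i
      · rw [hFstep m i hb, Finset.sum_insert (hFnot m i), hnstep m i hb]
        simp only [Nat.add_sub_cancel]
        push_cast
        have hp : L (abar (m+1) i) (abar (m+1) i) ≤ L (abar (m+1) i) (abar m i) :=
          hproper (abar m i) (habarC m i) (abar (m+1) i) (habarC (m+1) i)
        have h1 : ((n m i : ℝ)+1) * L (abar (m+1) i) (abar (m+1) i)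
            ≤ ((n m i : ℝ)+1) * L (abar (m+1) i) (abar m i) :=
          mul_le_mul_of_nonneg_left hp (by positivity)
        rw [hkey m i hb (abar m i)] at h1
        linarith
      · rw [hFeq m i hb, hneq m i hb, habar_eq m i hb]; exact ih
  -- upper bound induction
  have up : ∀ i s, ∑ r ∈ F s i, L (act r) (abar (r-1) i)
      ≤ (n s i : ℝ) * L (abar s i) (abar s i) + ∑ j ∈ Finset.Icc 1 (n s i), 2/(j:ℝ) := by
    intro i s
    induction s with
    | zero =>
      have hFe : F 0 i = ∅ := by rw [hF]; simp
      have h0 : n 0 i = 0 := by rw [hn', hFe]; rfl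
      rw [h0, hFe]; simp
    | succ m ih =>
      by_cases hb : b (m+1) = i
      · rw [hFstep m i hb, Finset.sum_insert (hFnot m i), hnstep m i hb]
        simp only [Nat.add_sub_cancel]
        have hk := hkey m i hb (abar (m+1) i)
        have hp : L (abar m i) (abar m i) ≤ L (abar m i) (abar (m+1) i) :=
          hproper (abar (m+1) i) (habarC (m+1) i) (abar m i) (habarC m i)
        have hd : L (act (m+1)) (abar m i) - L (act (m+1)) (abar (m+1) i)
            ≤ ‖abar m i - abar (m+1) i‖ :=
          hdiff (act (m+1)) _ _ (hactC (m+1)) (habarC m i) (habarC (m+1) i)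
        have hcl := hclose m i hb
        have hsum2 : ∑ j ∈ Finset.Icc 1 (n m i + 1), 2/(j:ℝ)
            = ∑ j ∈ Finset.Icc 1 (n m i), 2/(j:ℝ) + 2/((n m i : ℝ)+1) := by
          rw [Finset.sum_Icc_succ_top (by omega)]
          push_cast
          ring
        have h2 : (n m i:ℝ) * L (abar m i) (abar m i)
            ≤ (n m i:ℝ) * L (abar m i) (abar (m+1) i) :=
          mul_le_mul_of_nonneg_left hp (by positivity)
        push_cast
        rw [hsum2]
        linarith
      · rw [hFeq m i hb, hneq m i hb, habar_eq m i hb]; exact ih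
  -- refinement identity per bin
  have hrefine : ∀ i, ∑ r ∈ F t i, L (act r) (abar t i)
      = (n t i : ℝ) * L (abar t i) (abar t i) := by
    intro i
    rw [← Lsum, hsum t i, Lsmul]
  have hnle : ∀ i, n t i ≤ t := by
    intro i
    rw [hn']
    calc (F t i).card ≤ (Finset.Icc 1 t).card :=
          Finset.card_le_card (by rw [hF]; exact Finset.filter_subset _ _)
      _ = t := by rw [Nat.card_Icc]; omega
  have hharm : ∀ i, ∑ j ∈ Finset.Icc 1 (n t i), 2/(j:ℝ) ≤ 2 * (Real.log t + 1) := by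
    intro i
    have h1 : ∑ j ∈ Finset.Icc 1 (n t i), 2/(j:ℝ) ≤ ∑ j ∈ Finset.Icc 1 t, 2/(j:ℝ) :=
      Finset.sum_le_sum_of_subset_of_nonneg
        (Finset.Icc_subset_Icc_right (hnle i)) (fun j _ _ => by positivity)
    have h2 : ∑ j ∈ Finset.Icc 1 t, 2/(j:ℝ) = 2 * ∑ j ∈ Finset.Icc 1 t, 1/(j:ℝ) := by
      rw [Finset.mul_sum]
      exact Finset.sum_congr rfl fun j _ => by ring
    have h3 := harm_bound t
    rw [h2] at h1
    linarith
  set D : ℝ := ∑ s ∈ Finset.Icc 1 t, (L (act s) (c s) - L (act s) (abar t (b s))) with hD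
  have hDfib : D = ∑ i, ∑ s ∈ F t i, (L (act s) (abar (s-1) i) - L (act s) (abar t i)) := by
    rw [hD, ← Finset.sum_fiberwise (Finset.Icc 1 t) b
      (fun s => L (act s) (c s) - L (act s) (abar t (b s)))]
    refine Finset.sum_congr rfl fun i _ => Finset.sum_congr rfl fun s hs => ?_
    have hmem := Finset.mem_filter.mp hs
    rw [hc s hmem.1, hmem.2]
  have hbin : ∀ i, 0 ≤ ∑ s ∈ F t i, (L (act s) (abar (s-1) i) - L (act s) (abar t i)) ∧
      ∑ s ∈ F t i, (L (act s) (abar (s-1) i) - L (act s) (abar t i)) ≤ 2*(Real.log t + 1) := by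
    intro i
    have hsplit : ∑ s ∈ F t i, (L (act s) (abar (s-1) i) - L (act s) (abar t i))
        = (∑ s ∈ F t i, L (act s) (abar (s-1) i)) - (n t i:ℝ) * L (abar t i) (abar t i) := by
      rw [Finset.sum_sub_distrib, hrefine i]
    constructor
    · rw [hsplit]; linarith [low i t]
    · rw [hsplit]; linarith [up i t, hharm i]
  have hD0 : 0 ≤ D := by
    rw [hDfib]; exact Finset.sum_nonneg fun i _ => (hbin i).1
  have hDle : D ≤ (Fintype.card B : ℝ) * (2*(Real.log t + 1)) := by
    rw [hDfib]
    calc ∑ i, ∑ s ∈ F t i, (L (act s) (abar (s-1) i) - L (act s) (abar t i))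
        ≤ ∑ _i : B, 2*(Real.log t + 1) := Finset.sum_le_sum fun i _ => (hbin i).2
      _ = (Fintype.card B : ℝ) * (2*(Real.log t + 1)) := by
          rw [Finset.sum_const, Finset.card_univ, nsmul_eq_mul]
  have htpos : (0:ℝ) < t := by
    have : (1:ℝ) ≤ t := by exact_mod_cast ht
    linarith
  have hE : (1/(t:ℝ)) * ∑ s ∈ Finset.Icc 1 t, (L (act s) (c s) - L (act s) (act s)) -
      (1/(t:ℝ)) * ∑ s ∈ Finset.Icc 1 t, (L (act s) (abar t (b s)) - L (act s) (act s))
      = (1/(t:ℝ)) * D := by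
    rw [hD, ← mul_sub, ← Finset.sum_sub_distrib]
    congr 1
    exact Finset.sum_congr rfl fun s _ => by ring
  constructor
  · rw [hE]
    exact mul_nonneg (by positivity) hD0
  · rw [hE]
    calc (1/(t:ℝ)) * D ≤ (1/(t:ℝ)) * ((Fintype.card B : ℝ) * (2*(Real.log t + 1))) :=
          mul_le_mul_of_nonneg_left hDle (by positivity)
      _ = 2 * (Fintype.card B : ℝ) * (Real.log t + 1) / t := by ring
end

section
/- A scoring rule L : C × C → ℝ (linear in its first argument) is proper if and only if there exist a set X, a utility function u : A × X → ℝ, and a selection of optimal decisions x* : C → X (i.e., U(d, x*(d)) = sup_{x∈X} U(d,x) for every d ∈ C, the supremum being attained, where U(d,x) := Σ_{a∈A} d(a) u(a,x)) such that L(d,c) = −U(d, x*(c)) for all c, d ∈ C. -/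
open scoped BigOperators

/-- a scoring rule `L` is proper if and only if it is induced by
some decision problem: there exist a set `X` of decisions, a utility function
`u : A × X → ℝ`, and a selection of optimal decisions `x*` (attaining
`sup_x U(d,x)` for every `d ∈ C`) such that `L(d,c) = −U(d, x*(c))`. -/
theorem stmt_13
    {A : Type} [Fintype A] [Nonempty A]
    (C : Set (EuclideanSpace ℝ A))
    (hC : C = {c : EuclideanSpace ℝ A | (∀ a, 0 ≤ c a) ∧ ∑ a, c a = 1})
    (Lvec : EuclideanSpace ℝ A → EuclideanSpace ℝ A)
    (L : EuclideanSpace ℝ A → EuclideanSpace ℝ A → ℝ)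
    (hL : ∀ d c, L d c = ∑ a, d a * Lvec c a) :
    (∀ c ∈ C, ∀ d ∈ C, L d d ≤ L d c) ↔
    ∃ (X : Type) (u : A → X → ℝ) (xstar : EuclideanSpace ℝ A → X),
      (∀ d ∈ C, ∀ x : X, (∑ a, d a * u a x) ≤ ∑ a, d a * u a (xstar d)) ∧
      (∀ c ∈ C, ∀ d ∈ C, L d c = -∑ a, d a * u a (xstar c)) := by
  constructor
  · intro hproper
    -- C is nonempty: uniform distribution
    have hcard : (0:ℝ) < (Fintype.card A : ℝ) := by
      exact_mod_cast Fintype.card_pos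
    have hc0 : (WithLp.toLp 2 (fun _ : A => (Fintype.card A : ℝ)⁻¹) : EuclideanSpace ℝ A) ∈ C := by
      rw [hC]
      simp only [Set.mem_setOf_eq, PiLp.toLp_apply]
      constructor
      · intro a; positivity
      · rw [Finset.sum_const, Finset.card_univ, nsmul_eq_mul]
        field_simp
    classical
    refine ⟨C, fun a x => -Lvec x.1 a,
      fun d => if h : d ∈ C then ⟨d, h⟩ else ⟨_, hc0⟩, ?_, ?_⟩
    · intro d hd x
      simp only [dif_pos hd]
      have h1 := hproper x.1 x.2 d hd
      rw [hL, hL] at h1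
      simp only [mul_neg, Finset.sum_neg_distrib]
      linarith
    · intro c hc d hd
      simp only [dif_pos hc, mul_neg, Finset.sum_neg_distrib, neg_neg]
      rw [hL]
  · rintro ⟨X, u, xstar, hopt, heq⟩ c hc d hd
    have h1 := hopt d hd (xstar c)
    have h2 := heq c hc d hd
    have h3 := heq d hd d hd
    linarith
end

section
/- Regret equals calibration: let c₁,…,c_t be a forecasting sequence, i₁,…,i_t a binning sequence, and u a utility function with a selection of optimal decisions x* and induced proper scoring rule L^u. Then (1) U_t(c) = −B^{L^u}_t(c) − H^{L^u}_t, and (2) sup_{ξ : I → X} (1/t) Σ_{s=1}^t u(a_s, ξ(i_s)) = −R^{L^u}_t(i) − H^{L^u}_t, this supremum being attained (at ξ(i) = x*(ā_t(i))). Consequently, if the binning i refines the forecasts c (i.e., i_s = i_r implies c_s = c_r), then Reg^u_t(c;i) := sup_{ξ : I → X} (1/t) Σ_{s=1}^t u(a_s, ξ(i_s)) − U_t(c) equals K^{L^u}_t(c;i). -/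
/-!
Against the point mass at `a`, decision `x` has expected utility `u a x`, so `U_t`, `B`, `R`, `H`
unfold to averages of `u (a s) (·)`. The crux is a tower property of the bin averages: if `f s`
depends on `s` only through its bin, then `∑ s, 𝔼_{ā(i_s)} f s = ∑ s, f s (a s)`. With
`f s = u · (ξ (i_s))` and `f s = u · (x* (ā (i_s)))` it reduces (2) to the optimality of `x*`
at each `ā(i)`, a point of the simplex; with `f s = u · (x* (c s))`, which depends only on the bin
when `i` refines `c`, it turns `K` into the regret.
-/

open Finset

section BinAverage

variable {ι A I : Type*} [Fintype ι] [DecidableEq A] [DecidableEq I]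

lemma sum_single_one_mul [Fintype A] (a : A) (g : A → ℝ) :
    ∑ a', EuclideanSpace.single a (1 : ℝ) a' * g a' = g a := by
  simp

/-- The empirical distribution `ā_t(i)` of the actions in bin `i` (zero for an empty bin). -/
noncomputable def binAverage (bin : ι → I) (a : ι → A) (i : I) : EuclideanSpace ℝ A :=
  ((#{s | bin s = i} : ℕ) : ℝ)⁻¹ • ∑ s with bin s = i, EuclideanSpace.single (a s) (1 : ℝ)

variable (bin : ι → I) (a : ι → A)

lemma binAverage_nonneg (i : I) (a' : A) : 0 ≤ binAverage bin a i a' := by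
  simp only [binAverage, PiLp.smul_apply, WithLp.ofLp_sum, Finset.sum_apply, smul_eq_mul,
    PiLp.single_apply]
  positivity

lemma sum_binAverage_mul [Fintype A] (i : I) (g : A → ℝ) :
    ∑ a', binAverage bin a i a' * g a' =
      ((#{s | bin s = i} : ℕ) : ℝ)⁻¹ * ∑ s with bin s = i, g (a s) := by
  simp only [binAverage, PiLp.smul_apply, WithLp.ofLp_sum, Finset.sum_apply, smul_eq_mul,
    mul_assoc, ← mul_sum, sum_mul]
  rw [sum_comm]
  simp only [sum_single_one_mul]

lemma card_filter_bin_pos (s : ι) : 0 < #{r | bin r = bin s} :=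
  card_pos.mpr ⟨s, by simp⟩

lemma binAverage_mem_stdSimplex [Fintype A] (s : ι) :
    binAverage bin a (bin s) ∈ {c : EuclideanSpace ℝ A | (∀ a', 0 ≤ c a') ∧ ∑ a', c a' = 1} := by
  refine ⟨binAverage_nonneg bin a _, ?_⟩
  have hcard : ((#{r | bin r = bin s} : ℕ) : ℝ) ≠ 0 :=
    Nat.cast_ne_zero.mpr (card_filter_bin_pos bin s).ne'
  simpa [hcard] using sum_binAverage_mul bin a (bin s) 1

lemma sum_sum_binAverage_mul [Fintype A] {f : ι → A → ℝ}
    (hf : ∀ s r, bin s = bin r → f s = f r) :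
    ∑ s, ∑ a', binAverage bin a (bin s) a' * f s a' = ∑ s, f s (a s) := by
  set n : ι → ℝ := fun s => ((#{r | bin r = bin s} : ℕ) : ℝ)
  calc ∑ s, ∑ a', binAverage bin a (bin s) a' * f s a'
      = ∑ s, ∑ r, if bin r = bin s then (n r)⁻¹ * f r (a r) else 0 := by
        refine sum_congr rfl fun s _ => ?_
        rw [sum_binAverage_mul, mul_sum, ← sum_filter]
        refine sum_congr rfl fun r hr => ?_
        have hrs : bin r = bin s := (mem_filter.mp hr).2
        simp only [n, hrs, hf r s hrs]
    _ = ∑ r, n r * ((n r)⁻¹ * f r (a r)) := by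
        rw [sum_comm]
        refine sum_congr rfl fun r _ => ?_
        simp only [← sum_filter, eq_comm (a := bin r), sum_const, nsmul_eq_mul, n]
    _ = ∑ r, f r (a r) := by
        refine sum_congr rfl fun r _ => ?_
        have hn : n r ≠ 0 := Nat.cast_ne_zero.mpr (card_filter_bin_pos bin r).ne'
        rw [← mul_assoc, mul_inv_cancel₀ hn, one_mul]

end BinAverage

theorem stmt_14_general
    {A : Type*} [Fintype A] [DecidableEq A]
    {X : Type*} {I : Type*} [DecidableEq I]
    (C : Set (EuclideanSpace ℝ A))
    (hC : C = {c : EuclideanSpace ℝ A | (∀ a, 0 ≤ c a) ∧ ∑ a, c a = 1})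
    (u : A → X → ℝ) (xstar : EuclideanSpace ℝ A → X)
    (hopt : ∀ d ∈ C, ∀ x : X, (∑ a, d a * u a x) ≤ ∑ a, d a * u a (xstar d))
    (Lu : EuclideanSpace ℝ A → EuclideanSpace ℝ A → ℝ)
    (hLu : ∀ d c, Lu d c = -∑ a, d a * u a (xstar c))
    (t : ℕ)
    (a : Fin t → A)
    (act : Fin t → EuclideanSpace ℝ A)
    (hact : ∀ s, act s = EuclideanSpace.single (a s) (1 : ℝ))
    (c : Fin t → EuclideanSpace ℝ A)
    (bin : Fin t → I)
    (n : I → ℕ)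
    (hn : ∀ i, n i = (Finset.univ.filter (fun s => bin s = i)).card)
    (abar : I → EuclideanSpace ℝ A)
    (habar : ∀ i, 0 < n i →
      abar i = ((n i : ℝ))⁻¹ • ∑ s ∈ Finset.univ.filter (fun s => bin s = i), act s)
    -- the scores
    (Ut B K R H : ℝ)
    (hUt : Ut = (1 / (t : ℝ)) * ∑ s, u (a s) (xstar (c s)))
    (hB : B = (1 / (t : ℝ)) * ∑ s, (Lu (act s) (c s) - Lu (act s) (act s)))
    (hK : K = (1 / (t : ℝ)) *
      ∑ s, (Lu (abar (bin s)) (c s) - Lu (abar (bin s)) (abar (bin s))))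
    (hR : R = (1 / (t : ℝ)) * ∑ s, (Lu (act s) (abar (bin s)) - Lu (act s) (act s)))
    (hH : H = (1 / (t : ℝ)) * ∑ s, Lu (act s) (act s)) :
    Ut = -B - H ∧
    (∀ ξ : I → X, (1 / (t : ℝ)) * ∑ s, u (a s) (ξ (bin s)) ≤ -R - H) ∧
    ((1 / (t : ℝ)) * ∑ s, u (a s) (xstar (abar (bin s))) = -R - H) ∧
    ((∀ s r, bin s = bin r → c s = c r) → (-R - H) - Ut = K) := by
  subst hC
  have hLu_act (s : Fin t) (d : EuclideanSpace ℝ A) : Lu (act s) d = -u (a s) (xstar d) := by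
    rw [hLu, hact, sum_single_one_mul]
  have habar_bin (s : Fin t) : abar (bin s) = binAverage bin a (bin s) := by
    rw [habar _ (hn _ ▸ card_filter_bin_pos bin s), hn, binAverage]
    simp only [hact]
  have hRH : -R - H = (1 / (t : ℝ)) * ∑ s, u (a s) (xstar (abar (bin s))) := by
    simp only [hR, hH, hLu_act, sum_sub_distrib, sum_neg_distrib]
    ring
  refine ⟨?_, fun ξ => ?_, hRH.symm, fun hrefine => ?_⟩
  · simp only [hUt, hB, hH, hLu_act, sum_sub_distrib, sum_neg_distrib]
    ring
  · rw [hRH]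
    refine mul_le_mul_of_nonneg_left ?_ (by positivity)
    simp only [habar_bin]
    rw [← sum_sum_binAverage_mul bin a (f := fun s a' => u a' (ξ (bin s)))
        fun s r h => by rw [h],
      ← sum_sum_binAverage_mul bin a (f := fun s a' => u a' (xstar (binAverage bin a (bin s))))
        fun s r h => by rw [h]]
    exact sum_le_sum fun s _ => hopt _ (binAverage_mem_stdSimplex bin a s) _
  · have hc_tower := sum_sum_binAverage_mul bin a (f := fun s a' => u a' (xstar (c s)))
      (fun s r h => by rw [hrefine s r h])
    have habar_tower := sum_sum_binAverage_mul bin a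
      (f := fun s a' => u a' (xstar (binAverage bin a (bin s)))) (fun s r h => by rw [h])
    simp only [hRH, hUt, hK, hLu, habar_bin, sum_sub_distrib, sum_neg_distrib] at hc_tower habar_tower ⊢
    rw [hc_tower, habar_tower]
    ring

/-- Regret equals calibration: for a forecasting sequence `c`,
a binning sequence `i`, and a utility `u` with optimal-decision selection `x*`
and induced proper scoring rule `L^u`:
(1) `U_t(c) = −B^{L^u}_t(c) − H^{L^u}_t`;
(2) `sup_ξ (1/t) Σ_s u(a_s, ξ(i_s)) = −R^{L^u}_t(i) − H^{L^u}_t`, the supremum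
being attained at `ξ(i) = x*(ā_t(i))`;
(3) if `i` refines `c`, then `Reg^u_t(c;i) = K^{L^u}_t(c;i)`. -/
theorem stmt_14
    {A : Type*} [Fintype A] [Nonempty A] [DecidableEq A]
    {X : Type*} {I : Type*} [DecidableEq I]
    (C : Set (EuclideanSpace ℝ A))
    (hC : C = {c : EuclideanSpace ℝ A | (∀ a, 0 ≤ c a) ∧ ∑ a, c a = 1})
    (u : A → X → ℝ) (xstar : EuclideanSpace ℝ A → X)
    (hopt : ∀ d ∈ C, ∀ x : X, (∑ a, d a * u a x) ≤ ∑ a, d a * u a (xstar d))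
    (Lu : EuclideanSpace ℝ A → EuclideanSpace ℝ A → ℝ)
    (hLu : ∀ d c, Lu d c = -∑ a, d a * u a (xstar c))
    (t : ℕ) (ht : 1 ≤ t)
    (a : Fin t → A)
    (act : Fin t → EuclideanSpace ℝ A)
    (hact : ∀ s, act s = EuclideanSpace.single (a s) (1 : ℝ))
    (c : Fin t → EuclideanSpace ℝ A) (hc : ∀ s, c s ∈ C)
    (bin : Fin t → I)
    (n : I → ℕ)
    (hn : ∀ i, n i = (Finset.univ.filter (fun s => bin s = i)).card)
    (abar : I → EuclideanSpace ℝ A)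
    (habar : ∀ i, 0 < n i →
      abar i = ((n i : ℝ))⁻¹ • ∑ s ∈ Finset.univ.filter (fun s => bin s = i), act s)
    -- the scores
    (Ut B K R H : ℝ)
    (hUt : Ut = (1 / (t : ℝ)) * ∑ s, u (a s) (xstar (c s)))
    (hB : B = (1 / (t : ℝ)) * ∑ s, (Lu (act s) (c s) - Lu (act s) (act s)))
    (hK : K = (1 / (t : ℝ)) *
      ∑ s, (Lu (abar (bin s)) (c s) - Lu (abar (bin s)) (abar (bin s))))
    (hR : R = (1 / (t : ℝ)) * ∑ s, (Lu (act s) (abar (bin s)) - Lu (act s) (act s)))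
    (hH : H = (1 / (t : ℝ)) * ∑ s, Lu (act s) (act s)) :
    Ut = -B - H ∧
    (∀ ξ : I → X, (1 / (t : ℝ)) * ∑ s, u (a s) (ξ (bin s)) ≤ -R - H) ∧
    ((1 / (t : ℝ)) * ∑ s, u (a s) (xstar (abar (bin s))) = -R - H) ∧
    ((∀ s r, bin s = bin r → c s = c r) → (-R - H) - Ut = K) :=
  stmt_14_general C hC u xstar hopt Lu hLu t a act hact c bin n hn abar habar Ut B K R H hUt hB hK
    hR hH
end

section
/- Let b₁,…,b_t and c₁,…,c_t be forecasting sequences in C, let i₁,…,i_t be a binning sequence that refines b (i.e., i_s = i_r implies b_s = b_r), and let u be a utility function with a selection of optimal decisions x* and induced proper scoring rule L^u. Then U_t(c) − U_t(b) = Reg^u_t(b;i) + (R^{L^u}_t(i) − B^{L^u}_t(c)), where Reg^u_t(b;i) := sup_{ξ : I → X} (1/t) Σ_{s=1}^t u(a_s, ξ(i_s)) − U_t(b). -/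
open scoped BigOperators

/-- for forecasting sequences `b`, `c`, a binning `i` refining
`b`, and a utility `u` with optimal-decision selection `x*` and induced
proper scoring rule `L^u`:
`U_t(c) − U_t(b) = Reg^u_t(b;i) + (R^{L^u}_t(i) − B^{L^u}_t(c))`, where
`Reg^u_t(b;i) = sup_{ξ : I → X} (1/t) Σ_s u(a_s, ξ(i_s)) − U_t(b)`. -/
theorem stmt_15
    {A : Type*} [Fintype A] [Nonempty A] [DecidableEq A]
    {X : Type*} {I : Type*} [DecidableEq I]
    (C : Set (EuclideanSpace ℝ A))
    (hC : C = {c : EuclideanSpace ℝ A | (∀ a, 0 ≤ c a) ∧ ∑ a, c a = 1})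
    (u : A → X → ℝ) (xstar : EuclideanSpace ℝ A → X)
    (hopt : ∀ d ∈ C, ∀ x : X, (∑ a, d a * u a x) ≤ ∑ a, d a * u a (xstar d))
    (Lu : EuclideanSpace ℝ A → EuclideanSpace ℝ A → ℝ)
    (hLu : ∀ d c, Lu d c = -∑ a, d a * u a (xstar c))
    (t : ℕ) (ht : 1 ≤ t)
    (a : Fin t → A)
    (act : Fin t → EuclideanSpace ℝ A)
    (hact : ∀ s, act s = EuclideanSpace.single (a s) (1 : ℝ))
    (b : Fin t → EuclideanSpace ℝ A) (hb : ∀ s, b s ∈ C)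
    (c : Fin t → EuclideanSpace ℝ A) (hc : ∀ s, c s ∈ C)
    (bin : Fin t → I)
    (hrefine : ∀ s r, bin s = bin r → b s = b r)
    (n : I → ℕ)
    (hn : ∀ i, n i = (Finset.univ.filter (fun s => bin s = i)).card)
    (abar : I → EuclideanSpace ℝ A)
    (habar : ∀ i, 0 < n i →
      abar i = ((n i : ℝ))⁻¹ • ∑ s ∈ Finset.univ.filter (fun s => bin s = i), act s)
    -- the scores
    (Utc Utb Bc R Reg : ℝ)
    (hUtc : Utc = (1 / (t : ℝ)) * ∑ s, u (a s) (xstar (c s)))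
    (hUtb : Utb = (1 / (t : ℝ)) * ∑ s, u (a s) (xstar (b s)))
    (hBc : Bc = (1 / (t : ℝ)) * ∑ s, (Lu (act s) (c s) - Lu (act s) (act s)))
    (hR : R = (1 / (t : ℝ)) * ∑ s, (Lu (act s) (abar (bin s)) - Lu (act s) (act s)))
    (hReg : Reg =
      sSup {v : ℝ | ∃ ξ : I → X, v = (1 / (t : ℝ)) * ∑ s, u (a s) (ξ (bin s))} - Utb) :
    Utc - Utb = Reg + (R - Bc) := by

  classical
  have hdot : ∀ (s : Fin t) (x : X), ∑ a', act s a' * u a' x = u (a s) x := by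
    intro s x
    rw [hact]
    simp [EuclideanSpace.single_apply]
  have hLact : ∀ (s : Fin t) (e : EuclideanSpace ℝ A), Lu (act s) e = -(u (a s) (xstar e)) := by
    intro s e; rw [hLu, hdot]
  have hactsum : ∀ (s : Fin t), ∑ a', act s a' = 1 := by
    intro s; rw [hact]; simp [EuclideanSpace.single_apply]
  have hactnn : ∀ (s : Fin t) (a' : A), 0 ≤ act s a' := by
    intro s a'; rw [hact]
    simp only [EuclideanSpace.single_apply]
    split <;> norm_num
  have habarapp : ∀ i, 0 < n i → ∀ a', abar i a' =
      ((n i : ℝ))⁻¹ * ∑ s ∈ Finset.univ.filter (fun s => bin s = i), act s a' := by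
    intro i hi a'
    rw [habar i hi]
    simp only [PiLp.smul_apply, smul_eq_mul]
    congr 1
    rw [WithLp.ofLp_sum]
    exact Finset.sum_apply a' _ _
  have habarC : ∀ i, 0 < n i → abar i ∈ C := by
    intro i hi
    rw [hC]
    refine ⟨fun a' => ?_, ?_⟩
    · rw [habarapp i hi]
      apply mul_nonneg (by positivity)
      exact Finset.sum_nonneg fun s _ => hactnn s a'
    · have h1 : ∑ a', abar i a' =
          ∑ a', ((n i : ℝ))⁻¹ * ∑ s ∈ Finset.univ.filter (fun s => bin s = i), act s a' :=
        Finset.sum_congr rfl fun a' _ => habarapp i hi a'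
      rw [h1, ← Finset.mul_sum, Finset.sum_comm]
      simp only [hactsum]
      rw [Finset.sum_const, nsmul_eq_mul, mul_one, ← hn]
      field_simp
  have habardot : ∀ i, 0 < n i → ∀ x, ∑ a', abar i a' * u a' x =
      ((n i : ℝ))⁻¹ * ∑ s ∈ Finset.univ.filter (fun s => bin s = i), u (a s) x := by
    intro i hi x
    have h1 : ∀ a', abar i a' * u a' x = ((n i : ℝ))⁻¹ *
        ∑ s ∈ Finset.univ.filter (fun s => bin s = i), act s a' * u a' x := by
      intro a'
      rw [habarapp i hi, mul_assoc, Finset.sum_mul]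
    simp only [h1]
    rw [← Finset.mul_sum, Finset.sum_comm]
    congr 1
    exact Finset.sum_congr rfl fun s _ => hdot s x
  have hbinopt : ∀ i, 0 < n i → ∀ x,
      ∑ s ∈ Finset.univ.filter (fun s => bin s = i), u (a s) x ≤
      ∑ s ∈ Finset.univ.filter (fun s => bin s = i), u (a s) (xstar (abar i)) := by
    intro i hi x
    have h1 := hopt (abar i) (habarC i hi) x
    rw [habardot i hi, habardot i hi] at h1
    have hpos : (0:ℝ) < ((n i : ℝ))⁻¹ := by positivity
    exact le_of_mul_le_mul_left h1 hpos
  set V : ℝ := (1 / (t : ℝ)) * ∑ s, u (a s) (xstar (abar (bin s))) with hV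
  have hub : ∀ ξ : I → X, ∑ s, u (a s) (ξ (bin s)) ≤ ∑ s, u (a s) (xstar (abar (bin s))) := by
    intro ξ
    have hmaps : ∀ x ∈ (Finset.univ : Finset (Fin t)), bin x ∈ Finset.univ.image bin :=
      fun x _ => Finset.mem_image_of_mem bin (Finset.mem_univ x)
    rw [← Finset.sum_fiberwise_of_maps_to hmaps (fun s => u (a s) (ξ (bin s))),
        ← Finset.sum_fiberwise_of_maps_to hmaps (fun s => u (a s) (xstar (abar (bin s))))]
    apply Finset.sum_le_sum
    intro i hiimg
    have hi : 0 < n i := by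
      rw [hn]
      rw [Finset.mem_image] at hiimg
      obtain ⟨s, _, hs⟩ := hiimg
      exact Finset.card_pos.mpr ⟨s, by simp [hs]⟩
    calc ∑ s ∈ Finset.univ.filter (fun s => bin s = i), u (a s) (ξ (bin s))
        = ∑ s ∈ Finset.univ.filter (fun s => bin s = i), u (a s) (ξ i) := by
          apply Finset.sum_congr rfl; intro s hs
          rw [Finset.mem_filter] at hs; rw [hs.2]
      _ ≤ ∑ s ∈ Finset.univ.filter (fun s => bin s = i), u (a s) (xstar (abar i)) :=
          hbinopt i hi (ξ i)
      _ = ∑ s ∈ Finset.univ.filter (fun s => bin s = i), u (a s) (xstar (abar (bin s))) := by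
          apply Finset.sum_congr rfl; intro s hs
          rw [Finset.mem_filter] at hs; rw [hs.2]
  have htpos : (0:ℝ) < t := by exact_mod_cast ht
  have hsSup : sSup {v : ℝ | ∃ ξ : I → X, v = (1 / (t : ℝ)) * ∑ s, u (a s) (ξ (bin s))} = V := by
    apply IsGreatest.csSup_eq
    constructor
    · exact ⟨fun i => xstar (abar i), rfl⟩
    · rintro v ⟨ξ, rfl⟩
      rw [hV]
      apply mul_le_mul_of_nonneg_left (hub ξ) (by positivity)
  have hRB : R - Bc = Utc - V := by
    rw [hR, hBc, hUtc, hV, ← mul_sub, ← mul_sub, ← Finset.sum_sub_distrib,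
        ← Finset.sum_sub_distrib]
    congr 1
    apply Finset.sum_congr rfl
    intro s _
    rw [hLact, hLact, hLact]
    ring
  rw [hReg, hsSup]
  linarith [hRB]
end

section
/- A scoring rule L : C × C → ℝ (linear in its first argument) is proper if and only if there exist a concave function H : C → ℝ and a map G : C → ℝ^A such that for every c ∈ C the vector G(c) is a supergradient of H at c (i.e., H(d) ≤ H(c) + (d − c) · G(c) for all d ∈ C) and L(d,c) = H(c) + (d − c) · G(c) for all c, d ∈ C. -/
open scoped BigOperators InnerProductSpace

/-!
Properness makes the expected score `H c = c · 𝐋(c)` concave: it is the pointwise minimum over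
forecasts `c'` of the affine functions `d ↦ d · 𝐋(c')`, attained at `c' = d`. Linearity of the score
in the outcome distribution gives `L(d,c) = H(c) + (d − c) · 𝐋(c)`, and properness says precisely
that `𝐋(c)` is then a supergradient of `H` at `c`. Conversely, evaluating such a representation at
`c = d` gives `L(d,d) = H(d) ≤ L(d,c)`.
-/

section InnerProductSpace

variable {E : Type*} [NormedAddCommGroup E] [InnerProductSpace ℝ E] {C : Set E}

theorem concaveOn_inner_self_of_proper (hC : Convex ℝ C) {Lvec : E → E}
    (hproper : ∀ c ∈ C, ∀ d ∈ C, ⟪d, Lvec d⟫_ℝ ≤ ⟪d, Lvec c⟫_ℝ) :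
    ConcaveOn ℝ C fun c => ⟪c, Lvec c⟫_ℝ := by
  refine ⟨hC, fun x hx y hy a b ha hb hab => ?_⟩
  have hz : a • x + b • y ∈ C := hC hx hy ha hb hab
  calc a • ⟪x, Lvec x⟫_ℝ + b • ⟪y, Lvec y⟫_ℝ
      ≤ a • ⟪x, Lvec (a • x + b • y)⟫_ℝ + b • ⟪y, Lvec (a • x + b • y)⟫_ℝ := by
        gcongr
        exacts [hproper _ hz x hx, hproper _ hz y hy]
    _ = ⟪a • x + b • y, Lvec (a • x + b • y)⟫_ℝ := by
        rw [inner_add_left, real_inner_smul_left, real_inner_smul_left, smul_eq_mul, smul_eq_mul]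

theorem proper_iff_exists_concaveOn_supergradient (hC : Convex ℝ C) (Lvec : E → E) :
    (∀ c ∈ C, ∀ d ∈ C, ⟪d, Lvec d⟫_ℝ ≤ ⟪d, Lvec c⟫_ℝ) ↔
    ∃ (H : E → ℝ) (G : E → E), ConcaveOn ℝ C H ∧
      (∀ c ∈ C, ∀ d ∈ C, H d ≤ H c + ⟪d - c, G c⟫_ℝ) ∧
      (∀ c ∈ C, ∀ d ∈ C, ⟪d, Lvec c⟫_ℝ = H c + ⟪d - c, G c⟫_ℝ) := by
  constructor
  · intro hproper
    refine ⟨fun c => ⟪c, Lvec c⟫_ℝ, Lvec, concaveOn_inner_self_of_proper hC hproper,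
      fun c hc d hd => ?_, fun c _ d _ => ?_⟩ <;> rw [inner_sub_left, add_sub_cancel]
    exact hproper c hc d hd
  · rintro ⟨H, G, -, hsup, hrepr⟩ c hc d hd
    rw [hrepr d hd d hd, hrepr c hc d hd, sub_self, inner_zero_left, add_zero]
    exact hsup c hc d hd

end InnerProductSpace

theorem convex_euclideanSpace_simplex (A : Type*) [Fintype A] :
    Convex ℝ {c : EuclideanSpace ℝ A | (∀ a, 0 ≤ c a) ∧ ∑ a, c a = 1} :=
  (convex_stdSimplex ℝ A).linear_preimage (WithLp.linearEquiv 2 ℝ (A → ℝ)).toLinearMap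

theorem EuclideanSpace.real_inner_eq_sum {A : Type*} [Fintype A] (x y : EuclideanSpace ℝ A) :
    ⟪x, y⟫_ℝ = ∑ a, x a * y a := by
  simp [PiLp.inner_apply, mul_comm]

theorem stmt_16_general
    {A : Type*} [Fintype A]
    (C : Set (EuclideanSpace ℝ A))
    (hC : C = {c : EuclideanSpace ℝ A | (∀ a, 0 ≤ c a) ∧ ∑ a, c a = 1})
    (Lvec : EuclideanSpace ℝ A → EuclideanSpace ℝ A)
    (L : EuclideanSpace ℝ A → EuclideanSpace ℝ A → ℝ)
    (hL : ∀ d c, L d c = ∑ a, d a * Lvec c a) :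
    (∀ c ∈ C, ∀ d ∈ C, L d d ≤ L d c) ↔
    ∃ (H : EuclideanSpace ℝ A → ℝ) (G : EuclideanSpace ℝ A → EuclideanSpace ℝ A),
      ConcaveOn ℝ C H ∧
      (∀ c ∈ C, ∀ d ∈ C, H d ≤ H c + ∑ a, (d a - c a) * G c a) ∧
      (∀ c ∈ C, ∀ d ∈ C, L d c = H c + ∑ a, (d a - c a) * G c a) := by
  have key := proper_iff_exists_concaveOn_supergradient
    (hC ▸ convex_euclideanSpace_simplex A) Lvec
  simpa only [EuclideanSpace.real_inner_eq_sum, PiLp.sub_apply, ← hL] using key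

/-- a scoring rule `L` (linear in its first argument) is proper
if and only if there exist a concave function `H : C → ℝ` and a supergradient
selection `G` of `H` such that `L(d,c) = H(c) + (d − c) · G(c)` on `C`. -/
theorem stmt_16
    {A : Type*} [Fintype A] [Nonempty A]
    (C : Set (EuclideanSpace ℝ A))
    (hC : C = {c : EuclideanSpace ℝ A | (∀ a, 0 ≤ c a) ∧ ∑ a, c a = 1})
    (Lvec : EuclideanSpace ℝ A → EuclideanSpace ℝ A)
    (L : EuclideanSpace ℝ A → EuclideanSpace ℝ A → ℝ)
    (hL : ∀ d c, L d c = ∑ a, d a * Lvec c a) :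
    (∀ c ∈ C, ∀ d ∈ C, L d d ≤ L d c) ↔
    ∃ (H : EuclideanSpace ℝ A → ℝ) (G : EuclideanSpace ℝ A → EuclideanSpace ℝ A),
      ConcaveOn ℝ C H ∧
      (∀ c ∈ C, ∀ d ∈ C, H d ≤ H c + ∑ a, (d a - c a) * G c a) ∧
      (∀ c ∈ C, ∀ d ∈ C, L d c = H c + ∑ a, (d a - c a) * G c a) :=
  stmt_16_general C hC Lvec L hL
end

section
/- Let x : I × J → ℝ^m be a matrix of vectors, w a weight matrix, and let F : ℝ^m → ℝ be concave on the convex hull of the entries {x_{ij}}. Then: (a) C_W(F) ≥ E_W(F) and R_W(F) ≥ E_W(F); (b) if x is W-column-constant then C_W(F) = E_W(F), and if x is W-row-constant then R_W(F) = E_W(F); (c) if G : ℝ^m → ℝ is strictly concave on the convex hull of the entries, then C_W(G) = E_W(G) if and only if x is W-column-constant, and R_W(G) = E_W(G) if and only if x is W-row-constant. -/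
open scoped BigOperators Classical

noncomputable section

variable {I J : Type*} [Fintype I] [Fintype J] {m : ℕ}

/-- Row marginal `w_{i·}`. -/
def rowMarg (w : I → J → ℝ) (i : I) : ℝ := ∑ j, w i j

/-- Column marginal `w_{·j}`. -/
def colMarg (w : I → J → ℝ) (j : J) : ℝ := ∑ i, w i j

/-- Row average `r_i`. -/
def rowAvg (x : I → J → EuclideanSpace ℝ (Fin m)) (w : I → J → ℝ) (i : I) :
    EuclideanSpace ℝ (Fin m) := (rowMarg w i)⁻¹ • ∑ j, w i j • x i j

/-- Column average `c_j`. -/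
def colAvg (x : I → J → EuclideanSpace ℝ (Fin m)) (w : I → J → ℝ) (j : J) :
    EuclideanSpace ℝ (Fin m) := (colMarg w j)⁻¹ • ∑ i, w i j • x i j

/-- `E_W(F)`, the overall weighted average of `F` on the entries. -/
def EW (x : I → J → EuclideanSpace ℝ (Fin m)) (w : I → J → ℝ)
    (F : EuclideanSpace ℝ (Fin m) → ℝ) : ℝ := ∑ i, ∑ j, w i j * F (x i j)

/-- `R_W(F)`, the weighted average of `F` on the row averages. -/
def RW (x : I → J → EuclideanSpace ℝ (Fin m)) (w : I → J → ℝ)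
    (F : EuclideanSpace ℝ (Fin m) → ℝ) : ℝ :=
  ∑ i ∈ Finset.univ.filter (fun i => 0 < rowMarg w i), rowMarg w i * F (rowAvg x w i)

/-- `C_W(F)`, the weighted average of `F` on the column averages. -/
def CW (x : I → J → EuclideanSpace ℝ (Fin m)) (w : I → J → ℝ)
    (F : EuclideanSpace ℝ (Fin m) → ℝ) : ℝ :=
  ∑ j ∈ Finset.univ.filter (fun j => 0 < colMarg w j), colMarg w j * F (colAvg x w j)

/-- `w` is a weight matrix. -/
def IsWeight (w : I → J → ℝ) : Prop := (∀ i j, 0 ≤ w i j) ∧ ∑ i, ∑ j, w i j = 1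

/-- The set of entries of the matrix `x`. -/
def entries (x : I → J → EuclideanSpace ℝ (Fin m)) : Set (EuclideanSpace ℝ (Fin m)) :=
  {v | ∃ i j, x i j = v}

/-- `x` is `W`-column-constant. -/
def WColConst (x : I → J → EuclideanSpace ℝ (Fin m)) (w : I → J → ℝ) : Prop :=
  ∀ i i' j, 0 < w i j → 0 < w i' j → x i j = x i' j

/-- `x` is `W`-row-constant. -/
def WRowConst (x : I → J → EuclideanSpace ℝ (Fin m)) (w : I → J → ℝ) : Prop :=
  ∀ i j j', 0 < w i j → 0 < w i j' → x i j = x i j'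

/-!
Column `j` contributes `colMarg w j * F (colAvg x w j) - ∑ i, w i j * F (x i j)` to
`C_W(F) - E_W(F)`, and since `colAvg x w j` is by definition the centre of mass
`univ.centerMass (w · j) (x · j)`, this is the (unnormalised) gap in Jensen's inequality for
column `j`. Concavity makes every gap nonnegative, a column that is constant where its weights
are positive has gap zero, and for strictly concave `G` a vanishing total forces every gap to
vanish, which by the equality case of Jensen's inequality makes each column constant where its
weights are positive. Rows are the columns of the transposed matrix.
-/

namespace Finset

variable {ι E : Type*} [AddCommGroup E] [Module ℝ E] {t : Finset ι}
  {w : ι → ℝ} {p : ι → E} {F : E → ℝ}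

lemma centerMass_eq_sum_inv_mul_smul {M : Type*} [AddCommGroup M] [Module ℝ M] (g : ι → M) :
    t.centerMass w g = ∑ i ∈ t, ((∑ j ∈ t, w j)⁻¹ * w i) • g i := by
  simp only [centerMass, smul_sum, smul_smul]

lemma sum_mul_eq_sum_mul_centerMass (g : ι → ℝ) (hw : ∑ i ∈ t, w i ≠ 0) :
    ∑ i ∈ t, w i * g i = (∑ i ∈ t, w i) * t.centerMass w g := by
  rw [centerMass, smul_eq_mul, ← mul_assoc, mul_inv_cancel₀ hw, one_mul]
  rfl

lemma sum_mul_map_eq_sum_mul_map_centerMass_of_forall_eq {q : E} (hw : ∑ i ∈ t, w i ≠ 0)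
    (hp : ∀ i ∈ t, w i ≠ 0 → p i = q) :
    ∑ i ∈ t, w i * F (p i) = (∑ i ∈ t, w i) * F (t.centerMass w p) := by
  have hcenter : t.centerMass w p = q :=
    (centerMass_congr_fun hp).trans (centerMass_const hw q)
  rw [hcenter, sum_mul]
  refine sum_congr rfl fun i hi => ?_
  by_cases hwi : w i = 0
  · simp [hwi]
  · rw [hp i hi hwi]

end Finset

open Finset

section Jensen

variable {ι E : Type*} [AddCommGroup E] [Module ℝ E] {s : Set E} {t : Finset ι}
  {w : ι → ℝ} {p : ι → E} {F : E → ℝ}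

lemma ConcaveOn.sum_mul_le_sum_mul_map_centerMass (hF : ConcaveOn ℝ s F)
    (h₀ : ∀ i ∈ t, 0 ≤ w i) (h₁ : 0 < ∑ i ∈ t, w i) (hp : ∀ i ∈ t, p i ∈ s) :
    ∑ i ∈ t, w i * F (p i) ≤ (∑ i ∈ t, w i) * F (t.centerMass w p) := by
  calc ∑ i ∈ t, w i * F (p i) = (∑ i ∈ t, w i) * t.centerMass w (F ∘ p) :=
        sum_mul_eq_sum_mul_centerMass (F ∘ p) h₁.ne'
    _ ≤ (∑ i ∈ t, w i) * F (t.centerMass w p) :=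
        mul_le_mul_of_nonneg_left (hF.le_map_centerMass h₀ h₁ hp) h₁.le

lemma StrictConcaveOn.eq_of_sum_mul_map_centerMass_eq (hF : StrictConcaveOn ℝ s F)
    (h₀ : ∀ i ∈ t, 0 ≤ w i) (h₁ : 0 < ∑ i ∈ t, w i) (hp : ∀ i ∈ t, p i ∈ s)
    (heq : (∑ i ∈ t, w i) * F (t.centerMass w p) = ∑ i ∈ t, w i * F (p i)) :
    ∀ ⦃j⦄, j ∈ t → w j ≠ 0 → ∀ ⦃k⦄, k ∈ t → w k ≠ 0 → p j = p k := by
  set W := ∑ i ∈ t, w i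
  have hWinv : W⁻¹ ≠ 0 := inv_ne_zero h₁.ne'
  have hv : ∑ i ∈ t, W⁻¹ * w i = 1 := by rw [← mul_sum, inv_mul_cancel₀ h₁.ne']
  have hequal := (hF.map_sum_eq_iff_of_nonneg
    (fun i hi => mul_nonneg (inv_nonneg.2 h₁.le) (h₀ i hi)) hv hp).1 <| by
    rw [← centerMass_eq_sum_inv_mul_smul, ← centerMass_eq_sum_inv_mul_smul (fun i => F (p i)),
      ← mul_right_inj' h₁.ne', heq, sum_mul_eq_sum_mul_centerMass (fun i => F (p i)) h₁.ne']
  intro j hj hwj k hk hwk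
  exact hequal hj (mul_ne_zero hWinv hwj) hk (mul_ne_zero hWinv hwk)

end Jensen

section Columns

variable {x : I → J → EuclideanSpace ℝ (Fin m)} {w : I → J → ℝ}
  {F : EuclideanSpace ℝ (Fin m) → ℝ} {s : Set (EuclideanSpace ℝ (Fin m))}

omit [Fintype J] in
lemma colMarg_pos_of_pos (hw : ∀ i j, 0 ≤ w i j) {i : I} {j : J} (h : 0 < w i j) :
    0 < colMarg w j :=
  h.trans_le (single_le_sum (fun i _ => hw i j) (mem_univ i))

lemma EW_eq_sum_colMarg_pos (hw : ∀ i j, 0 ≤ w i j) :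
    EW x w F = ∑ j ∈ univ.filter (fun j => 0 < colMarg w j), ∑ i, w i j * F (x i j) := by
  rw [EW, sum_comm]
  refine (sum_subset (filter_subset _ _) fun j _ hj => sum_eq_zero fun i _ => ?_).symm
  have hwij : w i j = 0 :=
    le_antisymm (not_lt.1 fun h => hj (mem_filter.2 ⟨mem_univ j, colMarg_pos_of_pos hw h⟩))
      (hw i j)
  rw [hwij, zero_mul]

lemma EW_le_CW (hw : ∀ i j, 0 ≤ w i j) (hF : ConcaveOn ℝ s F) (hxs : ∀ i j, x i j ∈ s) :
    EW x w F ≤ CW x w F := by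
  rw [EW_eq_sum_colMarg_pos hw, CW]
  refine sum_le_sum fun j hj => ?_
  exact hF.sum_mul_le_sum_mul_map_centerMass (fun i _ => hw i j) (mem_filter.1 hj).2
    fun i _ => hxs i j

lemma CW_eq_EW_of_WColConst (hw : ∀ i j, 0 ≤ w i j) (hx : WColConst x w) :
    CW x w F = EW x w F := by
  rw [EW_eq_sum_colMarg_pos hw, CW]
  refine sum_congr rfl fun j hj => ?_
  have hj : 0 < colMarg w j := (mem_filter.1 hj).2
  obtain ⟨i₀, -, hi₀⟩ := exists_ne_zero_of_sum_ne_zero hj.ne'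
  have hpos {i : I} (hwi : w i j ≠ 0) : 0 < w i j := (hw i j).lt_of_ne' hwi
  exact (sum_mul_map_eq_sum_mul_map_centerMass_of_forall_eq hj.ne'
    fun i _ hwi => hx i i₀ j (hpos hwi) (hpos hi₀)).symm

lemma WColConst_of_CW_eq_EW (hw : ∀ i j, 0 ≤ w i j) (hF : StrictConcaveOn ℝ s F)
    (hxs : ∀ i j, x i j ∈ s) (h : CW x w F = EW x w F) : WColConst x w := by
  rw [EW_eq_sum_colMarg_pos hw, CW, eq_comm] at h
  have hcol := (sum_eq_sum_iff_of_le fun j hj => hF.concaveOn.sum_mul_le_sum_mul_map_centerMass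
    (fun i _ => hw i j) (mem_filter.1 hj).2 fun i _ => hxs i j).1 h
  intro i i' j hi hi'
  have hj : 0 < colMarg w j := colMarg_pos_of_pos hw hi
  exact hF.eq_of_sum_mul_map_centerMass_eq (fun i _ => hw i j) hj (fun i _ => hxs i j)
    (hcol j (mem_filter.2 ⟨mem_univ j, hj⟩)).symm (mem_univ i) hi.ne' (mem_univ i') hi'.ne'

lemma CW_eq_EW_iff_WColConst (hw : ∀ i j, 0 ≤ w i j) (hF : StrictConcaveOn ℝ s F)
    (hxs : ∀ i j, x i j ∈ s) : CW x w F = EW x w F ↔ WColConst x w :=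
  ⟨WColConst_of_CW_eq_EW hw hF hxs, CW_eq_EW_of_WColConst hw⟩

end Columns

section Rows

open Function

variable {x : I → J → EuclideanSpace ℝ (Fin m)} {w : I → J → ℝ}
  {F : EuclideanSpace ℝ (Fin m) → ℝ} {s : Set (EuclideanSpace ℝ (Fin m))}

lemma RW_eq_CW_swap : RW x w F = CW (swap x) (swap w) F :=
  rfl

lemma EW_swap : EW (swap x) (swap w) F = EW x w F :=
  sum_comm

omit [Fintype I] [Fintype J] in
lemma WColConst_swap_iff : WColConst (swap x) (swap w) ↔ WRowConst x w :=
  ⟨fun h i j j' => h j j' i, fun h j j' i => h i j j'⟩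

lemma EW_le_RW (hw : ∀ i j, 0 ≤ w i j) (hF : ConcaveOn ℝ s F) (hxs : ∀ i j, x i j ∈ s) :
    EW x w F ≤ RW x w F := by
  rw [RW_eq_CW_swap, ← EW_swap]
  exact EW_le_CW (fun j i => hw i j) hF fun j i => hxs i j

lemma RW_eq_EW_of_WRowConst (hw : ∀ i j, 0 ≤ w i j) (hx : WRowConst x w) :
    RW x w F = EW x w F := by
  rw [RW_eq_CW_swap, ← EW_swap]
  exact CW_eq_EW_of_WColConst (fun j i => hw i j) (WColConst_swap_iff.2 hx)

lemma RW_eq_EW_iff_WRowConst (hw : ∀ i j, 0 ≤ w i j) (hF : StrictConcaveOn ℝ s F)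
    (hxs : ∀ i j, x i j ∈ s) : RW x w F = EW x w F ↔ WRowConst x w := by
  rw [RW_eq_CW_swap, ← EW_swap, ← WColConst_swap_iff]
  exact CW_eq_EW_iff_WColConst (fun j i => hw i j) hF fun j i => hxs i j

end Rows

theorem stmt_17_general
    (x : I → J → EuclideanSpace ℝ (Fin m))
    (w : I → J → ℝ) (hw : IsWeight w)
    (F : EuclideanSpace ℝ (Fin m) → ℝ)
    (hF : ConcaveOn ℝ (convexHull ℝ (entries x)) F) :
    (EW x w F ≤ CW x w F ∧ EW x w F ≤ RW x w F) ∧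
    ((WColConst x w → CW x w F = EW x w F) ∧
     (WRowConst x w → RW x w F = EW x w F)) ∧
    (∀ G : EuclideanSpace ℝ (Fin m) → ℝ,
      StrictConcaveOn ℝ (convexHull ℝ (entries x)) G →
      ((CW x w G = EW x w G ↔ WColConst x w) ∧
       (RW x w G = EW x w G ↔ WRowConst x w))) := by
  have hw₀ : ∀ i j, 0 ≤ w i j := hw.1
  have hxs : ∀ i j, x i j ∈ convexHull ℝ (entries x) :=
    fun i j => subset_convexHull ℝ _ ⟨i, j, rfl⟩
  exact ⟨⟨EW_le_CW hw₀ hF hxs, EW_le_RW hw₀ hF hxs⟩,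
    ⟨CW_eq_EW_of_WColConst hw₀, RW_eq_EW_of_WRowConst hw₀⟩,
    fun G hG => ⟨CW_eq_EW_iff_WColConst hw₀ hG hxs, RW_eq_EW_iff_WRowConst hw₀ hG hxs⟩⟩

/-- (a) `C_W(F) ≥ E_W(F)` and `R_W(F) ≥ E_W(F)` for concave `F`;
(b) if `x` is `W`-column-constant then `C_W(F) = E_W(F)`, and if `x` is
`W`-row-constant then `R_W(F) = E_W(F)`;
(c) for strictly concave `G`, `C_W(G) = E_W(G)` iff `x` is `W`-column-constant,
and `R_W(G) = E_W(G)` iff `x` is `W`-row-constant. -/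
theorem stmt_17 [Nonempty I] [Nonempty J] (hm : 1 ≤ m)
    (x : I → J → EuclideanSpace ℝ (Fin m))
    (w : I → J → ℝ) (hw : IsWeight w)
    (F : EuclideanSpace ℝ (Fin m) → ℝ)
    (hF : ConcaveOn ℝ (convexHull ℝ (entries x)) F) :
    (EW x w F ≤ CW x w F ∧ EW x w F ≤ RW x w F) ∧
    ((WColConst x w → CW x w F = EW x w F) ∧
     (WRowConst x w → RW x w F = EW x w F)) ∧
    (∀ G : EuclideanSpace ℝ (Fin m) → ℝ,
      StrictConcaveOn ℝ (convexHull ℝ (entries x)) G →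
      ((CW x w G = EW x w G ↔ WColConst x w) ∧
       (RW x w G = EW x w G ↔ WRowConst x w))) :=
  stmt_17_general x w hw F hF
end
end
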